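/- arXiv:1707.00481 — 7 statements merged into one kernel-verified Lean document; each statement's English description precedes it below -/
import Mathlib

section
/- Let N be a norm on ℝ^m and let x_1, …, x_n ∈ ℝ^m be vectors with N(x_i) ≤ 1 for every i and x_1 + ⋯ + x_n = 0. Then there exists a permutation π of {1, …, n} such that for every k ∈ {1, …, n} the partial sum satisfies N(x_{π(1)} + ⋯ + x_{π(k)}) ≤ m. -/
/-!
Call `A ⊆ {1, …, n}` good if there are weights `μ i ∈ [0, 1]`, supported on `A`, with
`∑ μ i = #A - m` and `∑ μ i • x i = 0`. Then `∑_{i ∈ A} x i = ∑_{i ∈ A} (1 - μ i) • x i` has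
norm at most `∑ (1 - μ i) = m`. The whole index set is good (constant weights). If `A` is good
and `#A > m`, scale the weights down to total `#A - 1 - m` and pass to a vertex of the polytope
of such weights: the constraints live in `ℝ × ℝ^m`, so at most `m + 1` weights are fractional,
and counting shows that some weight vanishes; dropping that index leaves a good set of size
`#A - 1`. Sets with `#A ≤ m` are handled by the triangle inequality alone, so removing indices
one at a time from the full set, and listing them in reverse order, gives the permutation.
-/

open Finset Module

section BoxFiber

variable {ι V : Type*} [Fintype ι] [AddCommGroup V] [Module ℝ V]

def boxFiber (a b : ι → ℝ) (v : ι → V) (w : V) : Set (ι → ℝ) :=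
  {μ ∈ Set.Icc a b | ∑ i, μ i • v i = w}

lemma isCompact_boxFiber [TopologicalSpace V] [ContinuousAdd V] [ContinuousSMul ℝ V] [T2Space V]
    (a b : ι → ℝ) (v : ι → V) (w : V) : IsCompact (boxFiber a b v w) :=
  isCompact_Icc.inter_right <| isClosed_eq
    (continuous_finsetSum _ fun i _ => (continuous_apply i).smul continuous_const)
    continuous_const

open Filter Topology in
/-- Perturbing `μ` along a relation among the `v i` with `a i < μ i < b i` stays inside the box
in both directions, so at an extreme point there is no such relation. -/
lemma linearIndepOn_of_mem_extremePoints_boxFiber {a b μ : ι → ℝ} {v : ι → V} {w : V}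
    (hμ : μ ∈ (boxFiber a b v w).extremePoints ℝ) :
    LinearIndepOn ℝ v {i | μ i ∈ Set.Ioo (a i) (b i)} := by
  rw [linearIndepOn_iff]
  intro c hc hcv
  rw [Finsupp.linearCombination_apply, Finsupp.sum_fintype _ _ (by simp)] at hcv
  have hsupp : ∀ i, μ i ∉ Set.Ioo (a i) (b i) → c i = 0 := fun i hi =>
    Finsupp.notMem_support_iff.1 fun h => hi (hc h)
  have hnear : ∀ᶠ t in 𝓝 (0 : ℝ), μ + t • ⇑c ∈ boxFiber a b v w := by
    have hbox : ∀ i, ∀ᶠ t in 𝓝 (0 : ℝ), μ i + t * c i ∈ Set.Icc (a i) (b i) := by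
      intro i
      by_cases hi : μ i ∈ Set.Ioo (a i) (b i)
      · have hcont : Continuous fun t : ℝ => μ i + t * c i := by fun_prop
        exact (hcont.tendsto' 0 (μ i) (by simp) |>.eventually (isOpen_Ioo.mem_nhds hi)).mono
          fun _ h => Set.Ioo_subset_Icc_self h
      · refine .of_forall fun t => ?_
        rw [hsupp i hi, mul_zero, add_zero]
        exact ⟨hμ.1.1.1 i, hμ.1.1.2 i⟩
    filter_upwards [eventually_all.2 hbox] with t ht
    refine ⟨⟨fun i => (ht i).1, fun i => (ht i).2⟩, ?_⟩
    simp only [Pi.add_apply, Pi.smul_apply, smul_eq_mul, add_smul, mul_smul, sum_add_distrib,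
      ← smul_sum, hcv, smul_zero, add_zero]
    exact hμ.1.2
  obtain ⟨ε, hε, hball⟩ := Metric.eventually_nhds_iff.1 hnear
  have hpos := hball (y := ε / 2) (by simpa [abs_of_pos hε] using half_lt_self hε)
  have hneg := hball (y := -(ε / 2)) (by simpa [abs_of_pos hε] using half_lt_self hε)
  have hseg : μ ∈ openSegment ℝ (μ - (ε / 2) • ⇑c) (μ + (ε / 2) • ⇑c) :=
    mem_openSegment_sub_add μ _
  have := (mem_extremePoints.1 hμ).2 _ (by simpa [sub_eq_add_neg] using hneg) _ hpos hseg
  ext i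
  simpa [hε.ne'] using congrFun this.2 i

lemma exists_mem_boxFiber_card_le_finrank [TopologicalSpace V] [IsTopologicalAddGroup V]
    [ContinuousSMul ℝ V] [T2Space V] [FiniteDimensional ℝ V] {a b : ι → ℝ} {v : ι → V} {w : V}
    (h : (boxFiber a b v w).Nonempty) :
    ∃ μ ∈ boxFiber a b v w, #{i | μ i ∈ Set.Ioo (a i) (b i)} ≤ finrank ℝ V := by
  classical
  obtain ⟨μ, hμ⟩ := (isCompact_boxFiber a b v w).extremePoints_nonempty h
  refine ⟨μ, hμ.1, ?_⟩
  simpa [Fintype.card_subtype] using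
    (linearIndepOn_of_mem_extremePoints_boxFiber hμ).fintype_card_le_finrank

end BoxFiber

lemma exists_eq_zero_of_sum_eq_card_sub {ι : Type*} {A : Finset ι} {μ : ι → ℝ} {r : ℕ}
    (hr : 0 < r) (hμ : ∀ i ∈ A, μ i ∈ Set.Icc 0 1) (hfrac : #{i ∈ A | μ i ∈ Set.Ioo 0 1} ≤ r)
    (hsum : ∑ i ∈ A, μ i = #A - r) : ∃ i ∈ A, μ i = 0 := by
  by_contra! hne
  set F := {i ∈ A | μ i ∈ Set.Ioo 0 1}
  have hdefect : ∑ i ∈ A, (1 - μ i) = r := by simp [sum_sub_distrib, hsum]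
  have hF : ∑ i ∈ F, (1 - μ i) = ∑ i ∈ A, (1 - μ i) := sum_filter_of_ne fun i hi h1 =>
    ⟨(hμ i hi).1.lt_of_ne' (hne i hi), (hμ i hi).2.lt_of_ne fun h => h1 (by rw [h, sub_self])⟩
  have hlt : ∑ i ∈ F, (1 - μ i) < r := by
    rcases F.eq_empty_or_nonempty with hF0 | hFne
    · simp [hF0, hr]
    · calc ∑ i ∈ F, (1 - μ i) < ∑ i ∈ F, 1 :=
            sum_lt_sum_of_nonempty hFne fun i hi => by linarith [(mem_filter.1 hi).2.1]
        _ = #F := by simp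
        _ ≤ r := by exact_mod_cast hfrac
  linarith

section SteinitzWeights

variable {ι E : Type*} [Fintype ι] [DecidableEq ι] [AddCommGroup E] [Module ℝ E]
  {x : ι → E} {m : ℕ} {A : Finset ι}

def steinitzFiber (x : ι → E) (A : Finset ι) (s : ℝ) : Set (ι → ℝ) :=
  boxFiber 0 ((A : Set ι).indicator 1) (fun i => ((1 : ℝ), x i)) (s, 0)

lemma mem_steinitzFiber_iff {μ : ι → ℝ} {s : ℝ} :
    μ ∈ steinitzFiber x A s ↔ (∀ i ∈ A, μ i ∈ Set.Icc 0 1) ∧ (∀ i ∉ A, μ i = 0) ∧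
      ∑ i ∈ A, μ i = s ∧ ∑ i ∈ A, μ i • x i = 0 := by
  have hbox : μ ∈ Set.Icc 0 ((A : Set ι).indicator 1) ↔
      (∀ i ∈ A, μ i ∈ Set.Icc 0 1) ∧ ∀ i ∉ A, μ i = 0 := by
    simp only [Set.mem_Icc, Pi.le_def, Pi.zero_apply, ← forall_and]
    refine forall_congr' fun i => ?_
    by_cases hi : i ∈ A <;> simp [hi, le_antisymm_iff, and_comm]
  rw [steinitzFiber, boxFiber, Set.mem_sep_iff, hbox, and_assoc]
  refine and_congr_right fun _ => and_congr_right fun hout => ?_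
  rw [← sum_subset (subset_univ A) fun i _ hi => by simp [hout i hi], Prod.ext_iff,
    Prod.fst_sum, Prod.snd_sum]
  simp

lemma smul_mem_steinitzFiber {μ : ι → ℝ} {s ρ : ℝ} (hμ : μ ∈ steinitzFiber x A s)
    (hρ : ρ ∈ Set.Icc 0 1) : ρ • μ ∈ steinitzFiber x A (ρ * s) := by
  obtain ⟨hbox, hout, hsum, hsumx⟩ := mem_steinitzFiber_iff.1 hμ
  refine mem_steinitzFiber_iff.2 ⟨fun i hi => ?_, fun i hi => by simp [hout i hi], ?_, ?_⟩
  · exact ⟨mul_nonneg hρ.1 (hbox i hi).1, mul_le_one₀ hρ.2 (hbox i hi).1 (hbox i hi).2⟩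
  · simp [← mul_sum, hsum]
  · simp [mul_smul, ← smul_sum, hsumx]

def HasSteinitzWeights (x : ι → E) (m : ℕ) (A : Finset ι) : Prop :=
  (steinitzFiber x A (#A - m)).Nonempty

lemma hasSteinitzWeights_univ (hx : ∑ i, x i = 0) (hm : m ≤ Fintype.card ι) :
    HasSteinitzWeights x m univ := by
  have hmn : (m : ℝ) ≤ Fintype.card ι := by exact_mod_cast hm
  refine ⟨fun _ => ((Fintype.card ι : ℝ) - m) / Fintype.card ι,
    mem_steinitzFiber_iff.2 ⟨fun i _ => ?_, by simp, ?_, ?_⟩⟩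
  · exact ⟨div_nonneg (by linarith) (by positivity),
      div_le_one_of_le₀ (by linarith) (by positivity)⟩
  · rw [sum_const, card_univ, nsmul_eq_mul]
    rcases (Fintype.card ι).eq_zero_or_pos with hn | hn
    · simp [hn, show m = 0 by omega]
    · exact mul_div_cancel₀ _ (by positivity)
  · simp [← smul_sum, hx]

lemma HasSteinitzWeights.seminorm_sum_le (p : Seminorm ℝ E) (hx : ∀ i, p (x i) ≤ 1)
    (h : HasSteinitzWeights x m A) : p (∑ i ∈ A, x i) ≤ m := by
  obtain ⟨μ, hμ⟩ := h
  obtain ⟨hbox, -, hsum, hsumx⟩ := mem_steinitzFiber_iff.1 hμ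
  have hcoef : ∀ i ∈ A, 0 ≤ 1 - μ i := fun i hi => sub_nonneg.2 (hbox i hi).2
  calc p (∑ i ∈ A, x i) = p (∑ i ∈ A, (1 - μ i) • x i) := by
        simp [sub_smul, sum_sub_distrib, hsumx]
    _ ≤ ∑ i ∈ A, p ((1 - μ i) • x i) :=
        le_sum_of_subadditive p (map_zero p).le (map_add_le_add p) _ _
    _ = ∑ i ∈ A, (1 - μ i) * p (x i) := sum_congr rfl fun i hi => by
        rw [map_smul_eq_mul, Real.norm_of_nonneg (hcoef i hi)]
    _ ≤ ∑ i ∈ A, (1 - μ i) := sum_le_sum fun i hi => mul_le_of_le_one_right (hcoef i hi) (hx i)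
    _ = m := by simp [sum_sub_distrib, hsum]

lemma HasSteinitzWeights.exists_erase [TopologicalSpace E] [IsTopologicalAddGroup E]
    [ContinuousSMul ℝ E] [T2Space E] [FiniteDimensional ℝ E] (hE : finrank ℝ E ≤ m)
    (h : HasSteinitzWeights x m A) (hmA : m < #A) :
    ∃ i ∈ A, HasSteinitzWeights x m (A.erase i) := by
  obtain ⟨μ, hμ⟩ := h
  have hmA' : (m : ℝ) + 1 ≤ #A := by exact_mod_cast hmA
  have hρ : ((#A : ℝ) - 1 - m) / (#A - m) ∈ Set.Icc 0 1 :=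
    ⟨div_nonneg (by linarith) (by linarith), div_le_one_of_le₀ (by linarith) (by linarith)⟩
  have hshrunk := smul_mem_steinitzFiber hμ hρ
  rw [div_mul_cancel₀ _ (by linarith)] at hshrunk
  obtain ⟨ν, hν, hfrac⟩ := exists_mem_boxFiber_card_le_finrank ⟨_, hshrunk⟩
  obtain ⟨hbox, hout, hsum, hsumx⟩ := mem_steinitzFiber_iff.1 hν
  have hfrac' : #{i ∈ A | ν i ∈ Set.Ioo 0 1} ≤ m + 1 :=
    calc #{i ∈ A | ν i ∈ Set.Ioo 0 1}
        = #{i | ν i ∈ Set.Ioo ((0 : ι → ℝ) i) ((A : Set ι).indicator 1 i)} := by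
          congr 1; ext i; by_cases hi : i ∈ A <;> simp [hi, hout]
      _ ≤ finrank ℝ (ℝ × E) := hfrac
      _ ≤ m + 1 := by rw [finrank_prod, finrank_self]; omega
  obtain ⟨i, hi, hνi⟩ :=
    exists_eq_zero_of_sum_eq_card_sub m.succ_pos hbox hfrac' (by rw [hsum]; push_cast; ring)
  refine ⟨i, hi, ν, mem_steinitzFiber_iff.2 ⟨fun j hj => hbox j (mem_of_mem_erase hj), ?_, ?_, ?_⟩⟩
  · intro j hj
    by_cases hji : j = i
    · rw [hji, hνi]
    · exact hout j fun hjA => hj (mem_erase.2 ⟨hji, hjA⟩)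
  · rw [sum_erase _ hνi, hsum, card_erase_of_mem hi, Nat.cast_pred (by omega)]
  · rw [sum_erase _ (by simp [hνi]), hsumx]

end SteinitzWeights

lemma exists_nodup_toFinset_forall_take {α : Type*} [DecidableEq α] (P : Finset α → Prop)
    (hP : ∀ A, P A → A.Nonempty → ∃ i ∈ A, P (A.erase i)) (A : Finset α) (hA : P A) :
    ∃ l : List α, l.Nodup ∧ l.toFinset = A ∧ ∀ k, P (l.take k).toFinset := by
  induction A using Finset.strongInduction with
  | H A ih =>
    rcases A.eq_empty_or_nonempty with rfl | hne
    · exact ⟨[], List.nodup_nil, rfl, fun k => by simpa using hA⟩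
    obtain ⟨i, hi, hPi⟩ := hP A hA hne
    obtain ⟨l, hnd, hl, hpre⟩ := ih _ (erase_ssubset hi) hPi
    have hil : i ∉ l := by simp [← List.mem_toFinset, hl]
    refine ⟨l ++ [i], hnd.append (List.nodup_singleton i) (by simpa using hil), ?_, fun k => ?_⟩
    · simp [List.toFinset_append, hl, insert_erase hi]
    · rcases le_or_gt k l.length with hk | hk
      · simpa [List.take_append_of_le_length hk] using hpre k
      · rw [List.take_of_length_le (by simpa using hk)]
        simpa [List.toFinset_append, hl, insert_erase hi] using hA

lemma exists_perm_forall_map_filter_lt {n : ℕ} (P : Finset (Fin n) → Prop)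
    (hP : ∀ A, P A → A.Nonempty → ∃ i ∈ A, P (A.erase i)) (huniv : P univ) :
    ∃ π : Equiv.Perm (Fin n),
      ∀ k, P ((univ.filter fun j : Fin n => (j : ℕ) < k).map π.toEmbedding) := by
  obtain ⟨l, hnd, hl, hpre⟩ := exists_nodup_toFinset_forall_take P hP univ huniv
  have hmem : ∀ i, i ∈ l := fun i => by simp [← List.mem_toFinset, hl]
  have hlen : l.length = n := by simpa [hl] using (List.toFinset_card_of_nodup hnd).symm
  refine ⟨(finCongr hlen.symm).trans (hnd.getEquivOfForallMemList l hmem), fun k => ?_⟩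
  convert hpre k using 1
  ext a
  simp only [Finset.mem_map, mem_filter, mem_univ, true_and, List.mem_toFinset,
    List.mem_take_iff_getElem]
  constructor
  · rintro ⟨j, hjk, rfl⟩
    exact ⟨j, lt_min hjk (hlen.symm ▸ j.2), rfl⟩
  · rintro ⟨j, hj, rfl⟩
    exact ⟨⟨j, hlen ▸ (lt_min_iff.1 hj).2⟩, (lt_min_iff.1 hj).1, rfl⟩

theorem steinitz_lemma_general
    (m n : ℕ)
    (N : (Fin m → ℝ) → ℝ)
    (hN_smul : ∀ (a : ℝ) (v : Fin m → ℝ), N (a • v) = |a| * N v)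
    (hN_add : ∀ v w : Fin m → ℝ, N (v + w) ≤ N v + N w)
    (x : Fin n → Fin m → ℝ)
    (hx_norm : ∀ i, N (x i) ≤ 1)
    (hx_sum : ∑ i, x i = 0) :
    ∃ π : Equiv.Perm (Fin n),
      ∀ k : ℕ, 1 ≤ k → k ≤ n →
        N (∑ j ∈ Finset.univ.filter (fun j : Fin n => (j : ℕ) < k), x (π j)) ≤ (m : ℝ) := by
  let p : Seminorm ℝ (Fin m → ℝ) := .of N hN_add hN_smul
  let Q : Finset (Fin n) → Prop := fun A => #A ≤ m ∨ HasSteinitzWeights x m A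
  have hQ_erase : ∀ A, Q A → A.Nonempty → ∃ i ∈ A, Q (A.erase i) := by
    rintro A hA ⟨i₀, hi₀⟩
    by_cases hmA : m < #A
    · obtain ⟨i, hi, h⟩ := (hA.resolve_left hmA.not_ge).exists_erase
        (finrank_fin_fun ℝ).le hmA
      exact ⟨i, hi, .inr h⟩
    · exact ⟨i₀, hi₀, .inl (by rw [card_erase_of_mem hi₀]; omega)⟩
  have hQ_univ : Q univ := by
    rcases le_total n m with h | h
    · exact .inl (by simpa using h)
    · exact .inr (hasSteinitzWeights_univ hx_sum (by simpa using h))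
  obtain ⟨π, hπ⟩ := exists_perm_forall_map_filter_lt Q hQ_erase hQ_univ
  refine ⟨π, fun k _ _ => ?_⟩
  rw [← Equiv.coe_toEmbedding, ← sum_map _ π.toEmbedding]
  rcases hπ k with h | h
  · refine (le_sum_of_subadditive p (map_zero p).le (map_add_le_add p) _ _).trans ?_
    exact (sum_le_card_nsmul _ _ 1 fun i _ => hx_norm i).trans (by simpa using h)
  · exact h.seminorm_sum_le p hx_norm

/-- **Steinitz lemma** (Grinberg–Sevast'yanov constant `c(m) = m`):
if `x 1, …, x n ∈ ℝ^m` have norm at most `1` (in an arbitrary norm `N`) and sum to zero,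
then they can be permuted so that every partial sum has norm at most `m`. -/
theorem steinitz_lemma
    (m n : ℕ) (hm : 0 < m) (hn : 0 < n)
    (N : (Fin m → ℝ) → ℝ)
    (hN_smul : ∀ (a : ℝ) (v : Fin m → ℝ), N (a • v) = |a| * N v)
    (hN_add : ∀ v w : Fin m → ℝ, N (v + w) ≤ N v + N w)
    (hN_zero : ∀ v : Fin m → ℝ, N v = 0 ↔ v = 0)
    (x : Fin n → Fin m → ℝ)
    (hx_norm : ∀ i, N (x i) ≤ 1)
    (hx_sum : ∑ i, x i = 0) :
    ∃ π : Equiv.Perm (Fin n),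
      ∀ k : ℕ, 1 ≤ k → k ≤ n →
        N (∑ j ∈ Finset.univ.filter (fun j : Fin n => (j : ℕ) < k), x (π j)) ≤ (m : ℝ) :=
  steinitz_lemma_general m n N hN_smul hN_add x hx_norm hx_sum
end

section
/- Let x_1, …, x_n ∈ ℝ^m with n ≥ m and x_1 + ⋯ + x_n = 0. Then there exists a chain of subsets A_m ⊆ A_{m+1} ⊆ ⋯ ⊆ A_n = {1, …, n} with |A_k| = k for each k ∈ {m, …, n}, such that for every k ∈ {m, …, n} there exist real numbers λ_i ∈ [0,1] for i ∈ A_k with ∑_{i ∈ A_k} λ_i x_i = 0 and ∑_{i ∈ A_k} λ_i = k − m. -/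
/-!
Descend from `A_n = univ`, on which the weights `1` balance `x` with total `n`. Weights in
`[0, 1]` balancing `x` on `A` with total `c` can be scaled to any total in `[0, c]`, so from
`#A = k + 1` and total `k + 1 - m` we get total `k - m`. An extreme point `μ` of the compact
polytope of such weights has at most `m + 1` fractional coordinates: otherwise an affine
dependence among the corresponding `x i` moves `μ` in both directions. As
`k - m = #A - (m + 1)`, some `μ i` vanishes, and `A.erase i` carries the same weights.
-/

open Finset Module Topology

section AffineRelation

variable {K E ι : Type*} [Field K] [AddCommGroup E] [Module K E] [FiniteDimensional K E]

lemma exists_affine_relation_supported_on (x : ι → E) {F A : Finset ι} (hFA : F ⊆ A)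
    (hF : finrank K E + 1 < #F) :
    ∃ d : ι → K, d ≠ 0 ∧ (∀ i ∉ F, d i = 0) ∧ ∑ i ∈ A, d i • x i = 0 ∧ ∑ i ∈ A, d i = 0 := by
  classical
  have hdep : ¬ LinearIndepOn K (fun i => (x i, (1 : K))) (F : Set ι) := fun h => by
    have := h.fintype_card_le_finrank
    simp only [coe_sort_coe, Fintype.card_coe, finrank_prod, finrank_self] at this
    omega
  obtain ⟨f, hf, i, hiF, hfi⟩ := not_linearIndepOn_finset_iff.mp hdep
  have hsum (g : ι → E × K) : ∑ j ∈ A, (if j ∈ F then f j else 0) • g j = ∑ j ∈ F, f j • g j := by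
    simp only [ite_smul, zero_smul, sum_ite_mem, inter_eq_right.mpr hFA]
  refine ⟨fun j => if j ∈ F then f j else 0, fun h => hfi (by simpa [hiF] using congrFun h i),
    fun j hj => if_neg hj, ?_, ?_⟩
  · simpa [Prod.fst_sum] using congrArg Prod.fst ((hsum fun j => (x j, 1)).trans hf)
  · simpa [Prod.snd_sum] using congrArg Prod.snd ((hsum fun j => (x j, 1)).trans hf)

end AffineRelation

lemma exists_pos_add_smul_mem_Icc {ι : Type*} [Finite ι] {μ : ι → ℝ} (d : ι → ℝ)
    (hμ : μ ∈ Set.Icc 0 1) (hd : ∀ i, d i ≠ 0 → μ i ∈ Set.Ioo 0 1) :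
    ∃ ε : ℝ, 0 < ε ∧ μ + ε • d ∈ Set.Icc 0 1 ∧ μ + (-ε) • d ∈ Set.Icc 0 1 := by
  have hnear : ∀ᶠ t in 𝓝 (0 : ℝ), μ + t • d ∈ Set.Icc 0 1 := by
    simp only [Set.mem_Icc, Pi.le_def, ← forall_and, Filter.eventually_all]
    intro i
    by_cases hdi : d i = 0
    · simpa [hdi] using ⟨hμ.1 i, hμ.2 i⟩
    · have hcont : Continuous fun t : ℝ => μ i + t * d i := by fun_prop
      have hIoo := hcont.continuousAt (x := 0) |>.eventually_mem
        (isOpen_Ioo.mem_nhds (by simpa using hd i hdi))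
      filter_upwards [hIoo] with t ht using Set.Ioo_subset_Icc_self ht
  obtain ⟨δ, hδ, hball⟩ := Metric.eventually_nhds_iff.mp hnear
  refine ⟨δ / 2, half_pos hδ, hball ?_, hball ?_⟩ <;>
    simp [abs_of_pos hδ] <;> linarith

variable {ι E : Type*} [NormedAddCommGroup E] [NormedSpace ℝ E]

/-- The box constraint is imposed on every coordinate, not only on `A`, so that the set is
compact. -/
def balancingWeights (x : ι → E) (A : Finset ι) (c : ℝ) : Set (ι → ℝ) :=
  Set.Icc 0 1 ∩ {μ | ∑ i ∈ A, μ i • x i = 0 ∧ ∑ i ∈ A, μ i = c}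

variable {x : ι → E} {A : Finset ι} {c : ℝ}

lemma isCompact_balancingWeights : IsCompact (balancingWeights x A c) :=
  isCompact_Icc.inter_right <|
    (isClosed_eq (by fun_prop) continuous_const).inter (isClosed_eq (by fun_prop) continuous_const)

lemma add_smul_mem_balancingWeights {μ d : ι → ℝ} {t : ℝ} (hμ : μ ∈ balancingWeights x A c)
    (hbox : μ + t • d ∈ Set.Icc 0 1) (hdx : ∑ i ∈ A, d i • x i = 0) (hd : ∑ i ∈ A, d i = 0) :
    μ + t • d ∈ balancingWeights x A c := by
  obtain ⟨-, hμx, hμc⟩ := hμ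
  refine ⟨hbox, ?_, ?_⟩
  · simp [add_smul, sum_add_distrib, hμx, mul_smul, ← smul_sum, hdx]
  · simp [sum_add_distrib, hμc, ← mul_sum, hd]

lemma card_fractional_le_of_mem_extremePoints [Finite ι] [FiniteDimensional ℝ E] {μ : ι → ℝ}
    (hμ : μ ∈ (balancingWeights x A c).extremePoints ℝ) :
    #{i ∈ A | μ i ∈ Set.Ioo 0 1} ≤ finrank ℝ E + 1 := by
  by_contra! hcard
  obtain ⟨d, hd0, hdF, hdx, hd⟩ := exists_affine_relation_supported_on x (filter_subset _ _) hcard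
  obtain ⟨ε, hε, hplus, hminus⟩ := exists_pos_add_smul_mem_Icc d hμ.1.1
    fun i hi => (mem_filter.mp (not_imp_comm.mp (hdF i) hi)).2
  have hmid : μ ∈ openSegment ℝ (μ + ε • d) (μ + (-ε) • d) :=
    ⟨1 / 2, 1 / 2, by norm_num, by norm_num, by norm_num, by module⟩
  have hfix := hμ.2 (add_smul_mem_balancingWeights hμ.1 hplus hdx hd)
    (add_smul_mem_balancingWeights hμ.1 hminus hdx hd) hmid
  exact hd0 ((smul_eq_zero.mp (add_eq_left.mp hfix)).resolve_left hε.ne')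

lemma balancingWeights_nonempty_of_le {c' : ℝ} (h : (balancingWeights x A c).Nonempty)
    (hc' : 0 ≤ c') (hle : c' ≤ c) : (balancingWeights x A c').Nonempty := by
  obtain ⟨μ, ⟨hμ0, hμ1⟩, hμx, hμc⟩ := h
  have ht0 : 0 ≤ c' / c := div_nonneg hc' (hc'.trans hle)
  have ht1 : c' / c ≤ 1 := div_le_one_of_le₀ hle (hc'.trans hle)
  refine ⟨(c' / c) • μ, ⟨smul_nonneg ht0 hμ0, ?_⟩, ?_, ?_⟩
  · intro i
    simpa using mul_le_one₀ ht1 (hμ0 i) (hμ1 i)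
  · simp [mul_smul, ← smul_sum, hμx]
  · simp only [Pi.smul_apply, smul_eq_mul, ← mul_sum, hμc]
    exact div_mul_cancel_of_imp fun hc => by linarith

lemma exists_eq_zero_of_card_fractional_le {μ : ι → ℝ} {r : ℕ} (hr : 0 < r)
    (hμ : ∀ i ∈ A, μ i ∈ Set.Icc 0 1) (hfrac : #{i ∈ A | μ i ∈ Set.Ioo 0 1} ≤ r)
    (hsum : ∑ i ∈ A, μ i ≤ #A - r) : ∃ i ∈ A, μ i = 0 := by
  by_contra! hne
  set F := {i ∈ A | μ i ∈ Set.Ioo 0 1}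
  have hdefect : ∑ i ∈ A, (1 - μ i) = ∑ i ∈ F, (1 - μ i) := by
    refine (sum_filter_of_ne fun i hi h1 => ⟨(hμ i hi).1.lt_of_ne' (hne i hi), ?_⟩).symm
    exact (hμ i hi).2.lt_of_ne fun h => h1 (by rw [h, sub_self])
  have hlt : ∑ i ∈ F, (1 - μ i) < r := by
    rcases F.eq_empty_or_nonempty with hF | hF
    · simp [hF, hr]
    · calc ∑ i ∈ F, (1 - μ i) < ∑ i ∈ F, 1 :=
            sum_lt_sum_of_nonempty hF fun i hi => by linarith [(mem_filter.mp hi).2.1]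
        _ ≤ r := by simpa using hfrac
  rw [← hdefect, sum_sub_distrib, sum_const, nsmul_eq_mul, mul_one] at hlt
  linarith

lemma exists_erase_balancingWeights_nonempty [Finite ι] [DecidableEq ι] [FiniteDimensional ℝ E]
    (h : (balancingWeights x A c).Nonempty) (hc : c ≤ #A - (finrank ℝ E + 1)) :
    ∃ i ∈ A, (balancingWeights x (A.erase i) c).Nonempty := by
  obtain ⟨μ, hμ⟩ := isCompact_balancingWeights.extremePoints_nonempty h
  obtain ⟨⟨hμ0, hμ1⟩, hμx, hμc⟩ := hμ.1
  obtain ⟨i, hiA, hi⟩ := exists_eq_zero_of_card_fractional_le (Nat.succ_pos _)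
    (fun i _ => ⟨hμ0 i, hμ1 i⟩) (card_fractional_le_of_mem_extremePoints hμ)
    (by push_cast; linarith)
  refine ⟨i, hiA, μ, ⟨hμ0, hμ1⟩, ?_, ?_⟩
  · rwa [sum_erase A (by rw [hi, zero_smul] : μ i • x i = 0)]
  · rwa [sum_erase _ hi]

lemma exists_nested_chain {α : Type*} (P : ℕ → Finset α → Prop) {m n : ℕ} (hmn : m ≤ n)
    {A : Finset α} (hA : P n A) (hstep : ∀ k, m ≤ k → ∀ B, P (k + 1) B → ∃ C ⊆ B, P k C) :
    ∃ S : ℕ → Finset α, S n = A ∧ (∀ k, m ≤ k → k < n → S k ⊆ S (k + 1)) ∧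
      ∀ k, m ≤ k → k ≤ n → P k (S k) := by
  induction n, hmn using Nat.le_induction generalizing A with
  | base => exact ⟨fun _ => A, rfl, by omega, fun k hk hkm => by rwa [le_antisymm hkm hk]⟩
  | succ n hmn ih =>
    obtain ⟨C, hCA, hC⟩ := hstep n hmn A hA
    obtain ⟨S, hSn, hSsub, hSP⟩ := ih hC
    refine ⟨Function.update S (n + 1) A, by simp, fun k hk hkn => ?_, fun k hk hkn => ?_⟩
    · rcases (Nat.lt_succ_iff.mp hkn).eq_or_lt with rfl | hkn
      · simpa [hSn] using hCA
      · rw [Function.update_of_ne (by omega), Function.update_of_ne (by omega)]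
        exact hSsub k hk hkn
    · rcases hkn.eq_or_lt with rfl | hkn
      · simpa using hA
      · rw [Function.update_of_ne hkn.ne]
        exact hSP k hk (Nat.lt_succ_iff.mp hkn)

theorem steinitz_chain_general
    (m n : ℕ) (hmn : m ≤ n)
    (x : Fin n → Fin m → ℝ)
    (hx_sum : ∑ i, x i = 0) :
    ∃ S : ℕ → Finset (Fin n),
      S n = Finset.univ ∧
      (∀ k, m ≤ k → k < n → S k ⊆ S (k + 1)) ∧
      (∀ k, m ≤ k → k ≤ n → (S k).card = k) ∧
      (∀ k, m ≤ k → k ≤ n →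
        ∃ lam : Fin n → ℝ,
          (∀ i ∈ S k, 0 ≤ lam i ∧ lam i ≤ 1) ∧
          (∑ i ∈ S k, lam i • x i) = 0 ∧
          (∑ i ∈ S k, lam i) = (k : ℝ) - (m : ℝ)) := by
  have hm : (m : ℝ) ≤ n := by exact_mod_cast hmn
  have hones : (1 : Fin n → ℝ) ∈ balancingWeights x univ n :=
    ⟨⟨zero_le_one, le_rfl⟩, by simpa using hx_sum, by simp⟩
  have huniv : (balancingWeights x univ ((n : ℝ) - m)).Nonempty :=
    balancingWeights_nonempty_of_le ⟨1, hones⟩ (sub_nonneg.mpr hm) (sub_le_self _ m.cast_nonneg)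
  obtain ⟨S, hSn, hSsub, hSP⟩ := exists_nested_chain
    (fun k B => #B = k ∧ (balancingWeights x B ((k : ℝ) - m)).Nonempty) hmn
    ⟨by simp, huniv⟩ fun k hk B ⟨hBcard, hB⟩ => by
      have hkm : (m : ℝ) ≤ k := by exact_mod_cast hk
      obtain ⟨i, hiB, hi⟩ := exists_erase_balancingWeights_nonempty
        (balancingWeights_nonempty_of_le hB (sub_nonneg.mpr hkm) (by push_cast; linarith))
        (by simp [hBcard])
      exact ⟨B.erase i, erase_subset i B, by simp [hBcard, hiB], hi⟩
  refine ⟨S, hSn, hSsub, fun k hk hkn => (hSP k hk hkn).1, fun k hk hkn => ?_⟩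
  obtain ⟨μ, ⟨hμ0, hμ1⟩, hμx, hμc⟩ := (hSP k hk hkn).2
  exact ⟨μ, fun i _ => ⟨hμ0 i, hμ1 i⟩, hμx, hμc⟩

/-- The chain of index sets `A_m ⊆ A_{m+1} ⊆ ⋯ ⊆ A_n = {1,…,n}` from the LP-based proof of the
Steinitz lemma: `|A_k| = k`, and for each `k` there are coefficients `λ_i ∈ [0,1]`, `i ∈ A_k`,
with `∑_{i ∈ A_k} λ_i x_i = 0` and `∑_{i ∈ A_k} λ_i = k − m`. -/
theorem steinitz_chain
    (m n : ℕ) (hm : 0 < m) (hmn : m ≤ n)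
    (x : Fin n → Fin m → ℝ)
    (hx_sum : ∑ i, x i = 0) :
    ∃ S : ℕ → Finset (Fin n),
      S n = Finset.univ ∧
      (∀ k, m ≤ k → k < n → S k ⊆ S (k + 1)) ∧
      (∀ k, m ≤ k → k ≤ n → (S k).card = k) ∧
      (∀ k, m ≤ k → k ≤ n →
        ∃ lam : Fin n → ℝ,
          (∀ i ∈ S k, 0 ≤ lam i ∧ lam i ≤ 1) ∧
          (∑ i ∈ S k, lam i • x i) = 0 ∧
          (∑ i ∈ S k, lam i) = (k : ℝ) - (m : ℝ)) :=
  steinitz_chain_general m n hmn x hx_sum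
end

section
/- Let A ∈ ℤ^{m×n} have all entries bounded in absolute value by Δ, let b ∈ ℤ^m, and let z ∈ ℤ^n_{≥0} satisfy Az = b with t := z_1 + ⋯ + z_n ≥ 1. Then there exists a sequence v_1, …, v_t of vectors in ℤ^m, in which the i-th column of A appears exactly z_i times for each i ∈ {1, …, n}, such that for every j ∈ {1, …, t} one has ‖v_1 + ⋯ + v_j − (j/t)·b‖_∞ ≤ 2mΔ. -/
open Finset

variable {ι : Type*} [Fintype ι] [DecidableEq ι] {m : ℕ}

lemma steinitz_exists_zero_coord (u : ι → Fin m → ℝ) (S : Finset ι) :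
    ∀ N : ℕ, ∀ μ0 : ι → ℝ,
      (S.filter fun i => μ0 i ≠ 0 ∧ μ0 i ≠ 1).card ≤ N →
      (∀ i ∈ S, 0 ≤ μ0 i ∧ μ0 i ≤ 1) →
      (∑ i ∈ S, μ0 i = (S.card : ℝ) - 1 - m) →
      (∑ i ∈ S, μ0 i • u i = 0) →
      ∃ μ : ι → ℝ, (∀ i ∈ S, 0 ≤ μ i ∧ μ i ≤ 1) ∧
        (∑ i ∈ S, μ i = (S.card : ℝ) - 1 - m) ∧
        (∑ i ∈ S, μ i • u i = 0) ∧ ∃ i ∈ S, μ i = 0 := by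
  intro N
  induction N with
  | zero =>
    intro μ0 hcard h01 hsum hvec
    by_cases hzero : ∃ i ∈ S, μ0 i = 0
    · exact ⟨μ0, h01, hsum, hvec, hzero⟩
    push_neg at hzero
    exfalso
    have hfil : S.filter (fun i => μ0 i ≠ 0 ∧ μ0 i ≠ 1) = ∅ :=
      card_eq_zero.mp (Nat.le_zero.mp hcard)
    have hone : ∀ i ∈ S, μ0 i = 1 := by
      intro i hi
      by_contra hne
      have : i ∈ S.filter (fun i => μ0 i ≠ 0 ∧ μ0 i ≠ 1) :=
        mem_filter.mpr ⟨hi, hzero i hi, hne⟩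
      simp [hfil] at this
    have hS : ∑ i ∈ S, μ0 i = (S.card : ℝ) := by
      rw [Finset.sum_congr rfl hone]; simp
    rw [hS] at hsum
    have hm : (0:ℝ) ≤ m := Nat.cast_nonneg m
    linarith
  | succ N ih =>
    intro μ0 hcard h01 hsum hvec
    by_cases hzero : ∃ i ∈ S, μ0 i = 0
    · exact ⟨μ0, h01, hsum, hvec, hzero⟩
    push_neg at hzero
    have hpos : ∀ i ∈ S, 0 < μ0 i := fun i hi =>
      lt_of_le_of_ne (h01 i hi).1 (Ne.symm (hzero i hi))
    set F : Finset ι := S.filter (fun i => ¬ μ0 i = 1) with hFdef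
    have hFS : F ⊆ S := filter_subset _ _
    have hFlt : ∀ i ∈ F, μ0 i < 1 := fun i hi =>
      lt_of_le_of_ne (h01 i (hFS hi)).2 (mem_filter.mp hi).2
    have hsplit : ∑ i ∈ S.filter (fun i => μ0 i = 1), μ0 i + ∑ i ∈ F, μ0 i = ∑ i ∈ S, μ0 i :=
      Finset.sum_filter_add_sum_filter_not S _ _
    have hones : ∑ i ∈ S.filter (fun i => μ0 i = 1), μ0 i
        = ((S.filter (fun i => μ0 i = 1)).card : ℝ) := by
      rw [Finset.sum_congr rfl (fun i hi => (mem_filter.mp hi).2)]; simp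
    have hcards : (S.filter (fun i => μ0 i = 1)).card + F.card = S.card :=
      Finset.card_filter_add_card_filter_not _
    have hm : (0:ℝ) ≤ m := Nat.cast_nonneg m
    have hFne : F.Nonempty := by
      rcases F.eq_empty_or_nonempty with h | h
      · exfalso
        rw [h, Finset.card_empty] at hcards
        rw [h, Finset.sum_empty, add_zero, hones] at hsplit
        rw [← hsplit] at hsum
        have hc : (S.filter (fun i => μ0 i = 1)).card = S.card := by omega
        rw [hc] at hsum
        linarith
      · exact h
    have hFsumpos : 0 < ∑ i ∈ F, μ0 i :=
      Finset.sum_pos (fun i hi => hpos i (hFS hi)) hFne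
    have honeslt : ((S.filter (fun i => μ0 i = 1)).card : ℝ) < (S.card : ℝ) - 1 - m := by
      rw [← hsum, ← hsplit, hones]; linarith
    have hFcard : m + 2 ≤ F.card := by
      have h1 : ((S.filter (fun i => μ0 i = 1)).card : ℝ) + (m : ℝ) + 1 < (S.card : ℝ) := by
        linarith
      have h2 : (S.filter (fun i => μ0 i = 1)).card + m + 1 < S.card := by
        exact_mod_cast h1
      omega
    -- linear map and kernel direction
    let Φ : ({i // i ∈ F} → ℝ) →ₗ[ℝ] ℝ × (Fin m → ℝ) :=
      { toFun := fun d => (∑ i, d i, ∑ i, d i • u i.1),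
        map_add' := by
          intro x y
          simp [add_smul, Finset.sum_add_distrib]
        map_smul' := by
          intro c x
          simp [mul_smul, Finset.mul_sum, Finset.smul_sum] }
    have hninj : ¬ Function.Injective Φ := by
      intro hinj
      have h1 := LinearMap.finrank_le_finrank_of_injective hinj
      rw [Module.finrank_pi ℝ] at h1
      have h2 : Module.finrank ℝ (ℝ × (Fin m → ℝ)) = 1 + m := by
        simp [Module.finrank_prod, Module.finrank_pi]
      rw [h2, Fintype.card_coe] at h1
      omega
    obtain ⟨d1, d2, hd12, hdne⟩ := Function.not_injective_iff.mp hninj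
    set d : {i // i ∈ F} → ℝ := d1 - d2 with hd
    have hΦd : Φ d = 0 := by rw [map_sub, hd12, sub_self]
    have hdne0 : d ≠ 0 := sub_ne_zero.mpr hdne
    obtain ⟨i0, hi0⟩ := Function.ne_iff.mp hdne0
    have hi0' : d i0 ≠ 0 := hi0
    obtain ⟨e, hΦe, i1, hi1⟩ : ∃ e : {i // i ∈ F} → ℝ, Φ e = 0 ∧ ∃ i, e i < 0 := by
      rcases lt_or_gt_of_ne hi0' with h | h
      · exact ⟨d, hΦd, i0, h⟩
      · refine ⟨-d, by rw [map_neg, hΦd, neg_zero], i0, ?_⟩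
        simpa using h
    -- extend e to ι
    set E : ι → ℝ := fun i => if h : i ∈ F then e ⟨i, h⟩ else 0 with hEdef
    have hEF : ∀ i : {i // i ∈ F}, E i.1 = e i := by
      intro i
      simp only [hEdef, dif_pos i.2]
    have hE0 : ∀ i ∉ F, E i = 0 := by
      intro i hi; simp only [hEdef, dif_neg hi]
    -- sums of E over S vanish
    have hsumEF : ∑ i ∈ S, E i = 0 := by
      rw [← Finset.sum_subset hFS (fun i _ hi => hE0 i hi)]
      rw [← Finset.sum_coe_sort F E]
      rw [Finset.sum_congr rfl (fun i _ => hEF i)]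
      exact congrArg Prod.fst hΦe
    have hsumEuF : ∑ i ∈ S, E i • u i = 0 := by
      rw [← Finset.sum_subset hFS (fun i _ hi => by rw [hE0 i hi, zero_smul])]
      rw [← Finset.sum_coe_sort F (fun i => E i • u i)]
      rw [Finset.sum_congr rfl (fun i _ => by rw [hEF i])]
      exact congrArg Prod.snd hΦe
    -- thresholds
    set θ : ι → ℝ := fun i => if 0 < E i then (1 - μ0 i) / E i else μ0 i / (-E i) with hθdef
    set T : Finset ι := F.filter (fun i => E i ≠ 0) with hTdef
    have hTF : T ⊆ F := filter_subset _ _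
    have hTne : T.Nonempty := by
      refine ⟨i1.1, mem_filter.mpr ⟨i1.2, ?_⟩⟩
      rw [hEF i1]; exact ne_of_lt hi1
    have hθpos : ∀ i ∈ T, 0 < θ i := by
      intro i hiT
      have hiF : i ∈ F := hTF hiT
      have hiS : i ∈ S := hFS hiF
      have hEne : E i ≠ 0 := (mem_filter.mp hiT).2
      by_cases hE : 0 < E i
      · simp only [hθdef, if_pos hE]
        exact div_pos (by linarith [hFlt i hiF]) hE
      · have hEneg : E i < 0 := lt_of_le_of_ne (not_lt.mp hE) hEne
        simp only [hθdef, if_neg hE]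
        exact div_pos (hpos i hiS) (by linarith)
    obtain ⟨istar, histarT, hminθ⟩ := T.exists_min_image θ hTne
    have histarF : istar ∈ F := hTF histarT
    have histarS : istar ∈ S := hFS histarF
    have hθstarpos : 0 < θ istar := hθpos istar histarT
    set μ1 : ι → ℝ := fun i => μ0 i + θ istar * E i with hμ1def
    -- sums
    have hsum1 : ∑ i ∈ S, μ1 i = (S.card : ℝ) - 1 - m := by
      simp only [hμ1def]
      rw [Finset.sum_add_distrib, ← Finset.mul_sum, hsumEF, mul_zero, add_zero, hsum]
    have hvec1 : ∑ i ∈ S, μ1 i • u i = 0 := by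
      simp only [hμ1def]
      have : ∀ i ∈ S, (μ0 i + θ istar * E i) • u i = μ0 i • u i + θ istar • (E i • u i) := by
        intro i _; rw [add_smul, mul_smul]
      rw [Finset.sum_congr rfl this, Finset.sum_add_distrib, ← Finset.smul_sum, hsumEuF]
      rw [hvec, smul_zero, add_zero]
    -- bounds
    have hnotF : ∀ i ∈ S, i ∉ F → μ0 i = 1 := by
      intro i hiS hiF
      by_contra hne
      exact hiF (mem_filter.mpr ⟨hiS, hne⟩)
    have h011 : ∀ i ∈ S, 0 ≤ μ1 i ∧ μ1 i ≤ 1 := by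
      intro i hiS
      by_cases hiF : i ∈ F
      · rcases lt_trichotomy (E i) 0 with hE | hE | hE
        · have hiT : i ∈ T := mem_filter.mpr ⟨hiF, ne_of_lt hE⟩
          have hθi : θ istar ≤ θ i := hminθ i hiT
          have hθieq : θ i = μ0 i / (-E i) := by
            simp only [hθdef, if_neg (not_lt.mpr (le_of_lt hE))]
          constructor
          · have h1 : θ istar * (-E i) ≤ μ0 i := by
              rw [hθieq] at hθi
              calc θ istar * (-E i) ≤ (μ0 i / (-E i)) * (-E i) := by
                    apply mul_le_mul_of_nonneg_right hθi (by linarith)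
                _ = μ0 i := div_mul_cancel₀ _ (by linarith)
            simp only [hμ1def]; nlinarith
          · simp only [hμ1def]
            nlinarith [(h01 i hiS).2, hθstarpos]
        · simp only [hμ1def, hE, mul_zero, add_zero]; exact h01 i hiS
        · have hiT : i ∈ T := mem_filter.mpr ⟨hiF, ne_of_gt hE⟩
          have hθi : θ istar ≤ θ i := hminθ i hiT
          have hθieq : θ i = (1 - μ0 i) / E i := by
            simp only [hθdef, if_pos hE]
          constructor
          · simp only [hμ1def]
            nlinarith [(h01 i hiS).1, hθstarpos]
          · have h1 : θ istar * E i ≤ 1 - μ0 i := by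
              rw [hθieq] at hθi
              calc θ istar * E i ≤ ((1 - μ0 i) / E i) * E i :=
                    mul_le_mul_of_nonneg_right hθi (le_of_lt hE)
                _ = 1 - μ0 i := div_mul_cancel₀ _ (ne_of_gt hE)
            simp only [hμ1def]; linarith
      · simp only [hμ1def, hE0 i hiF, mul_zero, add_zero]; exact h01 i hiS
    -- istar becomes extreme
    have histar01 : μ1 istar = 0 ∨ μ1 istar = 1 := by
      have hEne : E istar ≠ 0 := (mem_filter.mp histarT).2
      by_cases hE : 0 < E istar
      · right
        simp only [hμ1def, hθdef, if_pos hE]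
        rw [div_mul_cancel₀ _ (ne_of_gt hE)]; ring
      · left
        have hEneg : E istar < 0 := lt_of_le_of_ne (not_lt.mp hE) hEne
        simp only [hμ1def, hθdef, if_neg hE]
        rw [div_mul_eq_mul_div, mul_div_assoc, div_neg, div_self hEne]
        ring
    -- filter decrease
    have histarfil : istar ∈ S.filter (fun i => μ0 i ≠ 0 ∧ μ0 i ≠ 1) :=
      mem_filter.mpr ⟨histarS, hzero istar histarS, (mem_filter.mp histarF).2⟩
    have hsub : S.filter (fun i => μ1 i ≠ 0 ∧ μ1 i ≠ 1) ⊆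
        (S.filter (fun i => μ0 i ≠ 0 ∧ μ0 i ≠ 1)).erase istar := by
      intro i hi
      obtain ⟨hiS, hne0, hne1⟩ := mem_filter.mp hi
      refine Finset.mem_erase.mpr ⟨?_, mem_filter.mpr ⟨hiS, hzero i hiS, ?_⟩⟩
      · rintro rfl
        rcases histar01 with h | h
        · exact hne0 h
        · exact hne1 h
      · intro h1
        have hiF : i ∉ F := by
          simp only [hFdef, mem_filter]
          rintro ⟨_, hc⟩; exact hc h1
        have : μ1 i = 1 := by
          simp only [hμ1def, hE0 i hiF, mul_zero, add_zero]; exact h1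
        exact hne1 this
    have hcard1 : (S.filter (fun i => μ1 i ≠ 0 ∧ μ1 i ≠ 1)).card ≤ N := by
      have h1 := Finset.card_le_card hsub
      rw [Finset.card_erase_of_mem histarfil] at h1
      have h2 : 1 ≤ (S.filter (fun i => μ0 i ≠ 0 ∧ μ0 i ≠ 1)).card :=
        Finset.card_pos.mpr ⟨istar, histarfil⟩
      omega
    exact ih μ1 hcard1 h011 hsum1 hvec1

def SteinitzGood (u : ι → Fin m → ℝ) (S : Finset ι) (lam : ι → ℝ) : Prop :=
  (∀ i ∈ S, 0 ≤ lam i ∧ lam i ≤ 1) ∧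
  (∑ i ∈ S, lam i = (S.card : ℝ) - m) ∧
  (∑ i ∈ S, lam i • u i = 0)

lemma steinitz_bound_of_good {u : ι → Fin m → ℝ} {S : Finset ι} {lam : ι → ℝ} {C : ℝ}
    (hC : 0 ≤ C) (hu : ∀ i, ‖u i‖ ≤ C) (hg : SteinitzGood u S lam) :
    ‖∑ i ∈ S, u i‖ ≤ m * C := by
  obtain ⟨h01, hsum, hvec⟩ := hg
  have hrw : ∑ i ∈ S, (1 - lam i) • u i = ∑ i ∈ S, u i := by
    rw [Finset.sum_congr rfl (fun i (_ : i ∈ S) => sub_smul 1 (lam i) (u i)),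
      Finset.sum_sub_distrib, hvec, sub_zero]
    simp
  rw [← hrw]
  calc ‖∑ i ∈ S, (1 - lam i) • u i‖ ≤ ∑ i ∈ S, ‖(1 - lam i) • u i‖ := norm_sum_le _ _
    _ ≤ ∑ i ∈ S, (1 - lam i) * C := by
        refine Finset.sum_le_sum fun i hi => ?_
        rw [norm_smul, Real.norm_eq_abs, abs_of_nonneg (by linarith [(h01 i hi).2])]
        exact mul_le_mul_of_nonneg_left (hu i) (by linarith [(h01 i hi).2])
    _ = (∑ i ∈ S, (1 - lam i)) * C := by rw [Finset.sum_mul]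
    _ = (m : ℝ) * C := by
        rw [Finset.sum_sub_distrib, hsum, Finset.sum_const, nsmul_eq_mul, mul_one]
        ring

lemma steinitz_bound_trivial {u : ι → Fin m → ℝ} {S : Finset ι} {C : ℝ}
    (hC : 0 ≤ C) (hu : ∀ i, ‖u i‖ ≤ C) (hcard : S.card ≤ m) :
    ‖∑ i ∈ S, u i‖ ≤ m * C := by
  calc ‖∑ i ∈ S, u i‖ ≤ ∑ i ∈ S, ‖u i‖ := norm_sum_le _ _
    _ ≤ ∑ i ∈ S, C := Finset.sum_le_sum (fun i _ => hu i)
    _ = (S.card : ℝ) * C := by rw [Finset.sum_const, nsmul_eq_mul]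
    _ ≤ m * C := by
        apply mul_le_mul_of_nonneg_right _ hC
        exact_mod_cast hcard

lemma steinitz_descent (u : ι → Fin m → ℝ) (S : Finset ι) (lam : ι → ℝ)
    (hg : SteinitzGood u S lam) (hcard : m + 1 ≤ S.card) :
    ∃ i ∈ S, ∃ lam', SteinitzGood u (S.erase i) lam' := by
  obtain ⟨h01, hsum, hvec⟩ := hg
  have hcR : (m : ℝ) + 1 ≤ (S.card : ℝ) := by exact_mod_cast hcard
  set c : ℝ := (S.card : ℝ) - 1 - m with hc
  have hc0 : 0 ≤ c := by simp only [hc]; linarith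
  have hc1 : 0 < c + 1 := by linarith
  set μ0 : ι → ℝ := fun i => (c / (c + 1)) * lam i with hμ0
  have hfrac0 : 0 ≤ c / (c + 1) := div_nonneg hc0 (le_of_lt hc1)
  have hfrac1 : c / (c + 1) ≤ 1 := by
    rw [div_le_one hc1]; linarith
  have h01' : ∀ i ∈ S, 0 ≤ μ0 i ∧ μ0 i ≤ 1 := by
    intro i hi
    constructor
    · exact mul_nonneg hfrac0 (h01 i hi).1
    · calc (c / (c+1)) * lam i ≤ 1 * 1 :=
            mul_le_mul hfrac1 (h01 i hi).2 (h01 i hi).1 zero_le_one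
        _ = 1 := by ring
  have hsum' : ∑ i ∈ S, μ0 i = (S.card : ℝ) - 1 - m := by
    simp only [hμ0]
    rw [← Finset.mul_sum, hsum]
    have : (S.card : ℝ) - m = c + 1 := by simp only [hc]; ring
    rw [this, div_mul_cancel₀ _ (ne_of_gt hc1)]
  have hvec' : ∑ i ∈ S, μ0 i • u i = 0 := by
    simp only [hμ0]
    have : ∀ i ∈ S, ((c / (c+1)) * lam i) • u i = (c/(c+1)) • (lam i • u i) := by
      intro i _; rw [mul_smul]
    rw [Finset.sum_congr rfl this, ← Finset.smul_sum, hvec, smul_zero]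
  obtain ⟨μ, hμ01, hμsum, hμvec, i, hiS, hμi⟩ :=
    steinitz_exists_zero_coord u S (S.filter fun i => μ0 i ≠ 0 ∧ μ0 i ≠ 1).card μ0
      le_rfl h01' hsum' hvec'
  refine ⟨i, hiS, μ, fun j hj => hμ01 j (Finset.erase_subset _ _ hj), ?_, ?_⟩
  · have h1 : ∑ j ∈ S.erase i, μ j + μ i = ∑ j ∈ S, μ j := Finset.sum_erase_add S μ hiS
    have h2 : ((S.erase i).card : ℝ) = (S.card : ℝ) - 1 := by
      rw [Finset.card_erase_of_mem hiS]
      have : 1 ≤ S.card := by omega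
      push_cast [Nat.cast_sub this]
      ring
    rw [h2]
    rw [hμsum, hμi, add_zero] at h1
    exact h1
  · have h1 : ∑ j ∈ S.erase i, μ j • u j + μ i • u i = ∑ j ∈ S, μ j • u j :=
      Finset.sum_erase_add S _ hiS
    rw [hμvec, hμi, zero_smul, add_zero] at h1
    exact h1

lemma steinitz_chain_aux (u : ι → Fin m → ℝ) (h0 : ∑ i, u i = 0) :
    ∀ d ≤ Fintype.card ι, ∃ g : ℕ → Finset ι, g 0 = Finset.univ ∧
      (∀ e, e + 1 ≤ d → g (e + 1) ⊆ g e) ∧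
      (∀ e ≤ d, (g e).card + e = Fintype.card ι) ∧
      (∀ e ≤ d, m + e ≤ Fintype.card ι → ∃ lam, SteinitzGood u (g e) lam) := by
  intro d
  induction d with
  | zero =>
    intro _
    refine ⟨fun _ => Finset.univ, rfl, by omega, ?_, ?_⟩
    · intro e he
      interval_cases e
      simp
    · intro e he hm
      interval_cases e
      refine ⟨fun _ => ((Fintype.card ι : ℝ) - m) / (Fintype.card ι), ?_, ?_, ?_⟩
      · intro i _
        have hm' : (m : ℝ) ≤ (Fintype.card ι : ℝ) := by exact_mod_cast hm
        rcases Nat.eq_zero_or_pos (Fintype.card ι) with h | h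
        · have : m = 0 := by omega
          simp [h, this]
        · have hpos : (0:ℝ) < (Fintype.card ι : ℝ) := by exact_mod_cast h
          constructor
          · exact div_nonneg (by linarith) (le_of_lt hpos)
          · rw [div_le_one hpos]
            have : (0:ℝ) ≤ m := Nat.cast_nonneg m
            linarith
      · rw [Finset.sum_const, Finset.card_univ, nsmul_eq_mul]
        rcases Nat.eq_zero_or_pos (Fintype.card ι) with h | h
        · have : m = 0 := by omega
          simp [h, this]
        · have hpos : (0:ℝ) < (Fintype.card ι : ℝ) := by exact_mod_cast h
          field_simp
      · rw [← Finset.smul_sum, h0, smul_zero]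
  | succ d ihd =>
    intro hd1
    obtain ⟨g, hg0, hgsub, hgcard, hggood⟩ := ihd (by omega)
    have hcardd : (g d).card + d = Fintype.card ι := hgcard d le_rfl
    have hcardpos : 1 ≤ (g d).card := by omega
    by_cases hml : m + (d + 1) ≤ Fintype.card ι
    · obtain ⟨lam, hlam⟩ := hggood d le_rfl (by omega)
      have hc : m + 1 ≤ (g d).card := by omega
      obtain ⟨i, hiS, lam', hlam'⟩ := steinitz_descent u (g d) lam hlam hc
      refine ⟨fun e => if e ≤ d then g e else (g d).erase i, by simp [hg0], ?_, ?_, ?_⟩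
      · intro e he
        by_cases h1 : e + 1 ≤ d
        · simp only [if_pos h1, if_pos (by omega : e ≤ d)]
          exact hgsub e h1
        · have he' : e = d := by omega
          rw [he']
          simp only [if_pos (le_refl d), if_neg (by omega : ¬ d + 1 ≤ d)]
          exact Finset.erase_subset _ _
      · intro e he
        by_cases h1 : e ≤ d
        · simp only [if_pos h1]; exact hgcard e h1
        · have he' : e = d + 1 := by omega
          rw [he']
          simp only [if_neg (by omega : ¬ d + 1 ≤ d)]
          rw [Finset.card_erase_of_mem hiS]
          omega
      · intro e he hm
        by_cases h1 : e ≤ d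
        · simp only [if_pos h1]; exact hggood e h1 (by omega)
        · have he' : e = d + 1 := by omega
          rw [he']
          simp only [if_neg (by omega : ¬ d + 1 ≤ d)]
          exact ⟨lam', hlam'⟩
    · obtain ⟨i, hiS⟩ := Finset.card_pos.mp hcardpos
      refine ⟨fun e => if e ≤ d then g e else (g d).erase i, by simp [hg0], ?_, ?_, ?_⟩
      · intro e he
        by_cases h1 : e + 1 ≤ d
        · simp only [if_pos h1, if_pos (by omega : e ≤ d)]
          exact hgsub e h1
        · have he' : e = d := by omega
          rw [he']
          simp only [if_pos (le_refl d), if_neg (by omega : ¬ d + 1 ≤ d)]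
          exact Finset.erase_subset _ _
      · intro e he
        by_cases h1 : e ≤ d
        · simp only [if_pos h1]; exact hgcard e h1
        · have he' : e = d + 1 := by omega
          rw [he']
          simp only [if_neg (by omega : ¬ d + 1 ≤ d)]
          rw [Finset.card_erase_of_mem hiS]
          omega
      · intro e he hm
        by_cases h1 : e ≤ d
        · simp only [if_pos h1]; exact hggood e h1 (by omega)
        · have he' : e = d + 1 := by omega
          rw [he']
          omega

lemma steinitz_chain_s3 (u : ι → Fin m → ℝ) (C : ℝ) (hC : 0 ≤ C) (hu : ∀ i, ‖u i‖ ≤ C)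
    (h0 : ∑ i, u i = 0) :
    ∃ g : ℕ → Finset ι, g 0 = Finset.univ ∧
      (∀ e, e + 1 ≤ Fintype.card ι → g (e + 1) ⊆ g e) ∧
      (∀ e ≤ Fintype.card ι, (g e).card + e = Fintype.card ι) ∧
      (∀ e ≤ Fintype.card ι, ‖∑ i ∈ g e, u i‖ ≤ m * C) := by
  obtain ⟨g, hg0, hgsub, hgcard, hggood⟩ := steinitz_chain_aux u h0 (Fintype.card ι) le_rfl
  refine ⟨g, hg0, hgsub, hgcard, ?_⟩
  intro e he
  by_cases hm : m + e ≤ Fintype.card ι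
  · obtain ⟨lam, hlam⟩ := hggood e he hm
    exact steinitz_bound_of_good hC hu hlam
  · apply steinitz_bound_trivial hC hu
    have := hgcard e he
    omega

lemma steinitz_order {t : ℕ} (g : ℕ → Finset (Fin t))
    (hg0 : g 0 = Finset.univ)
    (hgsub : ∀ e, e + 1 ≤ t → g (e + 1) ⊆ g e)
    (hgcard : ∀ e ≤ t, (g e).card + e = t) :
    ∃ π : Fin t → Fin t, Function.Injective π ∧
      ∀ j ≤ t, (Finset.univ.filter fun l : Fin t => (l : ℕ) < j).image π = g (t - j) := by
  have hN : Fintype.card (Fin t) = t := Fintype.card_fin t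
  have hne : ∀ l : Fin t, (g (t - 1 - (l : ℕ)) \ g (t - (l : ℕ))).Nonempty := by
    intro l
    have hl : (l : ℕ) < t := l.2
    have hstep : t - 1 - (l : ℕ) + 1 = t - (l : ℕ) := by omega
    have hsub : g (t - (l : ℕ)) ⊆ g (t - 1 - (l : ℕ)) := by
      rw [← hstep]
      exact hgsub _ (by omega)
    have hc1 : (g (t - 1 - (l : ℕ))).card = (l : ℕ) + 1 := by
      have := hgcard (t - 1 - (l : ℕ)) (by omega)
      omega
    have hc2 : (g (t - (l : ℕ))).card = (l : ℕ) := by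
      have := hgcard (t - (l : ℕ)) (by omega)
      omega
    rw [← Finset.card_pos, Finset.card_sdiff_of_subset hsub, hc1, hc2]
    omega
  set π : Fin t → Fin t := fun l => (hne l).choose with hπ
  have hπspec : ∀ l : Fin t, π l ∈ g (t - 1 - (l : ℕ)) ∧ π l ∉ g (t - (l : ℕ)) := by
    intro l
    have := (hne l).choose_spec
    rw [Finset.mem_sdiff] at this
    exact this
  have himage : ∀ j ≤ t, (Finset.univ.filter fun l : Fin t => (l : ℕ) < j).image π = g (t - j) := by
    intro j
    induction j with
    | zero =>
      intro _
      have h1 : (Finset.univ.filter fun l : Fin t => (l : ℕ) < 0) = ∅ := by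
        apply Finset.filter_false_of_mem
        intro l _
        omega
      have h2 : g t = ∅ := by
        have := hgcard t le_rfl
        rw [← Finset.card_eq_zero]
        omega
      rw [h1, Finset.image_empty, Nat.sub_zero, h2]
    | succ j ihj =>
      intro hj1
      have hjt : j < t := by omega
      have hfil : (Finset.univ.filter fun l : Fin t => (l : ℕ) < j + 1)
          = insert ⟨j, hjt⟩ (Finset.univ.filter fun l : Fin t => (l : ℕ) < j) := by
        ext l
        simp only [Finset.mem_filter, Finset.mem_insert, Finset.mem_univ, true_and]
        rw [Nat.lt_succ_iff_lt_or_eq]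
        constructor
        · rintro (h | h)
          · exact Or.inr h
          · exact Or.inl (Fin.ext h)
        · rintro (h | h)
          · exact Or.inr (by rw [h])
          · exact Or.inl h
      rw [hfil, Finset.image_insert, ihj (by omega)]
      -- π ⟨j, hjt⟩ ∈ g (t - 1 - j) \ g (t - j)
      obtain ⟨hin, hout⟩ := hπspec ⟨j, hjt⟩
      have hstep : t - 1 - j + 1 = t - j := by omega
      have heq : t - (j + 1) = t - 1 - j := by omega
      rw [heq]
      have hsub : g (t - j) ⊆ g (t - 1 - j) := by
        rw [← hstep]
        exact hgsub _ (by omega)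
      have hsubset : insert (π ⟨j, hjt⟩) (g (t - j)) ⊆ g (t - 1 - j) :=
        Finset.insert_subset hin hsub
      apply Finset.eq_of_subset_of_card_le hsubset
      rw [Finset.card_insert_of_notMem hout]
      have hc1 : (g (t - 1 - j)).card = j + 1 := by
        have := hgcard (t - 1 - j) (by omega)
        omega
      have hc2 : (g (t - j)).card = j := by
        have := hgcard (t - j) (by omega)
        omega
      simp only [Fin.val_mk]
      omega
  have hinj : Function.Injective π := by
    have h1 := himage t le_rfl
    have hfull : (Finset.univ.filter fun l : Fin t => (l : ℕ) < t) = Finset.univ := by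
      apply Finset.filter_true_of_mem
      intro l _
      exact l.2
    rw [hfull, Nat.sub_self, hg0] at h1
    have hcard : (Finset.univ.image π).card = (Finset.univ : Finset (Fin t)).card := by
      rw [h1]
    have hinjOn := Finset.injOn_of_card_image_eq hcard
    intro a b hab
    exact hinjOn (by simp) (by simp) hab
  exact ⟨π, hinj, himage⟩

lemma exists_fiber_function (n t : ℕ) (w : Fin n → ℕ) (hw : ∑ i, w i = t) :
    ∃ σ0 : Fin t → Fin n,
      ∀ i, (Finset.univ.filter fun l : Fin t => σ0 l = i).card = w i := by
  have hcard : Fintype.card (Σ i : Fin n, Fin (w i)) = t := by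
    simp [hw]
  set e := Fintype.equivFinOfCardEq hcard with he
  refine ⟨fun l => (e.symm l).1, fun i => ?_⟩
  have h1 : (Finset.univ.filter fun l : Fin t => (e.symm l).1 = i).card
      = (Finset.univ.filter fun s : (Σ i : Fin n, Fin (w i)) => s.1 = i).card := by
    apply Finset.card_equiv e.symm
    intro l
    simp
  rw [h1]
  have h2 : (Finset.univ.filter fun s : (Σ i : Fin n, Fin (w i)) => s.1 = i)
      = Finset.univ.map ⟨fun x : Fin (w i) => ⟨i, x⟩, fun a b h => by
          simpa using h⟩ := by
    ext s
    rcases s with ⟨j, y⟩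
    simp only [Finset.mem_filter, Finset.mem_univ, true_and, Finset.mem_map,
      Function.Embedding.coeFn_mk]
    constructor
    · rintro rfl
      exact ⟨y, rfl⟩
    · rintro ⟨x, hx⟩
      injection hx with hx1 hx2
      exact hx1.symm
  rw [h2, Finset.card_map, Finset.card_univ, Fintype.card_fin]

/-- Given `Az = b` with `z ∈ ℤ^n_{≥0}` and `t = ‖z‖₁ ≥ 1`, the multiset of columns of `A`
(column `i` taken `z_i` times) can be ordered as `v_1, …, v_t` such that every partial sum
satisfies `‖v_1 + ⋯ + v_j − (j/t)·b‖_∞ ≤ 2mΔ`.  The ordering is encoded by a map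
`σ : Fin t → Fin n` hitting each index `i` exactly `z_i` times, with `v_j` the `σ j`-th
column of `A`.  The norm on `Fin m → ℝ` is the maximum norm. -/
theorem steinitz_ordering_of_columns
    (m n : ℕ) (Δ : ℤ) (hΔ : 1 ≤ Δ)
    (A : Matrix (Fin m) (Fin n) ℤ)
    (hA : ∀ i j, |A i j| ≤ Δ)
    (b : Fin m → ℤ)
    (z : Fin n → ℤ) (hz : ∀ i, 0 ≤ z i)
    (hAz : A.mulVec z = b)
    (t : ℕ) (ht : (t : ℤ) = ∑ i, z i) (ht1 : 1 ≤ t) :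
    ∃ σ : Fin t → Fin n,
      (∀ i : Fin n, ((Finset.univ.filter (fun l : Fin t => σ l = i)).card : ℤ) = z i) ∧
      ∀ j : ℕ, 1 ≤ j → j ≤ t →
        ‖(fun r : Fin m =>
            ((∑ l ∈ Finset.univ.filter (fun l : Fin t => (l : ℕ) < j), A r (σ l) : ℤ) : ℝ)) -
          ((j : ℝ) / (t : ℝ)) • (fun r : Fin m => (b r : ℝ))‖ ≤ 2 * (m : ℝ) * (Δ : ℝ) := by
  classical
  set w : Fin n → ℕ := fun i => (z i).toNat with hwdef
  have hwz : ∀ i, (w i : ℤ) = z i := fun i => Int.toNat_of_nonneg (hz i)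
  have hwt : ∑ i, w i = t := by
    have h1 : ((∑ i, w i : ℕ) : ℤ) = (t : ℤ) := by
      push_cast
      rw [Finset.sum_congr rfl (fun i _ => hwz i)]
      exact ht.symm
    exact_mod_cast h1
  obtain ⟨σ0, hσ0⟩ := exists_fiber_function n t w hwt
  have htpos : (0:ℝ) < (t : ℝ) := by exact_mod_cast ht1
  have hbr : ∀ r, b r = ∑ i, A r i * z i := by
    intro r
    rw [← hAz]
    simp [Matrix.mulVec, dotProduct]
  have hbabs : ∀ r, |b r| ≤ (t : ℤ) * Δ := by
    intro r
    rw [hbr r, ht]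
    calc |∑ i, A r i * z i| ≤ ∑ i, |A r i * z i| := Finset.abs_sum_le_sum_abs _ _
      _ ≤ ∑ i, Δ * z i := by
          refine Finset.sum_le_sum fun i _ => ?_
          rw [abs_mul, abs_of_nonneg (hz i)]
          exact mul_le_mul_of_nonneg_right (hA r i) (hz i)
      _ = (∑ i, z i) * Δ := by rw [← Finset.mul_sum, mul_comm]
  set u : Fin t → Fin m → ℝ := fun l r => (A r (σ0 l) : ℝ) - (b r : ℝ) / t with hudef
  have hfib : ∀ r, ∑ l : Fin t, (A r (σ0 l) : ℤ) = b r := by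
    intro r
    rw [← Finset.sum_fiberwise Finset.univ σ0 (fun l => (A r (σ0 l) : ℤ))]
    have hinner : ∀ i, ∑ l ∈ Finset.univ.filter (fun l => σ0 l = i), (A r (σ0 l) : ℤ)
        = (w i : ℤ) * A r i := by
      intro i
      rw [Finset.sum_congr rfl (fun l hl => by
        rw [(Finset.mem_filter.mp hl).2])]
      rw [Finset.sum_const, hσ0 i, nsmul_eq_mul]
    rw [Finset.sum_congr rfl (fun i _ => hinner i), hbr r]
    refine Finset.sum_congr rfl fun i _ => ?_
    rw [hwz i, mul_comm]
  have husum : ∑ l : Fin t, u l = 0 := by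
    funext r
    rw [Finset.sum_apply]
    simp only [hudef]
    rw [Finset.sum_sub_distrib, Finset.sum_const, Finset.card_univ, Fintype.card_fin,
      nsmul_eq_mul]
    have h1 : ∑ l : Fin t, (A r (σ0 l) : ℝ) = (b r : ℝ) := by
      exact_mod_cast congrArg (fun x : ℤ => (x : ℝ)) (hfib r)
    rw [h1]
    field_simp
    simp
  have hunorm : ∀ l, ‖u l‖ ≤ 2 * (Δ : ℝ) := by
    intro l
    have hΔ0 : (0:ℝ) ≤ (Δ:ℝ) := by exact_mod_cast le_trans zero_le_one hΔ
    rw [pi_norm_le_iff_of_nonneg (by linarith)]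
    intro r
    rw [Real.norm_eq_abs]
    have h1 : |(A r (σ0 l) : ℝ)| ≤ (Δ:ℝ) := by exact_mod_cast hA r (σ0 l)
    have h2 : |(b r : ℝ) / t| ≤ (Δ:ℝ) := by
      rw [abs_div, abs_of_pos htpos, div_le_iff₀ htpos]
      have h3 : |(b r : ℝ)| ≤ (t:ℝ) * Δ := by exact_mod_cast hbabs r
      linarith
    calc |(A r (σ0 l) : ℝ) - (b r : ℝ) / t|
        ≤ |(A r (σ0 l) : ℝ)| + |(b r : ℝ) / t| := abs_sub _ _
      _ ≤ 2 * (Δ:ℝ) := by linarith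
  obtain ⟨g, hg0, hgsub, hgcard, hgbound⟩ :=
    steinitz_chain_s3 u (2 * (Δ:ℝ)) (by positivity) hunorm husum
  simp only [Fintype.card_fin] at hgsub hgcard hgbound
  obtain ⟨π, hπinj, hπimg⟩ := steinitz_order g hg0 hgsub hgcard
  have hπbij : Function.Bijective π := Finite.injective_iff_bijective.mp hπinj
  refine ⟨fun l => σ0 (π l), ?_, ?_⟩
  · intro i
    have hcount : (Finset.univ.filter (fun l : Fin t => σ0 (π l) = i)).card
        = (Finset.univ.filter (fun l : Fin t => σ0 l = i)).card := by
      apply Finset.card_equiv (Equiv.ofBijective π hπbij)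
      intro l
      simp [Equiv.ofBijective]
    rw [hcount, hσ0 i, hwz i]
  · intro j hj1 hjt
    have hXeq : (fun r : Fin m =>
          ((∑ l ∈ Finset.univ.filter (fun l : Fin t => (l : ℕ) < j), A r (σ0 (π l)) : ℤ) : ℝ))
        - ((j : ℝ) / (t : ℝ)) • (fun r : Fin m => (b r : ℝ)) = ∑ i ∈ g (t - j), u i := by
      funext r
      simp only [Pi.sub_apply, Pi.smul_apply, smul_eq_mul]
      rw [Finset.sum_apply]
      have hL : ((∑ l ∈ Finset.univ.filter (fun l : Fin t => (l : ℕ) < j),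
          A r (σ0 (π l)) : ℤ) : ℝ)
          = ∑ i ∈ g (t - j), (A r (σ0 i) : ℝ) := by
        push_cast
        rw [← hπimg j hjt]
        rw [Finset.sum_image (fun a _ b _ h => hπinj h)]
      rw [hL]
      have hcardgj : (g (t - j)).card = j := by
        have := hgcard (t - j) (by omega)
        omega
      simp only [hudef]
      rw [Finset.sum_sub_distrib, Finset.sum_const, hcardgj, nsmul_eq_mul]
      ring
    rw [hXeq]
    calc ‖∑ i ∈ g (t - j), u i‖ ≤ (m:ℝ) * (2 * (Δ:ℝ)) := hgbound (t - j) (by omega)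
      _ = 2 * (m:ℝ) * (Δ:ℝ) := by ring
end

section
/- Let A ∈ ℤ^{m×n} have all entries bounded in absolute value by Δ and let b ∈ ℤ^m. The system Ax = b, x ∈ ℤ^n_{≥0} has a solution if and only if there exist an integer t ≥ 0 and a sequence of column indices i_1, …, i_t ∈ {1, …, n} such that the corresponding columns a_{i_1}, …, a_{i_t} of A satisfy a_{i_1} + ⋯ + a_{i_t} = b and, for every j ∈ {1, …, t}, the partial sum a_{i_1} + ⋯ + a_{i_j} lies in the set 𝒮 = {x ∈ ℤ^m : there exists j' ∈ {1, …, t} with ‖x − (j'/t)·b‖_∞ ≤ 2mΔ}. -/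
/-!
Write `b` as the sum of `t` columns of `A` (column `k` taken `x k` times) and subtract `b / t`
from each of them: the resulting vectors have sup-norm at most `2Δ` and sum to zero. By the
Steinitz lemma (in the Grinberg–Sevastyanov form, with constant `dim = m`) they can be ordered so
that every prefix sum has norm at most `m · 2Δ`, i.e. the `j`-th partial sum of the reordered
columns lies within `2mΔ` of `(j / t) • b`.

For the Steinitz lemma with vectors `v i` of norm at most `R` summing to zero in a space of
dimension `d`, one builds index sets `S_t ⊃ S_{t-1} ⊃ ⋯ ⊃ S_0` with `#S_k = k`, each carrying
weights `w ∈ [0,1]^{S_k}` with `∑ w i = (k - d)₊` and `∑ w i • v i = 0`. Then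
`∑_{S_k} v i = ∑ (1 - w i) • v i` has norm at most `min k d • R`. To pass from `S_{k+1}` to `S_k`,
rescale the weights to total `(k - d)₊` and take a vertex of the resulting polytope: a vertex has
at most `d + 1` fractional coordinates, since `d + 2` of them would carry an affine relation among
the `v i` along which one could move in both directions. Counting then forces a zero coordinate,
whose index is dropped.
-/

open Finset Module Matrix Filter Topology

lemma exists_affine_relation_of_finrank_succ_lt_card {K V ι : Type*} [Field K] [AddCommGroup V]
    [Module K V] [FiniteDimensional K V] (v : ι → V) {F : Finset ι} (hF : finrank K V + 1 < #F) :
    ∃ δ : ι → K, ∑ i ∈ F, δ i = 0 ∧ ∑ i ∈ F, δ i • v i = 0 ∧ ∃ i ∈ F, δ i ≠ 0 := by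
  have hdep : ¬ LinearIndepOn K (fun i => (v i, (1 : K))) (F : Set ι) := fun h => by
    have := h.fintype_card_le_finrank
    simp at this
    omega
  simp only [linearIndepOn_finset_iff, not_forall, exists_prop] at hdep
  obtain ⟨δ, hδ, i, hi, hδi⟩ := hdep
  refine ⟨δ, ?_, ?_, i, hi, hδi⟩
  · simpa [Prod.snd_sum] using congrArg Prod.snd hδ
  · simpa [Prod.fst_sum] using congrArg Prod.fst hδ

lemma eq_zero_of_mem_extremePoints_of_eventually_add_smul_mem {V : Type*} [AddCommGroup V]
    [Module ℝ V] {A : Set V} {x u : V} (hx : x ∈ A.extremePoints ℝ)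
    (hu : ∀ᶠ ε in 𝓝 (0 : ℝ), x + ε • u ∈ A) : u = 0 := by
  obtain ⟨r, hr, hball⟩ := Metric.eventually_nhds_iff.1 hu
  have hplus : x + (r / 2) • u ∈ A := hball (by simp [abs_of_pos hr, hr])
  have hminus : x - (r / 2) • u ∈ A := by
    simpa [sub_eq_add_neg] using @hball (-(r / 2)) (by simp [abs_of_pos hr, hr])
  have := hx.2 hplus hminus (mem_openSegment_add_sub x ((r / 2) • u))
  simpa [hr.ne'] using this

lemma exists_eq_zero_of_card_fractional_le_s5 {ι : Type*} {S : Finset ι} {w : ι → ℝ} {N : ℕ}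
    (hw : ∀ i ∈ S, w i ∈ Set.Icc 0 1) (hsum : ∑ i ∈ S, (1 - w i) = N) (hN : 0 < N)
    (hcard : #{i ∈ S | 0 < w i ∧ w i < 1} ≤ N) : ∃ i ∈ S, w i = 0 := by
  by_contra! hpos
  set F := {i ∈ S | 0 < w i ∧ w i < 1}
  -- with no zero coordinate, only fractional ones contribute to `hsum`, each less than `1`
  have hF : ∑ i ∈ F, (1 - w i) = N := by
    rw [sum_filter_of_ne fun i hi h1 => ?_, hsum]
    refine ⟨lt_of_le_of_ne (hw i hi).1 (hpos i hi).symm, lt_of_le_of_ne (hw i hi).2 ?_⟩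
    rintro h
    simp [h] at h1
  rcases F.eq_empty_or_nonempty with hempty | hne
  · rw [hempty, sum_empty] at hF
    exact hN.ne (by exact_mod_cast hF)
  · have hlt := sum_lt_sum_of_nonempty hne fun i hi => show 1 - w i < 1 by
      linarith [(mem_filter.1 hi).2.1]
    have : (#F : ℝ) ≤ N := by exact_mod_cast hcard
    simp only [sum_const, nsmul_eq_mul, mul_one, hF] at hlt
    linarith

section Steinitz

variable {ι E : Type*} [Fintype ι] [NormedAddCommGroup E] [NormedSpace ℝ E]

def steinitzPolytope (v : ι → E) (S : Finset ι) (c : ℝ) : Set (ι → ℝ) :=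
  {w | (∀ i, w i ∈ Set.Icc 0 1) ∧ (∀ i ∉ S, w i = 0) ∧ ∑ i, w i = c ∧ ∑ i, w i • v i = 0}

lemma isCompact_steinitzPolytope (v : ι → E) (S : Finset ι) (c : ℝ) :
    IsCompact (steinitzPolytope v S c) := by
  refine (isCompact_univ_pi fun _ => isCompact_Icc).of_isClosed_subset ?_
    fun w hw i _ => hw.1 i
  simp only [steinitzPolytope, Set.ofPred_and, Set.ofPred_forall]
  exact (isClosed_iInter fun i => isClosed_Icc.preimage (continuous_apply i)).inter <|
    (isClosed_iInter fun i => isClosed_iInter fun _ =>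
      isClosed_eq (continuous_apply i) continuous_const).inter <|
    (isClosed_eq (by fun_prop) continuous_const).inter (isClosed_eq (by fun_prop) continuous_const)

lemma steinitzPolytope_nonempty_of_le {v : ι → E} {S : Finset ι} {c c' : ℝ}
    (h : (steinitzPolytope v S c).Nonempty) (hc' : 0 ≤ c') (hc'c : c' ≤ c) :
    (steinitzPolytope v S c').Nonempty := by
  obtain ⟨w, hw01, hwS, hwc, hwv⟩ := h
  have hρ0 : 0 ≤ c' / c := div_nonneg hc' (hc'.trans hc'c)
  have hρ1 : c' / c ≤ 1 := div_le_one_of_le₀ hc'c (hc'.trans hc'c)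
  refine ⟨(c' / c) • w, fun i => ?_, fun i hi => by simp [hwS i hi], ?_, ?_⟩
  · exact ⟨mul_nonneg hρ0 (hw01 i).1, mul_le_one₀ hρ1 (hw01 i).1 (hw01 i).2⟩
  · simp only [Pi.smul_apply, smul_eq_mul, ← mul_sum, hwc]
    exact div_mul_cancel_of_imp fun hc => by linarith
  · simp only [Pi.smul_apply, smul_eq_mul, mul_smul, ← smul_sum, hwv, smul_zero]

lemma eventually_add_smul_mem_steinitzPolytope {v : ι → E} {S : Finset ι} {c : ℝ}
    {w u : ι → ℝ} (hw : w ∈ steinitzPolytope v S c) (hu : ∀ i, u i ≠ 0 → w i ∈ Set.Ioo 0 1)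
    (hu₁ : ∑ i, u i = 0) (huv : ∑ i, u i • v i = 0) :
    ∀ᶠ ε in 𝓝 (0 : ℝ), w + ε • u ∈ steinitzPolytope v S c := by
  obtain ⟨hw01, hwS, hwc, hwv⟩ := hw
  have hbox : ∀ i, ∀ᶠ ε in 𝓝 (0 : ℝ), w i + ε * u i ∈ Set.Icc 0 1 := fun i => by
    by_cases hui : u i = 0
    · exact Eventually.of_forall fun _ => by simpa [hui] using hw01 i
    · have hlim : Tendsto (fun ε : ℝ => w i + ε * u i) (𝓝 0) (𝓝 (w i)) := by
        have : Continuous fun ε : ℝ => w i + ε * u i := by fun_prop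
        simpa using this.tendsto 0
      exact (hlim.eventually (Ioo_mem_nhds (hu i hui).1 (hu i hui).2)).mono
        fun _ h => Set.Ioo_subset_Icc_self h
  filter_upwards [eventually_all.2 hbox] with ε hε
  refine ⟨hε, fun i hi => ?_, ?_, ?_⟩
  · have hui : u i = 0 := by_contra fun h => by simpa [hwS i hi] using (hu i h).1
    simp [hwS i hi, hui]
  · simp [sum_add_distrib, ← mul_sum, hu₁, hwc]
  · simp [add_smul, sum_add_distrib, mul_smul, ← smul_sum, huv, hwv]

lemma card_fractional_le_of_mem_extremePoints_s5 [FiniteDimensional ℝ E] {v : ι → E}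
    {S : Finset ι} {c : ℝ} {w : ι → ℝ} (hw : w ∈ (steinitzPolytope v S c).extremePoints ℝ) :
    #{i | 0 < w i ∧ w i < 1} ≤ finrank ℝ E + 1 := by
  classical
  by_contra! hF
  obtain ⟨δ, hδ, hδv, i₀, hi₀, hδi₀⟩ := exists_affine_relation_of_finrank_succ_lt_card v hF
  set F : Finset ι := {i | 0 < w i ∧ w i < 1}
  set u : ι → ℝ := fun i => if i ∈ F then δ i else 0
  have hu : u = 0 := by
    refine eq_zero_of_mem_extremePoints_of_eventually_add_smul_mem hw
      (eventually_add_smul_mem_steinitzPolytope hw.1 (fun i hi => ?_) ?_ ?_)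
    · by_contra hiF
      simp [u, F, Set.mem_Ioo.not.1 hiF] at hi
    · simp [u, sum_ite_mem, hδ]
    · simp [u, ite_smul, sum_ite_mem, hδv]
  simpa [u, hi₀, hδi₀] using congrFun hu i₀

lemma exists_erase_steinitzPolytope_nonempty [FiniteDimensional ℝ E] [DecidableEq ι]
    (v : ι → E) {S : Finset ι} {k : ℕ} (hS : #S = k + 1)
    (h : (steinitzPolytope v S ((k + 1 - finrank ℝ E : ℕ) : ℝ)).Nonempty) :
    ∃ i ∈ S, (steinitzPolytope v (S.erase i) ((k - finrank ℝ E : ℕ) : ℝ)).Nonempty := by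
  set d := finrank ℝ E
  have hlevel : ((k - d : ℕ) : ℝ) ≤ ((k + 1 - d : ℕ) : ℝ) := by gcongr; omega
  obtain ⟨w, hw⟩ := (isCompact_steinitzPolytope v S _).extremePoints_nonempty
    (steinitzPolytope_nonempty_of_le h (Nat.cast_nonneg _) hlevel)
  obtain ⟨hw01, hwS, hwc, hwv⟩ := hw.1
  have hsumS : ∑ i ∈ S, w i = ((k - d : ℕ) : ℝ) := by
    rw [sum_subset (subset_univ S) fun i _ hi => hwS i hi, hwc]
  have hsum : ∑ i ∈ S, (1 - w i) = ((k + 1 - (k - d) : ℕ) : ℝ) := by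
    rw [sum_sub_distrib, hsumS, sum_const, hS, Nat.cast_sub (by omega : k - d ≤ k + 1)]
    simp
  have hfrac : #{i ∈ S | 0 < w i ∧ w i < 1} ≤ d + 1 :=
    (card_le_card (filter_subset_filter _ (subset_univ S))).trans
      (card_fractional_le_of_mem_extremePoints_s5 hw)
  have hfracS : #{i ∈ S | 0 < w i ∧ w i < 1} ≤ #S := card_filter_le _ _
  obtain ⟨i, hi, hwi⟩ :=
    exists_eq_zero_of_card_fractional_le_s5 (fun i _ => hw01 i) hsum (by omega) (by omega)
  refine ⟨i, hi, w, hw01, fun j hj => ?_, hwc, hwv⟩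
  by_cases hji : j = i
  · rwa [hji]
  · exact hwS j fun hjS => hj (mem_erase.2 ⟨hji, hjS⟩)

lemma norm_sum_le_of_mem_steinitzPolytope {v : ι → E} {R : ℝ} (hR : 0 ≤ R)
    (hv : ∀ i, ‖v i‖ ≤ R) {S : Finset ι} {d : ℕ} {w : ι → ℝ}
    (hw : w ∈ steinitzPolytope v S ((#S - d : ℕ) : ℝ)) : ‖∑ i ∈ S, v i‖ ≤ d * R := by
  obtain ⟨hw01, hwS, hwc, hwv⟩ := hw
  have hsumS : ∑ i ∈ S, w i = ((#S - d : ℕ) : ℝ) := by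
    rw [sum_subset (subset_univ S) fun i _ hi => hwS i hi, hwc]
  have hsumv : ∑ i ∈ S, w i • v i = 0 := by
    rw [sum_subset (subset_univ S) fun i _ hi => by simp [hwS i hi], hwv]
  have hcard : (#S : ℝ) ≤ ((#S - d : ℕ) : ℝ) + d := by exact_mod_cast le_tsub_add
  calc ‖∑ i ∈ S, v i‖ = ‖∑ i ∈ S, (1 - w i) • v i‖ := by
        simp [sub_smul, sum_sub_distrib, hsumv]
    _ ≤ ∑ i ∈ S, (1 - w i) * R := norm_sum_le_of_le _ fun i _ => by
        rw [norm_smul, Real.norm_of_nonneg (sub_nonneg.2 (hw01 i).2)]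
        exact mul_le_mul_of_nonneg_left (hv i) (sub_nonneg.2 (hw01 i).2)
    _ = (#S - ((#S - d : ℕ) : ℝ)) * R := by rw [← sum_mul, sum_sub_distrib, hsumS]; simp
    _ ≤ d * R := by gcongr; linarith

lemma exists_list_of_steinitzPolytope_nonempty [FiniteDimensional ℝ E] {v : ι → E} {R : ℝ}
    (hR : 0 ≤ R) (hv : ∀ i, ‖v i‖ ≤ R) (S : Finset ι)
    (hS : (steinitzPolytope v S ((#S - finrank ℝ E : ℕ) : ℝ)).Nonempty) :
    ∃ L : List ι, L.Nodup ∧ (∀ i, i ∈ L ↔ i ∈ S) ∧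
      ∀ j, ‖((L.take j).map v).sum‖ ≤ finrank ℝ E * R := by
  classical
  induction hk : #S generalizing S with
  | zero =>
    rw [card_eq_zero] at hk
    exact ⟨[], List.nodup_nil, by simp [hk], fun j => by simp; positivity⟩
  | succ k ih =>
    have hbound : ‖∑ i ∈ S, v i‖ ≤ finrank ℝ E * R :=
      norm_sum_le_of_mem_steinitzPolytope hR hv hS.some_mem
    rw [hk] at hS
    obtain ⟨i, hi, hne⟩ := exists_erase_steinitzPolytope_nonempty v hk hS
    have hcard : #(S.erase i) = k := by rw [card_erase_of_mem hi, hk]; rfl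
    obtain ⟨L, hnd, hL, hpre⟩ := ih (S.erase i) (by rwa [hcard]) hcard
    have hnd' : (L ++ [i]).Nodup := hnd.append (List.nodup_singleton i) (by simp [hL])
    have hL' : ∀ j, j ∈ L ++ [i] ↔ j ∈ S := fun j => by
      by_cases hji : j = i <;> simp [hL, hji, hi]
    refine ⟨L ++ [i], hnd', hL', fun j => ?_⟩
    rcases le_or_gt j L.length with hj | hj
    · rw [List.take_append_of_le_length hj]
      exact hpre j
    · rw [List.take_of_length_le (by simpa using hj), ← List.sum_toFinset _ hnd']
      convert hbound using 3
      ext j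
      simpa [or_comm] using hL' j

theorem exists_list_norm_sum_take_le [FiniteDimensional ℝ E] (v : ι → E) {R : ℝ} (hR : 0 ≤ R)
    (hv : ∀ i, ‖v i‖ ≤ R) (hsum : ∑ i, v i = 0) :
    ∃ L : List ι, L.Nodup ∧ (∀ i, i ∈ L) ∧ ∀ j, ‖((L.take j).map v).sum‖ ≤ finrank ℝ E * R := by
  have hone : (1 : ι → ℝ) ∈ steinitzPolytope v univ (#(univ : Finset ι)) :=
    ⟨fun i => by simp, fun i hi => absurd (mem_univ i) hi, by simp, by simpa using hsum⟩
  obtain ⟨L, hnd, hL, hpre⟩ := exists_list_of_steinitzPolytope_nonempty hR hv univ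
    (steinitzPolytope_nonempty_of_le ⟨1, hone⟩ (Nat.cast_nonneg _) (by gcongr; omega))
  exact ⟨L, hnd, fun i => (hL i).2 (mem_univ i), hpre⟩

theorem exists_list_norm_sum_take_sub_le [FiniteDimensional ℝ E] (u : ι → E) {Δ : ℝ}
    (hΔ : 0 ≤ Δ) (hu : ∀ i, ‖u i‖ ≤ Δ) :
    ∃ L : List ι, L.Nodup ∧ (∀ i, i ∈ L) ∧ ∀ j ≤ L.length,
      ‖((L.take j).map u).sum - ((j : ℝ) / L.length) • ∑ i, u i‖ ≤ finrank ℝ E * (2 * Δ) := by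
  set t := Fintype.card ι
  set b := ∑ i, u i
  have hbt : ‖(t : ℝ)⁻¹ • b‖ ≤ Δ := by
    rcases eq_or_ne t 0 with ht | ht
    · simp [ht, hΔ]
    · rw [norm_smul, norm_inv, Real.norm_natCast, inv_mul_le_iff₀ (by positivity)]
      simpa using norm_sum_le_of_le univ fun i _ => hu i
  have hv : ∀ i, ‖u i - (t : ℝ)⁻¹ • b‖ ≤ 2 * Δ := fun i =>
    (norm_sub_le _ _).trans (by linarith [hu i])
  have hsum : ∑ i, (u i - (t : ℝ)⁻¹ • b) = 0 := by
    rcases eq_or_ne t 0 with ht | ht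
    · have : IsEmpty ι := Fintype.card_eq_zero_iff.1 ht
      simp
    · rw [sum_sub_distrib, sum_const, card_univ, ← Nat.cast_smul_eq_nsmul ℝ, smul_smul,
        mul_inv_cancel₀ (Nat.cast_ne_zero.2 ht), one_smul, sub_self]
  obtain ⟨L, hnd, hL, hpre⟩ := exists_list_norm_sum_take_le _ (by positivity) hv hsum
  have hlen : L.length = t := by
    classical
    rw [← List.toFinset_card_of_nodup hnd]
    exact congrArg card (eq_univ_of_forall fun i => List.mem_toFinset.2 (hL i))
  refine ⟨L, hnd, hL, fun j hj => ?_⟩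
  rw [hlen] at hj ⊢
  convert hpre j using 2
  simp only [sub_eq_add_neg, List.sum_map_add, List.map_const', List.sum_replicate,
    List.length_take, hlen, min_eq_left hj, smul_neg, ← Nat.cast_smul_eq_nsmul ℝ, smul_smul,
    div_eq_mul_inv]

end Steinitz

lemma sum_filter_lt_get_eq_sum_take {α M : Type*} [AddCommMonoid M] (L : List α) (f : α → M)
    (j : ℕ) :
    ∑ l ∈ univ.filter (fun l : Fin L.length => (l : ℕ) < j), f (L.get l)
      = ((L.take j).map f).sum := by
  rw [← List.sum_take_ofFn, List.map_take]
  conv_rhs => rw [← List.ofFn_get L, List.map_ofFn]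
  rfl

lemma sum_sigma_col_eq_mulVec {α β : Type*} [Fintype β] (A : Matrix α β ℤ) {x : β → ℤ}
    (hx : ∀ k, 0 ≤ x k) : ∑ p : Σ k, Fin (x k).toNat, (fun r => A r p.1) = A *ᵥ x := by
  ext r
  simp [Fintype.sum_sigma, mulVec, dotProduct, Int.toNat_of_nonneg (hx _), mul_comm]

lemma mulVec_card_fiber_eq_sum {α β γ : Type*} [Fintype β] [Fintype γ] [DecidableEq β]
    (A : Matrix α β ℤ) (σ : γ → β) :
    A *ᵥ (fun k => (#{l | σ l = k} : ℤ)) = ∑ l, fun r => A r (σ l) := by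
  ext r
  simp only [mulVec, dotProduct, Finset.sum_apply]
  rw [← sum_fiberwise univ σ]
  refine sum_congr rfl fun k _ => ?_
  rw [sum_congr rfl fun l hl => by rw [(mem_filter.1 hl).2], sum_const, nsmul_eq_mul, mul_comm]

/-- Structural correctness of the dynamic-programming feasibility algorithm:
`Ax = b, x ∈ ℤ^n_{≥0}` has a solution iff there is a sequence of column indices
`i_1, …, i_t` whose columns sum to `b` and all of whose partial sums lie in the set
`𝒮 = {x ∈ ℤ^m : ∃ j' ∈ {1,…,t}, ‖x − (j'/t)·b‖_∞ ≤ 2mΔ}`.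
The norm on `Fin m → ℝ` is the maximum norm. -/
theorem feasibility_iff_bounded_walk
    (m n : ℕ) (Δ : ℤ) (hΔ : 1 ≤ Δ)
    (A : Matrix (Fin m) (Fin n) ℤ)
    (hA : ∀ i j, |A i j| ≤ Δ)
    (b : Fin m → ℤ) :
    (∃ x : Fin n → ℤ, (∀ i, 0 ≤ x i) ∧ A.mulVec x = b) ↔
    (∃ (t : ℕ) (σ : Fin t → Fin n),
      (∑ l : Fin t, (fun r : Fin m => A r (σ l))) = b ∧
      ∀ j : ℕ, 1 ≤ j → j ≤ t →
        ∃ j' : ℕ, 1 ≤ j' ∧ j' ≤ t ∧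
          ‖(fun r : Fin m =>
              ((∑ l ∈ Finset.univ.filter (fun l : Fin t => (l : ℕ) < j), A r (σ l) : ℤ) : ℝ)) -
            ((j' : ℝ) / (t : ℝ)) • (fun r : Fin m => (b r : ℝ))‖
              ≤ 2 * (m : ℝ) * (Δ : ℝ)) := by
  constructor
  · rintro ⟨x, hx, rfl⟩
    have hΔ₀ : (0 : ℝ) ≤ Δ := by exact_mod_cast zero_le_one.trans hΔ
    set col : Fin n → Fin m → ℝ := fun k r => A r k
    have hcol : ∀ k, ‖col k‖ ≤ Δ := fun k => (pi_norm_le_iff_of_nonneg hΔ₀).2 fun r => by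
      simpa [col, ← Int.cast_abs] using (Int.cast_le (R := ℝ)).2 (hA r k)
    obtain ⟨L, hnd, hL, hpre⟩ := exists_list_norm_sum_take_sub_le
      (ι := Σ k, Fin (x k).toNat) (fun p => col p.1) hΔ₀ fun p => hcol p.1
    have hsum := sum_sigma_col_eq_mulVec A hx
    refine ⟨L.length, fun l => (L.get l).1, ?_, fun j hj₁ hj => ⟨j, hj₁, hj, ?_⟩⟩
    · rw [← hsum]
      exact (hnd.getBijectionOfForallMemList _ hL).2.sum_comp fun p r => A r p.1
    · have hb : (fun r => ((A *ᵥ x) r : ℝ)) = ∑ p : Σ k, Fin (x k).toNat, col p.1 := by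
        rw [← hsum]
        ext r
        simp [col, Finset.sum_apply]
      have hprefix : (fun r => ((∑ l ∈ univ.filter (fun l : Fin L.length => (l : ℕ) < j),
          A r (L.get l).1 : ℤ) : ℝ)) = ((L.take j).map fun p => col p.1).sum := by
        rw [← sum_filter_lt_get_eq_sum_take]
        ext r
        simp [col, Finset.sum_apply]
      rw [hprefix, hb]
      calc _ ≤ _ := hpre j hj
        _ = _ := by rw [Module.finrank_fin_fun]; ring
  · rintro ⟨t, σ, hσ, -⟩
    exact ⟨fun k => #{l | σ l = k}, fun k => Nat.cast_nonneg _, by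
      rw [mulVec_card_fiber_eq_sum, hσ]⟩
end

section
/- Let A ∈ ℤ^{m×n} have all entries bounded in absolute value by Δ, let b ∈ ℤ^m and c ∈ ℤ^n, and suppose there exists z ∈ ℤ^n_{≥0} with Az = b. Then the set of values {c^T x : Ax = b, x ∈ ℤ^n_{≥0}} is not bounded above if and only if there exist s ≥ 1 and column indices i_1, …, i_s ∈ {1, …, n} such that a_{i_1} + ⋯ + a_{i_s} = 0, c_{i_1} + ⋯ + c_{i_s} > 0, and every partial sum satisfies ‖a_{i_1} + ⋯ + a_{i_j}‖_∞ ≤ 2mΔ for all j ∈ {1, …, s}. -/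
/-!
A nonnegative integral `y` with `A y = 0` and `cᵀy > 0` makes the objective unbounded along
`z + k • y`. Conversely, along feasible points with strictly increasing objective, Dickson's lemma
gives two comparable ones `x ≤ x'`, and `y = x' - x` is such a ray. A cycle of columns is such a
`y` read as a multiset of columns, and the partial-sum bound is the Steinitz lemma: vectors of norm
`≤ Δ` summing to `0` in a `d`-dimensional normed space can be ordered so that all partial sums have
norm `≤ d Δ` (here `d = m` and the norm is the maximum norm).
-/

open Finset Matrix Filter Topology

section Rounding

variable {ι E : Type*} [NormedAddCommGroup E] [NormedSpace ℝ E]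
  [FiniteDimensional ℝ E]

theorem card_fractional_le_finrank_of_mem_extremePoints {S : Finset ι} {w : ι → E} {x : E}
    {μ : ι → ℝ}
    (hμ : μ ∈ Set.extremePoints ℝ (Set.Icc 0 1 ∩ {μ | ∑ i ∈ S, μ i • w i = x})) :
    #{i ∈ S | μ i ∈ Set.Ioo 0 1} ≤ Module.finrank ℝ E := by
  classical
  set F := {i ∈ S | μ i ∈ Set.Ioo 0 1}
  by_contra! hcard
  have hdep : ¬ LinearIndepOn ℝ w (F : Set ι) := fun hli => by
    have := hli.fintype_card_le_finrank
    simp only [Finset.coe_sort_coe, Fintype.card_coe] at this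
    omega
  obtain ⟨f, hf, i₀, hi₀F, hfi₀⟩ := not_linearIndepOn_finset_iff.1 hdep
  set G : ι → ℝ := fun i => if i ∈ F then f i else 0
  have hG : ∑ i ∈ S, G i • w i = 0 := by
    simp only [G, ite_smul, zero_smul]
    rw [sum_ite_mem, inter_eq_right.2 (filter_subset _ S), hf]
  -- `μ ± t • G` stays in the set for small `t`, contradicting extremality.
  set U := ⋂ i ∈ F, (fun ν : ι → ℝ => ν i) ⁻¹' Set.Ioo 0 1
  have hU : U ∈ 𝓝 μ := (isOpen_biInter_finset fun i _ =>
      isOpen_Ioo.preimage (continuous_apply i)).mem_nhds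
    (Set.mem_iInter₂.2 fun i hi => (mem_filter.1 hi).2)
  obtain ⟨ε, hε, hball⟩ := Metric.eventually_nhds_iff.1
    (((by fun_prop : Continuous fun t : ℝ => μ + t • G).tendsto' 0 μ (by simp)).eventually hU)
  have hmem : ∀ t : ℝ, |t| < ε →
      μ + t • G ∈ Set.Icc 0 1 ∩ {μ | ∑ i ∈ S, μ i • w i = x} := by
    intro t ht
    have htU := Set.mem_iInter₂.1 (hball (by simpa using ht))
    refine ⟨⟨fun i => ?_, fun i => ?_⟩, ?_⟩
    · by_cases hi : i ∈ F
      · exact (htU i hi).1.le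
      · simpa [G, hi] using hμ.1.1.1 i
    · by_cases hi : i ∈ F
      · exact (htU i hi).2.le
      · simpa [G, hi] using hμ.1.1.2 i
    · simp only [Set.mem_ofPred_eq, Pi.add_apply, Pi.smul_apply, smul_eq_mul, add_smul, mul_smul,
        sum_add_distrib, ← smul_sum, hG, smul_zero, add_zero]
      exact hμ.1.2
  have hsmall : |ε / 2| < ε := by rw [abs_of_pos (half_pos hε)]; exact half_lt_self hε
  have hseg : μ ∈ openSegment ℝ (μ + (ε / 2) • G) (μ + (-(ε / 2)) • G) :=
    ⟨1 / 2, 1 / 2, by norm_num, by norm_num, by norm_num, by module⟩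
  have hfix := ((mem_extremePoints.1 hμ).2 _ (hmem _ hsmall) _ (hmem _ (by rwa [abs_neg])) hseg).1
  have : (ε / 2) * G i₀ = 0 := by simpa using congrFun hfix i₀
  simp [G, hi₀F, hfi₀, hε.ne'] at this

theorem exists_card_fractional_le_finrank [Fintype ι] (S : Finset ι) (w : ι → E) {a : ι → ℝ}
    (ha : a ∈ Set.Icc 0 1) :
    ∃ μ ∈ Set.Icc (0 : ι → ℝ) 1, ∑ i ∈ S, μ i • w i = ∑ i ∈ S, a i • w i ∧
      #{i ∈ S | μ i ∈ Set.Ioo 0 1} ≤ Module.finrank ℝ E := by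
  have hcompact : IsCompact (Set.Icc 0 1 ∩ {μ : ι → ℝ | ∑ i ∈ S, μ i • w i = ∑ i ∈ S, a i • w i}) :=
    isCompact_Icc.inter_right (isClosed_eq (by fun_prop) continuous_const)
  obtain ⟨μ, hμ⟩ := hcompact.extremePoints_nonempty ⟨a, ha, rfl⟩
  exact ⟨μ, hμ.1.1, hμ.1.2, card_fractional_le_finrank_of_mem_extremePoints hμ⟩

end Rounding

theorem exists_mem_eq_zero_of_card_fractional_le {ι : Type*} {S : Finset ι} {μ : ι → ℝ} {N : ℕ}
    (hμ : μ ∈ Set.Icc 0 1) (hN : 0 < N) (hfrac : #{i ∈ S | μ i ∈ Set.Ioo 0 1} ≤ N)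
    (hsum : ∑ i ∈ S, μ i ≤ #S - N) : ∃ i ∈ S, μ i = 0 := by
  by_contra! hne
  set F := {i ∈ S | μ i ∈ Set.Ioo 0 1}
  have hdeficit : ∑ i ∈ S, (1 - μ i) = ∑ i ∈ F, (1 - μ i) :=
    (sum_filter_of_ne fun i hi h1 => ⟨(hμ.1 i).lt_of_ne (hne i hi).symm,
      (hμ.2 i).lt_of_ne (sub_ne_zero.1 h1).symm⟩).symm
  have hN_le : (N : ℝ) ≤ ∑ i ∈ F, (1 - μ i) := by
    rw [← hdeficit, sum_sub_distrib, sum_const, nsmul_one]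
    linarith
  rcases F.eq_empty_or_nonempty with hF | hF
  · rw [hF, sum_empty] at hN_le
    exact hN.ne' (by exact_mod_cast hN_le.antisymm N.cast_nonneg)
  · have hlt : ∑ i ∈ F, (1 - μ i) < ∑ i ∈ F, (1 : ℝ) :=
      sum_lt_sum_of_nonempty hF fun i hi => by linarith [(mem_filter.1 hi).2.1]
    rw [sum_const, nsmul_one] at hlt
    have : (#F : ℝ) ≤ N := by exact_mod_cast hfrac
    linarith

theorem norm_sum_le_sum_one_sub_mul {ι E : Type*} [SeminormedAddCommGroup E] [NormedSpace ℝ E]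
    {S : Finset ι} {v : ι → E} {a : ι → ℝ} {Δ : ℝ}
    (ha : a ∈ Set.Icc 0 1) (hv : ∀ i, ‖v i‖ ≤ Δ) (hsum : ∑ i ∈ S, a i • v i = 0) :
    ‖∑ i ∈ S, v i‖ ≤ (∑ i ∈ S, (1 - a i)) * Δ := by
  have hrewrite : ∑ i ∈ S, v i = ∑ i ∈ S, (1 - a i) • v i := by
    simp only [sub_smul, one_smul, sum_sub_distrib, hsum, sub_zero]
  calc ‖∑ i ∈ S, v i‖ ≤ ∑ i ∈ S, ‖(1 - a i) • v i‖ := hrewrite ▸ norm_sum_le _ _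
    _ ≤ ∑ i ∈ S, (1 - a i) * Δ := sum_le_sum fun i _ => by
        have hai : (0 : ℝ) ≤ 1 - a i := sub_nonneg.2 (ha.2 i)
        rw [norm_smul, Real.norm_of_nonneg hai]
        exact mul_le_mul_of_nonneg_left (hv i) hai
    _ = (∑ i ∈ S, (1 - a i)) * Δ := (sum_mul _ _ _).symm

theorem List.norm_sum_le_length_mul {F : Type*} [SeminormedAddCommGroup F] {l : List F} {Δ : ℝ}
    (h : ∀ x ∈ l, ‖x‖ ≤ Δ) : ‖l.sum‖ ≤ l.length * Δ := by
  have := (norm_multiset_sum_le (l : Multiset F)).trans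
    (Multiset.sum_le_card_nsmul _ Δ (by simpa using h))
  simpa using this

section Steinitz

variable {ι E : Type*} [NormedAddCommGroup E] [NormedSpace ℝ E] [FiniteDimensional ℝ E]
  [Fintype ι] {v : ι → E} {Δ : ℝ}

theorem exists_list_forall_norm_sum_take_le (hΔ : 0 ≤ Δ) (hv : ∀ i, ‖v i‖ ≤ Δ)
    (S : Finset ι) (a : ι → ℝ) (ha : a ∈ Set.Icc 0 1)
    (hdeficit : ∑ i ∈ S, (1 - a i) ≤ Module.finrank ℝ E) (hsum : ∑ i ∈ S, a i • v i = 0) :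
    ∃ l : List ι, (l : Multiset ι) = S.val ∧
      ∀ k, ‖((l.take k).map v).sum‖ ≤ Module.finrank ℝ E * Δ := by
  classical
  set d := Module.finrank ℝ E
  induction S using Finset.strongInduction generalizing a with | H S ih =>
  by_cases hS : #S ≤ d
  · refine ⟨S.toList, by simp, fun k => ?_⟩
    refine (List.norm_sum_le_length_mul (List.forall_mem_map.2 fun i _ => hv i)).trans ?_
    gcongr
    simpa using (min_le_right _ _).trans hS
  -- Rescale `a` to total weight `#S - 1 - d`, pass to a vertex in `E × ℝ` (at most `d + 1`
  -- fractional weights) and put an index of weight `0` last; the full sum is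
  -- `∑ i ∈ S, (1 - a i) • v i`, of norm at most `d * Δ`.
  have hS : (d : ℝ) + 1 ≤ #S := by exact_mod_cast not_le.1 hS
  have hsum_a : (#S : ℝ) - d ≤ ∑ i ∈ S, a i := by
    rw [sum_sub_distrib, sum_const, nsmul_one] at hdeficit
    linarith
  have hsum_pos : 0 < ∑ i ∈ S, a i := by linarith
  set a₀ := (((#S : ℝ) - 1 - d) / ∑ i ∈ S, a i) • a
  have ha₀ : a₀ ∈ Set.Icc 0 1 := by
    have hc : ((#S : ℝ) - 1 - d) / ∑ i ∈ S, a i ∈ Set.Icc 0 1 :=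
      ⟨div_nonneg (by linarith) (by linarith), div_le_one_of_le₀ (by linarith) (by linarith)⟩
    exact ⟨fun i => mul_nonneg hc.1 (ha.1 i), fun i => mul_le_one₀ hc.2 (ha.1 i) (ha.2 i)⟩
  have ha₀sum : ∑ i ∈ S, a₀ i • ((v i, 1) : E × ℝ) = (0, (#S : ℝ) - 1 - d) := by
    ext
    · simp [a₀, Prod.fst_sum, mul_smul, ← smul_sum, hsum]
    · simp only [a₀, Prod.snd_sum, Prod.smul_mk, Pi.smul_apply, smul_eq_mul, mul_one, ← mul_sum]
      exact div_mul_cancel₀ _ hsum_pos.ne'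
  obtain ⟨μ, hμ, hμsum, hμfrac⟩ :=
    exists_card_fractional_le_finrank S (fun i => ((v i, 1) : E × ℝ)) ha₀
  rw [ha₀sum] at hμsum
  rw [Module.finrank_prod, Module.finrank_self] at hμfrac
  have hμv : ∑ i ∈ S, μ i • v i = 0 := by simpa [Prod.fst_sum] using congrArg Prod.fst hμsum
  have hμone : ∑ i ∈ S, μ i = #S - 1 - d := by simpa [Prod.snd_sum] using congrArg Prod.snd hμsum
  obtain ⟨i₀, hi₀, hμi₀⟩ := exists_mem_eq_zero_of_card_fractional_le hμ d.succ_pos hμfrac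
    (by push_cast; linarith)
  obtain ⟨l, hl, hlk⟩ := ih (S.erase i₀) (erase_ssubset hi₀) μ hμ
    (by rw [sum_erase _ (by simp [hμi₀])]; exact hμv)
    (by rw [sum_sub_distrib, sum_const, nsmul_one, sum_erase _ hμi₀, hμone,
      card_erase_of_mem hi₀, Nat.cast_pred (card_pos.2 ⟨i₀, hi₀⟩)]; linarith)
  have hl' : ((l ++ [i₀] : List ι) : Multiset ι) = S.val := by
    rw [← Multiset.coe_add, hl, erase_val, Multiset.coe_singleton, add_comm,
      Multiset.singleton_add, Multiset.cons_erase hi₀]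
  refine ⟨l ++ [i₀], hl', fun k => ?_⟩
  by_cases hk : k ≤ l.length
  · rw [List.take_append_of_le_length hk]
    exact hlk k
  rw [List.take_of_length_le (by rw [List.length_append, List.length_singleton]; omega)]
  have hfull : ((l ++ [i₀]).map v).sum = ∑ i ∈ S, v i := by
    rw [sum_eq_multiset_sum, ← hl', Multiset.map_coe, Multiset.sum_coe]
  rw [hfull]
  exact (norm_sum_le_sum_one_sub_mul ha hv hsum).trans (mul_le_mul_of_nonneg_right hdeficit hΔ)

theorem exists_equiv_forall_norm_sum_lt_le (hΔ : 0 ≤ Δ) (hv : ∀ i, ‖v i‖ ≤ Δ)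
    (hsum : ∑ i, v i = 0) :
    ∃ (s : ℕ) (e : Fin s ≃ ι),
      ∀ k : ℕ, ‖∑ j ∈ univ.filter (fun j : Fin s => (j : ℕ) < k), v (e j)‖ ≤
        Module.finrank ℝ E * Δ := by
  classical
  set t := Fintype.card ι
  set d := Module.finrank ℝ E
  obtain ⟨a, ha, hdeficit, hasum⟩ : ∃ a : ι → ℝ, a ∈ Set.Icc 0 1 ∧
      ∑ i, (1 - a i) ≤ d ∧ ∑ i, a i • v i = 0 := by
    by_cases htd : t ≤ d
    · exact ⟨0, ⟨le_rfl, zero_le_one⟩, by simpa [t] using htd, by simp⟩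
    · have htd : (d : ℝ) < t := by exact_mod_cast not_le.1 htd
      have ht : (0 : ℝ) < t := (d.cast_nonneg).trans_lt htd
      refine ⟨fun _ => (t - d) / t, ⟨fun _ => div_nonneg (by linarith) ht.le,
        fun _ => (div_le_one ht).2 (by linarith)⟩, ?_, by simp [← smul_sum, hsum]⟩
      simp only [sum_const, card_univ, nsmul_eq_mul]
      field_simp
      linarith
  obtain ⟨l, hl, hlk⟩ := exists_list_forall_norm_sum_take_le hΔ hv univ a ha hdeficit hasum
  have hnodup : l.Nodup := by rw [← Multiset.coe_nodup, hl]; exact univ.nodup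
  have hmem : ∀ i, i ∈ l := fun i => by rw [← Multiset.mem_coe, hl]; exact mem_univ i
  refine ⟨l.length, hnodup.getEquivOfForallMemList l hmem, fun k => ?_⟩
  simp only [List.Nodup.getEquivOfForallMemList_apply]
  rw [← List.sum_take_ofFn, show List.ofFn (fun j => v (l.get j)) = l.map v from
    List.ofFn_getElem_eq_map l v, ← List.map_take]
  exact hlk k

end Steinitz

theorem Set.IsPWO.exists_le_lt_of_not_bddAbove {γ δ : Type*} [Preorder γ] [LinearOrder δ]
    [Nonempty δ] {s : Set γ} {f : γ → δ} (hs : s.IsPWO) (hf : ¬BddAbove (f '' s)) :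
    ∃ x ∈ s, ∃ y ∈ s, x ≤ y ∧ f x < f y := by
  simp only [not_bddAbove_iff, Set.exists_mem_image] at hf
  choose g hgs hg using hf
  let x : ℕ → γ := fun k => Nat.rec (g (Classical.arbitrary δ)) (fun _ y => g (f y)) k
  have hxs : ∀ k, x k ∈ s := fun k => by cases k <;> exact hgs _
  have hmono : StrictMono (f ∘ x) := strictMono_nat_of_lt_succ fun k => hg (f (x k))
  obtain ⟨k, l, hkl, hle⟩ := hs.exists_lt hxs
  exact ⟨x k, hxs k, x l, hxs l, hle, hmono hkl⟩

theorem isPWO_setOf_forall_nonneg {β : Type*} [Finite β] :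
    {x : β → ℤ | ∀ i, 0 ≤ x i}.IsPWO := by
  simpa [Set.pi, Set.mem_Ici] using
    Set.IsPWO.pi fun _ : β => (bddBelow_Ici (a := (0 : ℤ))).isWF.isPWO

section IntegerProgram

variable {α β κ R : Type*} [Fintype β]

theorem Matrix.mulVec_sum_single_one [DecidableEq β] [Fintype κ] [NonAssocSemiring R]
    (A : Matrix α β R) (σ : κ → β) : A *ᵥ ∑ l, Pi.single (σ l) 1 = ∑ l, fun r => A r (σ l) := by
  simp only [mulVec_sum, mulVec_single_one]
  rfl

theorem dotProduct_sum_single_one [DecidableEq β] [Fintype κ] [NonAssocSemiring R] (c : β → R)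
    (σ : κ → β) : c ⬝ᵥ ∑ l, Pi.single (σ l) 1 = ∑ l, c (σ l) := by
  simp only [dotProduct_sum, dotProduct_single_one]

theorem sum_sigma_single_toNat [DecidableEq β] {y : β → ℤ} (hy : ∀ i, 0 ≤ y i) :
    ∑ x : (Σ i, Fin (y i).toNat), Pi.single x.1 (1 : ℤ) = y := by
  simp only [Fintype.sum_sigma, sum_const, card_univ, Fintype.card_fin, ← Pi.single_smul,
    nsmul_one, Int.toNat_of_nonneg (hy _)]
  exact univ_sum_single y

theorem exists_sum_col_eq_zero_of_nonneg_mulVec_eq_zero [DecidableEq β] {m : ℕ}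
    (A : Matrix (Fin m) β ℤ) (c : β → ℤ) {Δ : ℤ} (hΔ : 0 ≤ Δ) (hA : ∀ i j, |A i j| ≤ Δ) {y : β → ℤ}
    (hy0 : ∀ i, 0 ≤ y i) (hAy : A *ᵥ y = 0) (hcy : 0 < c ⬝ᵥ y) :
    ∃ s : ℕ, ∃ σ : Fin s → β, ∑ l, (fun r => A r (σ l)) = 0 ∧ 0 < ∑ l, c (σ l) ∧
      ∀ j : ℕ, ‖(fun r : Fin m =>
        ((∑ l ∈ univ.filter (fun l : Fin s => (l : ℕ) < j), A r (σ l) : ℤ) : ℝ))‖ ≤ m * Δ := by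
  let τ : (Σ i, Fin (y i).toNat) → β := Sigma.fst
  have hcols : ∑ x, (fun r => A r (τ x)) = 0 := by
    rw [← mulVec_sum_single_one, sum_sigma_single_toNat hy0, hAy]
  let v : (Σ i, Fin (y i).toNat) → Fin m → ℝ := fun x r => A r (τ x)
  have hv : ∀ x, ‖v x‖ ≤ Δ := fun x => (pi_norm_le_iff_of_nonneg (by exact_mod_cast hΔ)).2
    fun r => by simpa [v, ← Int.cast_abs] using hA r (τ x)
  have hsum : ∑ x, v x = 0 := by
    funext r
    simpa [v, Finset.sum_apply] using congrArg (Int.cast : ℤ → ℝ) (congrFun hcols r)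
  obtain ⟨s, e, he⟩ := exists_equiv_forall_norm_sum_lt_le (by exact_mod_cast hΔ) hv hsum
  rw [Module.finrank_fin_fun] at he
  refine ⟨s, τ ∘ e, (e.sum_comp fun x r => A r (τ x)).trans hcols, ?_, fun j => ?_⟩
  · rwa [Function.comp_def, e.sum_comp fun x => c (τ x), ← dotProduct_sum_single_one,
      sum_sigma_single_toNat hy0]
  · have hpartial : (fun r => ((∑ l ∈ univ.filter (fun l : Fin s => (l : ℕ) < j),
        A r (τ (e l)) : ℤ) : ℝ)) = ∑ l ∈ univ.filter (fun l : Fin s => (l : ℕ) < j), v (e l) := by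
      ext r
      simp [v, Finset.sum_apply]
    rw [Function.comp_def, hpartial]
    exact he j

variable (A : Matrix α β ℤ) (b : α → ℤ) (c : β → ℤ)

theorem exists_nonneg_mulVec_eq_zero_of_not_bddAbove
    (hub : ¬BddAbove {v : ℤ | ∃ x : β → ℤ, (∀ i, 0 ≤ x i) ∧ A *ᵥ x = b ∧ v = c ⬝ᵥ x}) :
    ∃ y : β → ℤ, (∀ i, 0 ≤ y i) ∧ A *ᵥ y = 0 ∧ 0 < c ⬝ᵥ y := by
  set X := {x : β → ℤ | (∀ i, 0 ≤ x i) ∧ A *ᵥ x = b}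
  have hX : X.IsPWO := isPWO_setOf_forall_nonneg.mono fun x hx => hx.1
  have himage : {v : ℤ | ∃ x : β → ℤ, (∀ i, 0 ≤ x i) ∧ A *ᵥ x = b ∧ v = c ⬝ᵥ x} =
      (c ⬝ᵥ ·) '' X := by
    ext v
    simp [X, eq_comm, and_assoc]
  rw [himage] at hub
  obtain ⟨x, hx, x', hx', hle, hlt⟩ := hX.exists_le_lt_of_not_bddAbove hub
  refine ⟨x' - x, fun i => sub_nonneg.2 (hle i), ?_, ?_⟩
  · rw [mulVec_sub, hx.2, hx'.2, sub_self]
  · rw [dotProduct_sub]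
    exact sub_pos.2 hlt

theorem not_bddAbove_of_nonneg_mulVec_eq_zero {z y : β → ℤ} (hz0 : ∀ i, 0 ≤ z i)
    (hz : A *ᵥ z = b) (hy0 : ∀ i, 0 ≤ y i) (hy : A *ᵥ y = 0) (hcy : 0 < c ⬝ᵥ y) :
    ¬BddAbove {v : ℤ | ∃ x : β → ℤ, (∀ i, 0 ≤ x i) ∧ A *ᵥ x = b ∧ v = c ⬝ᵥ x} := by
  rw [not_bddAbove_iff]
  intro u
  obtain ⟨k, hk⟩ := exists_lt_nsmul hcy (u - c ⬝ᵥ z)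
  refine ⟨c ⬝ᵥ (z + k • y), ⟨z + k • y, fun i => ?_, ?_, rfl⟩, ?_⟩
  · simpa using add_nonneg (hz0 i) (nsmul_nonneg (hy0 i) k)
  · rw [mulVec_add, mulVec_smul, hz, hy, smul_zero, add_zero]
  · rw [dotProduct_add, dotProduct_smul]
    linarith

theorem exists_nonneg_mulVec_eq_zero_of_sum_col_eq_zero [DecidableEq β] {s : ℕ}
    {σ : Fin s → β} (hcols : ∑ l, (fun r => A r (σ l)) = 0) (hc : 0 < ∑ l, c (σ l)) :
    ∃ y : β → ℤ, (∀ i, 0 ≤ y i) ∧ A *ᵥ y = 0 ∧ 0 < c ⬝ᵥ y :=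
  ⟨∑ l, Pi.single (σ l) 1,
    (sum_nonneg fun l _ => Pi.single_nonneg.2 zero_le_one : (0 : β → ℤ) ≤ ∑ l, Pi.single (σ l) 1),
    by rw [mulVec_sum_single_one, hcols], by rwa [dotProduct_sum_single_one]⟩

end IntegerProgram

/-- For a feasible integer program `max{cᵀx : Ax = b, x ∈ ℤ^n_{≥0}}`, the objective is
unbounded above iff there is a sequence of column indices `i_1, …, i_s` (`s ≥ 1`) whose
columns sum to `0`, whose `c`-weights sum to a positive number, and all of whose partial
sums have maximum norm at most `2mΔ`. -/
theorem unbounded_iff_positive_cycle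
    (m n : ℕ) (Δ : ℤ) (hΔ : 1 ≤ Δ)
    (A : Matrix (Fin m) (Fin n) ℤ)
    (hA : ∀ i j, |A i j| ≤ Δ)
    (b : Fin m → ℤ) (c : Fin n → ℤ)
    (hfeas : ∃ z : Fin n → ℤ, (∀ i, 0 ≤ z i) ∧ A.mulVec z = b) :
    (¬ BddAbove {v : ℤ | ∃ x : Fin n → ℤ,
        (∀ i, 0 ≤ x i) ∧ A.mulVec x = b ∧ v = c ⬝ᵥ x}) ↔
    (∃ s : ℕ, 1 ≤ s ∧ ∃ σ : Fin s → Fin n,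
      (∑ l : Fin s, (fun r : Fin m => A r (σ l))) = 0 ∧
      0 < ∑ l : Fin s, c (σ l) ∧
      ∀ j : ℕ, 1 ≤ j → j ≤ s →
        ‖(fun r : Fin m =>
            ((∑ l ∈ Finset.univ.filter (fun l : Fin s => (l : ℕ) < j), A r (σ l) : ℤ) : ℝ))‖
          ≤ 2 * (m : ℝ) * (Δ : ℝ)) := by
  obtain ⟨z, hz0, hzb⟩ := hfeas
  constructor
  · intro hub
    obtain ⟨y, hy0, hAy, hcy⟩ := exists_nonneg_mulVec_eq_zero_of_not_bddAbove A b c hub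
    obtain ⟨s, σ, hcols, hc, hpartial⟩ :=
      exists_sum_col_eq_zero_of_nonneg_mulVec_eq_zero A c (zero_le_one.trans hΔ) hA hy0 hAy hcy
    have hmΔ : (0 : ℝ) ≤ m * Δ :=
      mul_nonneg m.cast_nonneg (by exact_mod_cast zero_le_one.trans hΔ)
    exact ⟨s, Nat.one_le_iff_ne_zero.2 (by rintro rfl; simp at hc), σ, hcols, hc,
      fun j _ _ => (hpartial j).trans (by linarith)⟩
  · rintro ⟨s, -, σ, hcols, hc, -⟩
    obtain ⟨y, hy0, hAy, hcy⟩ := exists_nonneg_mulVec_eq_zero_of_sum_col_eq_zero A c hcols hc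
    exact not_bddAbove_of_nonneg_mulVec_eq_zero A b c hz0 hzb hy0 hAy hcy
end

section
/- Let A ∈ ℤ^{m×n} have all entries bounded in absolute value by Δ, let b ∈ ℤ^m, c ∈ ℤ^n and u ∈ ℤ^n_{≥0}. Let P = {x ∈ ℝ^n : Ax = b, 0 ≤ x ≤ u}. Suppose P contains an integer point, and let x* be an extreme point of P with c^T x* ≥ c^T x for all x ∈ P. Then there exists z* ∈ P ∩ ℤ^n with c^T z* ≥ c^T z for all z ∈ P ∩ ℤ^n and ‖z* − x*‖_1 ≤ m · (2mΔ + 1)^m. -/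
set_option linter.unusedSectionVars false
set_option maxHeartbeats 1000000

open Finset

section Helpers

lemma extreme_perturb {E : Type*} [AddCommGroup E] [Module ℝ E] {s : Set E} {x : E}
    (hx : x ∈ Set.extremePoints ℝ s) {d : E} (h1 : x + d ∈ s) (h2 : x - d ∈ s) : d = 0 := by
  have hseg : x ∈ openSegment ℝ (x + d) (x - d) := by
    refine ⟨1/2, 1/2, by norm_num, by norm_num, by norm_num, ?_⟩
    module
  have h := hx.2 h1 h2 hseg
  have : x + d = x + 0 := by simpa using h
  exact add_left_cancel this

lemma abs_list_sum_le {C : ℝ} : ∀ (L : List ℝ), (∀ x ∈ L, |x| ≤ C) → |L.sum| ≤ L.length * C := by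
  intro L
  induction L with
  | nil => simp
  | cons a L ih =>
    intro h
    simp only [List.sum_cons, List.length_cons]
    push_cast
    calc |a + L.sum| ≤ |a| + |L.sum| := abs_add_le _ _
    _ ≤ C + L.length * C := by
        gcongr
        · exact h a (by simp)
        · exact ih (fun x hx => h x (List.mem_cons_of_mem _ hx))
    _ = ((L.length : ℝ) + 1) * C := by ring
  
lemma exists_zero_coord {ι : Type*} [DecidableEq ι] (S : Finset ι) (m : ℕ) (w : ι → ℝ)
    (h01 : ∀ i ∈ S, 0 ≤ w i ∧ w i ≤ 1)
    (hsum : ∑ i ∈ S, w i = (S.card : ℝ) - 1 - m)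
    (hfrac : (S.filter (fun i => 0 < w i ∧ w i < 1)).card ≤ m + 1) :
    ∃ i ∈ S, w i = 0 := by
  by_contra hno
  push_neg at hno
  have hpos : ∀ i ∈ S, 0 < w i := fun i hi => lt_of_le_of_ne (h01 i hi).1 (Ne.symm (hno i hi))
  classical
  set F := S.filter (fun i => w i < 1) with hF
  have hFsub : F ⊆ S := filter_subset _ _
  have hcards : (S.filter (fun i => w i < 1)).card + (S.filter (fun i => ¬ (w i < 1))).card = S.card :=
    Finset.card_filter_add_card_filter_not _
  have hones : ∀ i ∈ S.filter (fun i => ¬ (w i < 1)), w i = 1 := by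
    intro i hi
    rw [mem_filter] at hi
    exact le_antisymm (h01 i hi.1).2 (not_lt.mp hi.2)
  have hsplit : ∑ i ∈ S, w i = ∑ i ∈ F, w i + (S.filter (fun i => ¬ (w i < 1))).card := by
    rw [← Finset.sum_filter_add_sum_filter_not S (fun i => w i < 1)]
    congr 1
    rw [Finset.sum_congr rfl hones]
    simp
  have hFle : F.card ≤ m + 1 := by
    refine le_trans (Finset.card_le_card ?_) hfrac
    intro i hi
    rw [hF, mem_filter] at hi
    rw [mem_filter]
    exact ⟨hi.1, hpos i hi.1, hi.2⟩
  have hsF : ∑ i ∈ F, w i = (F.card : ℝ) - 1 - m := by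
    have h1 : ((S.filter (fun i => ¬ (w i < 1))).card : ℝ) = (S.card : ℝ) - F.card := by
      have := hcards
      push_cast [← this]
      ring
    rw [hsplit, h1] at hsum
    linarith
  rcases F.eq_empty_or_nonempty with he | hne
  · rw [he] at hsF; simp at hsF; linarith
  · have hgt : 0 < ∑ i ∈ F, w i :=
      Finset.sum_pos (fun i hi => hpos i (hFsub hi)) hne
    have : (F.card : ℝ) ≤ m + 1 := by exact_mod_cast hFle
    linarith

end Helpers

section Steinitz

variable {ι : Type*} [DecidableEq ι] [Fintype ι] {m : ℕ}

/-- The auxiliary polytope in the Steinitz argument. -/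
def Qset (v : ι → Fin m → ℝ) (S : Finset ι) (r : ℝ) : Set (ι → ℝ) :=
  {w | (∀ i, i ∉ S → w i = 0) ∧ (∀ i ∈ S, 0 ≤ w i ∧ w i ≤ 1) ∧
    (∑ i ∈ S, w i = r) ∧ (∀ j : Fin m, ∑ i ∈ S, w i * v i j = 0)}

lemma Qset_convex (v : ι → Fin m → ℝ) (S : Finset ι) (r : ℝ) : Convex ℝ (Qset v S r) := by
  rintro x ⟨hx0, hx1, hx2, hx3⟩ y ⟨hy0, hy1, hy2, hy3⟩ a b ha hb hab
  simp only [Qset, Set.mem_setOf_eq, Pi.add_apply, Pi.smul_apply, smul_eq_mul]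
  refine ⟨?_, ?_, ?_, ?_⟩
  · intro i hi
    simp [hx0 i hi, hy0 i hi]
  · intro i hi
    have h1 := hx1 i hi; have h2 := hy1 i hi
    constructor
    · exact add_nonneg (mul_nonneg ha h1.1) (mul_nonneg hb h2.1)
    · have : a * x i + b * y i ≤ a * 1 + b * 1 := by
        gcongr
        exacts [h1.2, h2.2]
      simpa [hab] using this
  · rw [Finset.sum_add_distrib, ← Finset.mul_sum, ← Finset.mul_sum, hx2, hy2, ← add_mul, hab,
      one_mul]
  · intro j
    have : ∑ i ∈ S, (a * x i + b * y i) * v i j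
        = a * ∑ i ∈ S, x i * v i j + b * ∑ i ∈ S, y i * v i j := by
      rw [Finset.mul_sum, Finset.mul_sum, ← Finset.sum_add_distrib]
      exact Finset.sum_congr rfl fun i _ => by ring
    simp [this, hx3 j, hy3 j]

lemma Qset_isCompact (v : ι → Fin m → ℝ) (S : Finset ι) (r : ℝ) : IsCompact (Qset v S r) := by
  apply Metric.isCompact_of_isClosed_isBounded
  · have : Qset v S r =
      (⋂ i, ⋂ (_ : i ∉ S), {w : ι → ℝ | w i = 0}) ∩
      ((⋂ i, ⋂ (_ : i ∈ S), ({w : ι → ℝ | 0 ≤ w i} ∩ {w : ι → ℝ | w i ≤ 1})) ∩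
      (({w : ι → ℝ | ∑ i ∈ S, w i = r}) ∩ (⋂ j : Fin m, {w : ι → ℝ | ∑ i ∈ S, w i * v i j = 0}))) := by
      ext w
      simp only [Qset, Set.mem_inter_iff, Set.mem_iInter, Set.mem_setOf_eq]
    rw [this]
    refine IsClosed.inter ?_ (IsClosed.inter ?_ (IsClosed.inter ?_ ?_))
    · exact isClosed_iInter fun i => isClosed_iInter fun _ =>
        isClosed_eq (continuous_apply i) continuous_const
    · exact isClosed_iInter fun i => isClosed_iInter fun _ =>
        IsClosed.inter (isClosed_le continuous_const (continuous_apply i))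
          (isClosed_le (continuous_apply i) continuous_const)
    · exact isClosed_eq (continuous_finset_sum _ fun i _ => continuous_apply i) continuous_const
    · exact isClosed_iInter fun j => isClosed_eq
        (continuous_finset_sum _ fun i _ => (continuous_apply i).mul continuous_const)
        continuous_const
  · apply Bornology.IsBounded.subset (Metric.isBounded_closedBall (x := (0 : ι → ℝ)) (r := 1))
    rintro w ⟨hw0, hw1, -, -⟩
    rw [Metric.mem_closedBall, dist_zero_right]
    refine pi_norm_le_iff_of_nonneg zero_le_one |>.mpr fun i => ?_
    by_cases hi : i ∈ S
    · rw [Real.norm_eq_abs, abs_le]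
      exact ⟨by linarith [(hw1 i hi).1], (hw1 i hi).2⟩
    · simp [hw0 i hi]

end Steinitz

section SteinitzB

variable {ι : Type*} [DecidableEq ι] [Fintype ι] {m : ℕ}

lemma Qset_extreme_frac (v : ι → Fin m → ℝ) (S : Finset ι) (r : ℝ) (w : ι → ℝ)
    (hw : w ∈ Set.extremePoints ℝ (Qset v S r)) :
    (S.filter (fun i => 0 < w i ∧ w i < 1)).card ≤ m + 1 := by
  by_contra hcard
  push_neg at hcard
  set F := S.filter (fun i => 0 < w i ∧ w i < 1) with hFdef
  have hFsub : F ⊆ S := Finset.filter_subset _ _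
  have hrank : Module.finrank ℝ (ℝ × (Fin m → ℝ)) < Fintype.card F := by
    rw [Module.finrank_prod, Module.finrank_self, Module.finrank_pi, Fintype.card_coe, Fintype.card_fin]
    omega
  have hnli : ¬ LinearIndependent ℝ (fun i : F => (((1:ℝ), fun j => v i j) : ℝ × (Fin m → ℝ))) := by
    intro hli
    exact absurd hli.fintype_card_le_finrank (not_le.mpr hrank)
  rw [Fintype.not_linearIndependent_iff] at hnli
  obtain ⟨g, hg, i₀, hgi₀⟩ := hnli
  classical
  set d : ι → ℝ := fun i => if h : i ∈ F then g ⟨i, h⟩ else 0 with hddef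
  have hd0 : ∀ i, i ∉ F → d i = 0 := by
    intro i hi; simp [hddef, hi]
  have hdF : ∀ (i : ι) (h : i ∈ F), d i = g ⟨i, h⟩ := by
    intro i h; simp [hddef, h]
  -- component equations
  have hg1 : ∑ i : F, g i = 0 := by
    have h := congrArg Prod.fst hg
    rw [Prod.fst_sum] at h
    simpa using h
  have hg2 : ∀ j : Fin m, ∑ i : F, g i * v i j = 0 := by
    intro j
    have h := congrArg Prod.snd hg
    rw [Prod.snd_sum] at h
    have h2 := congrFun h j
    simpa [Finset.sum_apply] using h2
  have hsum_d : ∀ f : ι → ℝ, ∑ i ∈ S, d i * f i = ∑ i : F, g i * f i := by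
    intro f
    rw [← Finset.sum_subset hFsub (fun i _ hi => by rw [hd0 i hi, zero_mul])]
    rw [← Finset.sum_attach F (fun i => d i * f i), Finset.attach_eq_univ]
    exact Finset.sum_congr rfl fun i _ => by rw [hdF i i.2]
  have hsum_d' : ∑ i ∈ S, d i = 0 := by
    have h := hsum_d (fun _ => 1)
    simp only [mul_one] at h
    rw [h, hg1]
  have hFne : F.Nonempty := Finset.card_pos.mp (by omega)
  set ε : ℝ := F.inf' hFne (fun i => min (w i) (1 - w i) / (|d i| + 1)) with hεdef
  have hwF : ∀ i ∈ F, 0 < w i ∧ w i < 1 := fun i hi => (Finset.mem_filter.mp hi).2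
  have hε : 0 < ε := by
    rw [hεdef, Finset.lt_inf'_iff]
    intro i hi
    have h := hwF i hi
    have : 0 < |d i| + 1 := by positivity
    apply div_pos _ this
    exact lt_min h.1 (by linarith [h.2])
  have hkey : ∀ i ∈ F, ε * |d i| ≤ min (w i) (1 - w i) := by
    intro i hi
    have h1 : ε ≤ min (w i) (1 - w i) / (|d i| + 1) := Finset.inf'_le _ hi
    have h2 : (0:ℝ) < |d i| + 1 := by positivity
    have h3 : 0 ≤ min (w i) (1 - w i) := by
      have h := hwF i hi
      exact le_min h.1.le (by linarith [h.2])
    calc ε * |d i| ≤ (min (w i) (1 - w i) / (|d i| + 1)) * |d i| := by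
          apply mul_le_mul_of_nonneg_right h1 (abs_nonneg _)
    _ ≤ (min (w i) (1 - w i) / (|d i| + 1)) * (|d i| + 1) := by
          apply mul_le_mul_of_nonneg_left (by linarith) (by positivity)
    _ = min (w i) (1 - w i) := by field_simp
  obtain ⟨hq0, hq1, hq2, hq3⟩ := hw.1
  have hmem : ∀ (σ : ℝ), |σ| = 1 → w + σ • (ε • d) ∈ Qset v S r := by
    intro σ hσ
    refine ⟨?_, ?_, ?_, ?_⟩
    · intro i hi
      have : d i = 0 := hd0 i (fun hiF => hi (hFsub hiF))
      simp [this, hq0 i hi]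
    · intro i hi
      by_cases hiF : i ∈ F
      · have hb := hkey i hiF
        have habs : |σ * (ε * d i)| ≤ min (w i) (1 - w i) := by
          rw [abs_mul, hσ, one_mul, abs_mul, abs_of_pos hε]
          exact hb
        have h1 := abs_le.mp habs
        have := hwF i hiF
        constructor
        · have : -(w i) ≤ -(min (w i) (1 - w i)) := by
            simp only [neg_le_neg_iff]
            exact min_le_left _ _
          simp only [Pi.add_apply, Pi.smul_apply, smul_eq_mul]
          have hmin := min_le_left (w i) (1 - w i)
          nlinarith [h1.1, h1.2]
        · simp only [Pi.add_apply, Pi.smul_apply, smul_eq_mul]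
          have hmin := min_le_right (w i) (1 - w i)
          nlinarith [h1.1, h1.2]
      · have : d i = 0 := hd0 i hiF
        simp only [Pi.add_apply, Pi.smul_apply, smul_eq_mul, this, mul_zero, add_zero]
        exact hq1 i hi
    · simp only [Pi.add_apply, Pi.smul_apply, smul_eq_mul]
      rw [Finset.sum_add_distrib, hq2, ← Finset.mul_sum, ← Finset.mul_sum, hsum_d']
      ring
    · intro j
      simp only [Pi.add_apply, Pi.smul_apply, smul_eq_mul]
      have expand : ∑ i ∈ S, (w i + σ * (ε * d i)) * v i j
          = ∑ i ∈ S, w i * v i j + σ * ε * ∑ i ∈ S, d i * v i j := by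
        rw [Finset.mul_sum, ← Finset.sum_add_distrib]
        exact Finset.sum_congr rfl fun i _ => by ring
      rw [expand, hq3 j, hsum_d (fun i => v i j), hg2 j]
      ring
  have h1 : w + ε • d ∈ Qset v S r := by
    have := hmem 1 (by norm_num)
    simpa using this
  have h2 : w - ε • d ∈ Qset v S r := by
    have := hmem (-1) (by norm_num)
    simpa [sub_eq_add_neg] using this
  have hz : ε • d = 0 := extreme_perturb hw h1 h2
  have : d = 0 := by
    rcases smul_eq_zero.mp hz with h | h
    · exact absurd h (ne_of_gt hε)
    · exact h
  apply hgi₀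
  have := congrFun this i₀
  rwa [hdF i₀ i₀.2] at this

end SteinitzB

section SteinitzMain

variable {ι : Type*} [DecidableEq ι] [Fintype ι] {m : ℕ}

lemma steinitz_aux (C : ℝ) (hC : 0 ≤ C) (v : ι → Fin m → ℝ) :
    ∀ (N : ℕ) (S : Finset ι), S.card = N →
    (∀ i ∈ S, ∀ j, |v i j| ≤ C) →
    (S.card ≤ m ∨ ∃ z : ι → ℝ, (∀ i ∈ S, 0 ≤ z i ∧ z i ≤ 1) ∧
        (∑ i ∈ S, z i = (S.card : ℝ) - m) ∧
        (∀ j : Fin m, ∑ i ∈ S, z i * v i j = 0)) →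
    ∃ l : List ι, l.Nodup ∧ l.toFinset = S ∧
      ∀ (k : ℕ) (j : Fin m), |(((l.take k).map (fun i => v i j)).sum)| ≤ m * C := by
  intro N
  induction N using Nat.strong_induction_on with
  | _ N ih =>
  intro S hcard hv hz
  by_cases hsmall : S.card ≤ m
  · refine ⟨S.toList, S.nodup_toList, S.toList_toFinset, ?_⟩
    intro k j
    have hmem : ∀ x ∈ (S.toList.take k).map (fun i => v i j), |x| ≤ C := by
      intro x hx
      obtain ⟨i, hi, rfl⟩ := List.mem_map.mp hx
      have hiS : i ∈ S := by
        have h2 : i ∈ S.toList := List.mem_of_mem_take hi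
        rwa [Finset.mem_toList] at h2
      exact hv i hiS j
    calc |((S.toList.take k).map (fun i => v i j)).sum|
        ≤ (((S.toList.take k).map (fun i => v i j)).length : ℝ) * C := abs_list_sum_le _ hmem
    _ ≤ (m : ℝ) * C := by
        apply mul_le_mul_of_nonneg_right _ hC
        have : ((S.toList.take k).map (fun i => v i j)).length ≤ m := by
          rw [List.length_map, List.length_take]
          have : S.toList.length = S.card := Finset.length_toList S
          omega
        exact_mod_cast this
  · push_neg at hsmall
    obtain ⟨z, hz1, hz2, hz3⟩ := hz.resolve_left (by omega)
    have hk : m + 1 ≤ S.card := hsmall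
    have hkm : (0:ℝ) < (S.card : ℝ) - m := by
      have : (m:ℝ) + 1 ≤ (S.card : ℝ) := by exact_mod_cast hk
      linarith
    set lam : ℝ := ((S.card:ℝ) - 1 - m)/((S.card:ℝ) - m) with hlamdef
    have hlam0 : 0 ≤ lam := by
      apply div_nonneg _ hkm.le
      have : (m:ℝ) + 1 ≤ (S.card : ℝ) := by exact_mod_cast hk
      linarith
    have hlam1 : lam ≤ 1 := by
      rw [hlamdef, div_le_one hkm]
      linarith
    set z' : ι → ℝ := fun i => if i ∈ S then lam * z i else 0 with hz'def
    have hz' : z' ∈ Qset v S ((S.card:ℝ) - 1 - m) := by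
      refine ⟨?_, ?_, ?_, ?_⟩
      · intro i hi; simp [hz'def, hi]
      · intro i hi
        simp only [hz'def, if_pos hi]
        constructor
        · exact mul_nonneg hlam0 (hz1 i hi).1
        · calc lam * z i ≤ 1 * 1 := mul_le_mul hlam1 (hz1 i hi).2 (hz1 i hi).1 zero_le_one
          _ = 1 := by ring
      · have : ∑ i ∈ S, z' i = lam * ∑ i ∈ S, z i := by
          rw [Finset.mul_sum]
          exact Finset.sum_congr rfl fun i hi => by simp [hz'def, if_pos hi]
        rw [this, hz2, hlamdef, div_mul_cancel₀ _ (ne_of_gt hkm)]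
      · intro j
        have : ∑ i ∈ S, z' i * v i j = lam * ∑ i ∈ S, z i * v i j := by
          rw [Finset.mul_sum]
          exact Finset.sum_congr rfl fun i hi => by simp [hz'def, if_pos hi]; ring
        rw [this, hz3 j, mul_zero]
    obtain ⟨w, hw⟩ := (Qset_isCompact v S ((S.card:ℝ) - 1 - m)).extremePoints_nonempty ⟨z', hz'⟩
    obtain ⟨hw0, hw1, hw2, hw3⟩ := hw.1
    have hfrac := Qset_extreme_frac v S _ w hw
    obtain ⟨i₀, hi₀S, hi₀⟩ := exists_zero_coord S m w hw1 hw2 hfrac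
    set S' := S.erase i₀ with hS'def
    have hcard' : S'.card = N - 1 := by
      rw [hS'def, Finset.card_erase_of_mem hi₀S, hcard]
    have hcardS' : (S'.card : ℝ) = (S.card : ℝ) - 1 := by
      rw [hS'def, Finset.card_erase_of_mem hi₀S]
      have : 1 ≤ S.card := by omega
      push_cast [Nat.cast_sub this]
      ring
    have hrec := ih (N - 1) (by omega) S' hcard'
      (fun i hi j => hv i (Finset.erase_subset _ _ hi) j)
      (Or.inr ⟨w, fun i hi => hw1 i (Finset.erase_subset _ _ hi), ?_, ?_⟩)
    rotate_left
    · rw [hcardS']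
      have : ∑ i ∈ S', w i = ∑ i ∈ S, w i - w i₀ := by
        rw [hS'def, ← Finset.sum_erase_add S w hi₀S]; ring
      rw [this, hw2, hi₀]; ring
    · intro j
      have : ∑ i ∈ S', w i * v i j = ∑ i ∈ S, w i * v i j - w i₀ * v i₀ j := by
        rw [hS'def, ← Finset.sum_erase_add S (fun i => w i * v i j) hi₀S]; ring
      rw [this, hw3 j, hi₀]; ring
    obtain ⟨l', hnd', htf', hpre'⟩ := hrec
    have hi₀l' : i₀ ∉ l' := by
      intro hmem
      have : i₀ ∈ S' := by rw [← htf']; exact List.mem_toFinset.mpr hmem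
      exact Finset.notMem_erase i₀ S this
    refine ⟨l' ++ [i₀], ?_, ?_, ?_⟩
    · rw [List.nodup_append]
      exact ⟨hnd', List.nodup_singleton i₀, by simp [hi₀l']; intro a ha h; exact hi₀l' (h ▸ ha)⟩
    · rw [List.toFinset_append, htf', hS'def]
      have h2 : S.erase i₀ ∪ ({i₀} : Finset ι) = insert i₀ (S.erase i₀) := by
        ext a; simp [or_comm]
      simp only [List.toFinset_cons, List.toFinset_nil, LawfulSingleton.insert_empty_eq]
      rw [h2, Finset.insert_erase hi₀S]
    · intro k j
      by_cases hkl : k ≤ l'.length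
      · rw [List.take_append_of_le_length hkl]
        exact hpre' k j
      · push_neg at hkl
        have htake : (l' ++ [i₀]).take k = l' ++ [i₀] := by
          apply List.take_of_length_le
          simp; omega
        rw [htake]
        have hsum_eq : ((l' ++ [i₀]).map (fun i => v i j)).sum = ∑ i ∈ S, v i j := by
          rw [List.map_append, List.sum_append]
          simp only [List.map_cons, List.map_nil, List.sum_cons, List.sum_nil, add_zero]
          rw [← List.sum_toFinset _ hnd', htf', hS'def]
          exact Finset.sum_erase_add S (fun i => v i j) hi₀S
        rw [hsum_eq]
        have h1 : ∑ i ∈ S, v i j = ∑ i ∈ S, (1 - z i) * v i j := by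
          have : ∑ i ∈ S, (1 - z i) * v i j = ∑ i ∈ S, v i j - ∑ i ∈ S, z i * v i j := by
            rw [← Finset.sum_sub_distrib]
            exact Finset.sum_congr rfl fun i _ => by ring
          rw [this, hz3 j, sub_zero]
        rw [h1]
        calc |∑ i ∈ S, (1 - z i) * v i j| ≤ ∑ i ∈ S, |(1 - z i) * v i j| :=
              Finset.abs_sum_le_sum_abs _ _
        _ ≤ ∑ i ∈ S, (1 - z i) * C := by
            apply Finset.sum_le_sum
            intro i hi
            rw [abs_mul, abs_of_nonneg (by linarith [(hz1 i hi).2])]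
            exact mul_le_mul_of_nonneg_left (hv i hi j) (by linarith [(hz1 i hi).2])
        _ = ((S.card : ℝ) - ((S.card : ℝ) - m)) * C := by
            rw [← Finset.sum_mul, Finset.sum_sub_distrib, hz2, Finset.sum_const, nsmul_eq_mul,
              mul_one]
        _ = (m:ℝ) * C := by ring

lemma steinitz (C : ℝ) (hC : 0 ≤ C) (v : ι → Fin m → ℝ)
    (hv : ∀ i, ∀ j, |v i j| ≤ C) (hsum : ∀ j : Fin m, ∑ i, v i j = 0) :
    ∃ l : List ι, l.Nodup ∧ l.toFinset = Finset.univ ∧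
      ∀ (k : ℕ) (j : Fin m), |(((l.take k).map (fun i => v i j)).sum)| ≤ m * C := by
  apply steinitz_aux C hC v (Finset.univ.card) Finset.univ rfl (fun i _ j => hv i j)
  by_cases hcard : Finset.univ.card (α := ι) ≤ m
  · exact Or.inl hcard
  · push_neg at hcard
    have hpos : (0:ℝ) < (Finset.univ.card (α := ι) : ℝ) := by
      have : 0 < Finset.univ.card (α := ι) := by omega
      exact_mod_cast this
    refine Or.inr ⟨fun _ => ((Finset.univ.card (α := ι) : ℝ) - m) / (Finset.univ.card (α := ι)), ?_, ?_, ?_⟩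
    · intro i _
      constructor
      · apply div_nonneg _ hpos.le
        have : (m:ℝ) < (Finset.univ.card (α := ι) : ℝ) := by exact_mod_cast hcard
        linarith
      · rw [div_le_one hpos]
        have : (0:ℝ) ≤ m := Nat.cast_nonneg m
        linarith
    · rw [Finset.sum_const, nsmul_eq_mul, mul_div_cancel₀ _ (ne_of_gt hpos)]
    · intro j
      simp only []
      rw [← Finset.mul_sum, hsum j, mul_zero]

end SteinitzMain

section Infra

lemma card_filter_fin_lt (M K : ℕ) (h : K ≤ M) :
    ((Finset.univ : Finset (Fin M)).filter (fun j : Fin M => (j : ℕ) < K)).card = K := by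
  have key : ((Finset.univ : Finset (Fin M)).filter (fun j : Fin M => (j : ℕ) < K)).card
      = (Finset.univ : Finset (Fin K)).card := by
    apply Finset.card_bij (fun (a : Fin M) ha => (⟨(a : ℕ), (Finset.mem_filter.mp ha).2⟩ : Fin K))
    · intro a _; exact Finset.mem_univ _
    · intro a ha b hb hab
      simp only [Fin.mk.injEq] at hab
      exact Fin.ext hab
    · intro b _
      exact ⟨⟨(b : ℕ), lt_of_lt_of_le b.2 h⟩, Finset.mem_filter.mpr ⟨Finset.mem_univ _, b.2⟩, rfl⟩
  simpa using key

lemma card_sigma_fiber {n : ℕ} (mult : Fin n → ℕ) (q : ∀ i : Fin n, Fin (mult i) → Prop)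
    [∀ i, DecidablePred (q i)] (i : Fin n) :
    ((Finset.univ : Finset ((i : Fin n) × Fin (mult i))).filter
        (fun s => s.1 = i ∧ q s.1 s.2)).card
      = ((Finset.univ : Finset (Fin (mult i))).filter (fun j => q i j)).card := by
  symm
  apply Finset.card_bij (fun (j : Fin (mult i)) _ => (⟨i, j⟩ : (i : Fin n) × Fin (mult i)))
  · intro j hj
    refine Finset.mem_filter.mpr ⟨Finset.mem_univ _, rfl, ?_⟩
    exact (Finset.mem_filter.mp hj).2
  · intro a ha b hb hab
    have := (Sigma.mk.inj_iff.mp hab).2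
    exact eq_of_heq this
  · rintro ⟨i', j'⟩ hs
    obtain ⟨-, h1, h2⟩ := Finset.mem_filter.mp hs
    subst h1
    exact ⟨j', Finset.mem_filter.mpr ⟨Finset.mem_univ _, h2⟩, rfl⟩

lemma countP_eq_card_filter {α : Type*} [DecidableEq α] [Fintype α] (l : List α)
    (hl : l.Nodup) (hu : l.toFinset = Finset.univ) (p : α → Bool) :
    l.countP p = ((Finset.univ : Finset α).filter (fun a => p a)).card := by
  rw [List.countP_eq_length_filter]
  have hnd : (l.filter p).Nodup := hl.filter p
  rw [← List.toFinset_card_of_nodup hnd, List.toFinset_filter, hu]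

lemma list_sum_sigma_count {n : ℕ} {mult : Fin n → ℕ} (c : Fin n → ℝ)
    (L : List ((i : Fin n) × Fin (mult i))) :
    (L.map (fun s => c s.1)).sum
      = ∑ i, (L.countP (fun s => decide (s.1 = i)) : ℝ) * c i := by
  induction L with
  | nil => simp
  | cons s L ih =>
    simp only [List.map_cons, List.sum_cons, ih, List.countP_cons]
    have : ∀ i : Fin n, ((L.countP (fun s => decide (s.1 = i))
        + if (decide (s.1 = i)) = true then 1 else 0 : ℕ) : ℝ) * c i
        = (L.countP (fun s => decide (s.1 = i)) : ℝ) * c i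
          + (if s.1 = i then c i else 0) := by
      intro i
      by_cases h : s.1 = i <;> simp [h] <;> ring
    rw [Finset.sum_congr rfl (fun i _ => this i), Finset.sum_add_distrib]
    rw [Finset.sum_ite_eq Finset.univ s.1 c]
    simp [add_comm]

end Infra

section Kernel

lemma exists_signcomp_kernel (m n : ℕ) (hm : 1 ≤ m) (Δ : ℤ) (hΔ : 1 ≤ Δ)
    (A : Matrix (Fin m) (Fin n) ℤ) (hA : ∀ j i, |A j i| ≤ Δ)
    (y : Fin n → ℝ)
    (hker : ∀ j, ∑ i, y i * (A j i : ℝ) = 0)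
    (hfr : ∀ s : Finset (Fin n), (∀ i ∈ s, ¬ ∃ k : ℤ, (k:ℝ) = y i) → s.card ≤ m)
    (hbig : (m:ℝ) * (2*(m:ℝ)*(Δ:ℝ)+1)^m < ∑ i, |y i|) :
    ∃ w : Fin n → ℤ, w ≠ 0 ∧ (∀ j, ∑ i, (w i : ℝ) * (A j i : ℝ) = 0) ∧
      (∀ i, 0 ≤ y i → 0 ≤ (w i : ℝ) ∧ (w i : ℝ) ≤ y i) ∧
      (∀ i, y i < 0 → y i ≤ (w i : ℝ) ∧ (w i : ℝ) ≤ 0) := by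
  classical
  set g : Fin n → ℤ := fun i => if 0 ≤ y i then ⌊y i⌋ else ⌈y i⌉ with hgdef
  set F : Finset (Fin n) := Finset.univ.filter (fun i => ¬ ∃ k : ℤ, (k:ℝ) = y i) with hFdef
  set mult : Fin n → ℕ := fun i => (g i).natAbs + (if i ∈ F then 1 else 0) with hmultdef
  set sgn : Fin n → ℤ := fun i => if 0 ≤ y i then 1 else -1 with hsgndef
  set val : ((i : Fin n) × Fin (mult i)) → Fin m → ℝ := fun s j =>
    if (s.2 : ℕ) < (g s.1).natAbs then (sgn s.1 : ℝ) * (A j s.1 : ℝ)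
    else (y s.1 - g s.1) * (A j s.1 : ℝ) with hvaldef
  -- basic facts about the truncation g
  have hg_pos : ∀ i, 0 ≤ y i → 0 ≤ (g i:ℝ) ∧ (g i:ℝ) ≤ y i ∧ y i - g i < 1 := by
    intro i hi
    have h1 : g i = ⌊y i⌋ := by rw [hgdef]; simp [hi]
    refine ⟨?_, ?_, ?_⟩
    · rw [h1]; exact_mod_cast Int.floor_nonneg.mpr hi
    · rw [h1]; exact Int.floor_le _
    · rw [h1]; have := Int.lt_floor_add_one (y i); linarith
  have hg_neg : ∀ i, y i < 0 → y i ≤ (g i:ℝ) ∧ (g i:ℝ) ≤ 0 ∧ -1 < y i - g i := by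
    intro i hi
    have h1 : g i = ⌈y i⌉ := by rw [hgdef]; simp [not_le.mpr hi]
    refine ⟨?_, ?_, ?_⟩
    · rw [h1]; exact Int.le_ceil _
    · rw [h1]
      have : ⌈y i⌉ ≤ (0:ℤ) := Int.ceil_le.mpr (by exact_mod_cast hi.le)
      exact_mod_cast this
    · rw [h1]; have := Int.ceil_lt_add_one (y i); linarith
  have hg_int : ∀ i, i ∉ F → (g i : ℝ) = y i := by
    intro i hi
    rw [hFdef] at hi
    simp only [Finset.mem_filter, Finset.mem_univ, true_and, not_not] at hi
    obtain ⟨k, hk⟩ := hi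
    rw [hgdef]
    by_cases h : 0 ≤ y i <;> simp only [h, if_true, if_false, ← hk] <;> simp
  have habs_f : ∀ i, |y i - g i| ≤ 1 := by
    intro i
    rcases le_or_gt 0 (y i) with h | h
    · have := hg_pos i h; rw [abs_le]; constructor <;> linarith [this.1, this.2.1, this.2.2]
    · have := hg_neg i h; rw [abs_le]; constructor <;> linarith [this.1, this.2.1, this.2.2]
  have habs_g : ∀ i, ((g i).natAbs : ℝ) ≤ |y i| := by
    intro i
    rcases le_or_gt 0 (y i) with h | h
    · have h2 := hg_pos i h
      rw [abs_of_nonneg h]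
      have h3 : 0 ≤ g i := by exact_mod_cast h2.1
      have h5 : ((g i).natAbs : ℝ) = (g i : ℝ) := by
        rw [Nat.cast_natAbs]; exact_mod_cast abs_of_nonneg h3
      rw [h5]; exact h2.2.1
    · have h2 := hg_neg i h
      rw [abs_of_neg h]
      have h3 : g i ≤ 0 := by exact_mod_cast h2.2.1
      have h5 : ((g i).natAbs : ℝ) = -(g i : ℝ) := by
        rw [Nat.cast_natAbs]; exact_mod_cast abs_of_nonpos h3
      rw [h5]; linarith [h2.1]
  have hsgn_g : ∀ i, ((sgn i : ℝ)) * ((g i).natAbs : ℝ) = (g i : ℝ) := by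
    intro i
    rcases le_or_gt 0 (y i) with h | h
    · have h3 : 0 ≤ g i := by exact_mod_cast (hg_pos i h).1
      have h4 : ((g i).natAbs : ℝ) = (g i : ℝ) := by
        rw [Nat.cast_natAbs]; exact_mod_cast abs_of_nonneg h3
      have h5 : sgn i = 1 := by rw [hsgndef]; simp [h]
      rw [h5, h4]; push_cast; ring
    · have h3 : g i ≤ 0 := by exact_mod_cast (hg_neg i h).2.1
      have h4 : ((g i).natAbs : ℝ) = -(g i : ℝ) := by
        rw [Nat.cast_natAbs]; exact_mod_cast abs_of_nonpos h3
      have h5 : sgn i = -1 := by rw [hsgndef]; simp [not_le.mpr h]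
      rw [h5, h4]; push_cast; ring
  have hf_zero : ∀ i, i ∉ F → y i - g i = 0 := fun i hi => by rw [hg_int i hi]; ring
  -- per coordinate sums
  have hKle : ∀ i, (g i).natAbs ≤ mult i := fun i => by simp only [hmultdef]; omega
  have hsum_coord : ∀ (i : Fin n) (j : Fin m),
      ∑ s2 : Fin (mult i), val ⟨i, s2⟩ j = y i * (A j i : ℝ) := by
    intro i j
    rw [← Finset.sum_filter_add_sum_filter_not Finset.univ
      (fun s2 : Fin (mult i) => (s2:ℕ) < (g i).natAbs)]
    have e1 : ∀ s2 ∈ Finset.univ.filter (fun s2 : Fin (mult i) => (s2:ℕ) < (g i).natAbs),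
        val ⟨i, s2⟩ j = (sgn i : ℝ) * (A j i : ℝ) := by
      intro s2 hs2
      rw [hvaldef]
      exact if_pos (Finset.mem_filter.mp hs2).2
    have e2 : ∀ s2 ∈ Finset.univ.filter (fun s2 : Fin (mult i) => ¬ ((s2:ℕ) < (g i).natAbs)),
        val ⟨i, s2⟩ j = (y i - g i) * (A j i : ℝ) := by
      intro s2 hs2
      rw [hvaldef]
      exact if_neg (Finset.mem_filter.mp hs2).2
    rw [Finset.sum_congr rfl e1, Finset.sum_congr rfl e2, Finset.sum_const, Finset.sum_const]
    rw [card_filter_fin_lt (mult i) (g i).natAbs (hKle i)]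
    have hcard2 : (Finset.univ.filter
        (fun s2 : Fin (mult i) => ¬ ((s2:ℕ) < (g i).natAbs))).card = if i ∈ F then 1 else 0 := by
      have h := Finset.card_filter_add_card_filter_not
        (s := (Finset.univ : Finset (Fin (mult i)))) (p := fun s2 => (s2:ℕ) < (g i).natAbs)
      rw [card_filter_fin_lt _ _ (hKle i), Finset.card_univ, Fintype.card_fin] at h
      by_cases hiF : i ∈ F
      · simp only [hiF, if_true]
        simp only [hmultdef, hiF, if_true] at h
        omega
      · simp only [hiF, if_false]
        simp only [hmultdef, hiF, if_false] at h
        omega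
    rw [hcard2]
    by_cases hiF : i ∈ F
    · simp only [hiF, if_true, one_smul, nsmul_eq_mul]
      linear_combination ((A j i : ℝ)) * hsgn_g i
    · simp only [hiF, if_false, zero_smul, nsmul_eq_mul, add_zero]
      have h2 := hg_int i hiF
      linear_combination ((A j i : ℝ)) * hsgn_g i + ((A j i : ℝ)) * h2
  have htot : ∀ j, ∑ s : ((i : Fin n) × Fin (mult i)), val s j = 0 := by
    intro j
    rw [← Finset.univ_sigma_univ, Finset.sum_sigma]
    rw [Finset.sum_congr rfl (fun i _ => hsum_coord i j)]
    exact hker j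
  have hval_bound : ∀ (s : (i : Fin n) × Fin (mult i)) (j : Fin m), |val s j| ≤ (Δ:ℝ) := by
    intro s j
    have hAb : |(A j s.1 : ℝ)| ≤ (Δ:ℝ) := by exact_mod_cast hA j s.1
    rw [hvaldef]
    by_cases h : (s.2 : ℕ) < (g s.1).natAbs
    · simp only [h, if_true]
      rw [abs_mul]
      have : |(sgn s.1 : ℝ)| = 1 := by
        rw [hsgndef]; by_cases h2 : 0 ≤ y s.1 <;> simp [h2]
      rw [this, one_mul]; exact hAb
    · simp only [h, if_false]
      rw [abs_mul]
      calc |y s.1 - g s.1| * |(A j s.1 : ℝ)| ≤ 1 * (Δ:ℝ) := by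
            apply mul_le_mul (habs_f s.1) hAb (abs_nonneg _) zero_le_one
      _ = (Δ:ℝ) := one_mul _
  have hΔ0 : (0:ℝ) ≤ (Δ:ℝ) := by exact_mod_cast le_trans zero_le_one hΔ
  obtain ⟨l, hnd, htf, hpre⟩ := steinitz (Δ:ℝ) hΔ0 val hval_bound htot
  set t := l.length with htdef
  set pref : ℕ → Fin m → ℝ := fun a j => ((l.take a).map (fun s => val s j)).sum with hprefdef
  set fp : ((i : Fin n) × Fin (mult i)) → Bool :=
    fun s => ! decide ((s.2 : ℕ) < (g s.1).natAbs) with hfpdef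
  set fcnt : ℕ → ℕ := fun a => (l.take a).countP fp with hfcntdef
  set Fc := fcnt t with hFcdef
  -- prefix sums are bounded
  have hpre' : ∀ (a : ℕ) (j : Fin m), |pref a j| ≤ (m:ℝ) * (Δ:ℝ) := fun a j => hpre a j
  -- total fraction count
  have hFc_card : Fc = F.card := by
    show (l.take t).countP fp = F.card
    rw [htdef, List.take_length]
    rw [countP_eq_card_filter l hnd htf]
    rw [Finset.card_eq_sum_card_fiberwise (f := fun s => s.1) (t := Finset.univ)
      (fun s _ => Finset.mem_univ _)]
    have hfib : ∀ i : Fin n, ((Finset.univ.filter (fun s => fp s = true)).filter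
        (fun s => s.1 = i)).card = (if i ∈ F then 1 else 0) := by
      intro i
      rw [Finset.filter_filter]
      have hconv : (Finset.univ.filter (fun s : (i : Fin n) × Fin (mult i) =>
          (fp s = true) ∧ s.1 = i))
          = Finset.univ.filter (fun s : (i : Fin n) × Fin (mult i) =>
            s.1 = i ∧ ¬ ((s.2:ℕ) < (g s.1).natAbs)) := by
        apply Finset.filter_congr
        intro s _
        rw [hfpdef]
        simp only [Bool.not_eq_true', decide_eq_false_iff_not]
        tauto
      rw [hconv, card_sigma_fiber mult (fun i j => ¬((j:ℕ) < (g i).natAbs)) i]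
      have h := Finset.card_filter_add_card_filter_not
        (s := (Finset.univ : Finset (Fin (mult i)))) (p := fun j => (j:ℕ) < (g i).natAbs)
      rw [card_filter_fin_lt _ _ (hKle i), Finset.card_univ, Fintype.card_fin] at h
      by_cases hiF : i ∈ F
      · simp only [hiF, if_true]
        simp only [hmultdef, hiF, if_true] at h
        omega
      · simp only [hiF, if_false]
        simp only [hmultdef, hiF, if_false] at h
        omega
    rw [Finset.sum_congr rfl (fun i _ => hfib i), Finset.sum_ite_mem]
    simp
  have hFc_le : Fc ≤ m := by
    rw [hFc_card]
    refine hfr F ?_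
    intro i hi
    rw [hFdef] at hi
    exact (Finset.mem_filter.mp hi).2
  -- per-coordinate count of integer steps in l
  have hKcount : ∀ i : Fin n,
      l.countP (fun s => decide (s.1 = i) && decide ((s.2 : ℕ) < (g s.1).natAbs))
        = (g i).natAbs := by
    intro i
    rw [countP_eq_card_filter l hnd htf]
    have hconv : (Finset.univ.filter (fun s : (i : Fin n) × Fin (mult i) =>
        (decide (s.1 = i) && decide ((s.2 : ℕ) < (g s.1).natAbs)) = true))
        = Finset.univ.filter (fun s : (i : Fin n) × Fin (mult i) =>
          s.1 = i ∧ ((s.2:ℕ) < (g s.1).natAbs)) := by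
      apply Finset.filter_congr
      intro s _
      simp
    rw [hconv, card_sigma_fiber mult (fun i j => (j:ℕ) < (g i).natAbs) i,
      card_filter_fin_lt _ _ (hKle i)]
  -- length of l
  have hlen : t = (∑ i, (g i).natAbs) + Fc := by
    have h1 : t = l.toFinset.card := by
      rw [htdef, List.toFinset_card_of_nodup hnd]
    rw [htf, Finset.card_univ] at h1
    rw [h1, Fintype.card_sigma]
    simp only [Fintype.card_fin, hmultdef]
    rw [Finset.sum_add_distrib]
    congr 1
    rw [hFc_card, Finset.sum_ite_mem]
    simp
  -- counting: t is large
  have hbig2 : (max 1 Fc) * ((2*(m:ℤ)*Δ+1).toNat)^m < t := by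
    have h0 : (0:ℤ) ≤ 2*(m:ℤ)*Δ+1 := by positivity
    have hB1 : (((2*(m:ℤ)*Δ+1).toNat : ℕ) : ℝ) = 2*(m:ℝ)*(Δ:ℝ)+1 := by
      have h := Int.toNat_of_nonneg h0
      have h2 : (((2*(m:ℤ)*Δ+1).toNat : ℕ) : ℝ) = (((2*(m:ℤ)*Δ+1) : ℤ) : ℝ) := by
        exact_mod_cast congrArg (fun z : ℤ => (z : ℝ)) h
      rw [h2]; push_cast; ring
    have hBpos : (0:ℝ) ≤ 2*(m:ℝ)*(Δ:ℝ)+1 := by positivity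
    have hyle : ∀ i, |y i| ≤ ((g i).natAbs : ℝ) + (if i ∈ F then 1 else 0) := by
      intro i
      by_cases hiF : i ∈ F
      · simp only [hiF, if_true]
        have h1 : |y i| ≤ |(g i : ℝ)| + |y i - g i| := by
          have := abs_add_le ((g i : ℝ)) (y i - g i)
          simpa using this
        have h2 : ((g i).natAbs : ℝ) = |(g i : ℝ)| := by
          rw [Nat.cast_natAbs]
          exact_mod_cast rfl
        rw [h2]
        linarith [habs_f i]
      · simp only [hiF, if_false, add_zero]
        have h2 : ((g i).natAbs : ℝ) = |(g i : ℝ)| := by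
          rw [Nat.cast_natAbs]
          exact_mod_cast rfl
        rw [h2, hg_int i hiF]
    have hsum_y : ∑ i, |y i| ≤ ((∑ i, (g i).natAbs : ℕ) : ℝ) + (Fc : ℝ) := by
      calc ∑ i, |y i| ≤ ∑ i, (((g i).natAbs : ℝ) + (if i ∈ F then 1 else 0)) :=
            Finset.sum_le_sum (fun i _ => hyle i)
      _ = ((∑ i, (g i).natAbs : ℕ) : ℝ) + (Fc : ℝ) := by
          rw [Finset.sum_add_distrib]
          congr 1
          · push_cast; rfl
          · rw [Finset.sum_ite_mem, Finset.univ_inter, hFc_card]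
            simp
    have hmax_le : ((max 1 Fc : ℕ) : ℝ) ≤ (m : ℝ) := by
      have : max 1 Fc ≤ m := max_le hm hFc_le
      exact_mod_cast this
    have htreal : ((max 1 Fc : ℕ) : ℝ) * (((2*(m:ℤ)*Δ+1).toNat : ℕ) : ℝ)^m < (t : ℝ) := by
      rw [hB1]
      calc ((max 1 Fc : ℕ) : ℝ) * (2*(m:ℝ)*(Δ:ℝ)+1)^m
          ≤ (m:ℝ) * (2*(m:ℝ)*(Δ:ℝ)+1)^m := by
            apply mul_le_mul_of_nonneg_right hmax_le (by positivity)
      _ < ∑ i, |y i| := hbig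
      _ ≤ ((∑ i, (g i).natAbs : ℕ) : ℝ) + (Fc : ℝ) := hsum_y
      _ = (t : ℝ) := by rw [hlen]; push_cast; ring
    exact_mod_cast htreal
  -- the sign-compatible kernel element from an all-integer sublist with zero sum
  suffices hsuff : ∃ L : List ((i : Fin n) × Fin (mult i)), L ≠ [] ∧ L.Sublist l ∧
      (∀ s ∈ L, (s.2 : ℕ) < (g s.1).natAbs) ∧
      (∀ j, ((L.map (fun s => val s j)).sum = 0)) by
    obtain ⟨L, hLne, hLsub, hLint, hLsum⟩ := hsuff
    have hsgn_ne : ∀ i, sgn i ≠ 0 := by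
      intro i
      rw [hsgndef]
      by_cases h : 0 ≤ y i <;> simp [h]
    have hcnt_le : ∀ i, L.countP (fun s => decide (s.1 = i)) ≤ (g i).natAbs := by
      intro i
      have heq : L.countP (fun s => decide (s.1 = i))
          = L.countP (fun s => decide (s.1 = i) && decide ((s.2 : ℕ) < (g s.1).natAbs)) := by
        apply List.countP_congr
        intro s hs
        have hint := hLint s hs
        simp [hint]
      rw [heq]
      exact le_trans (hLsub.countP_le) (le_of_eq (hKcount i))
    refine ⟨fun i => sgn i * (L.countP (fun s => decide (s.1 = i))), ?_, ?_, ?_, ?_⟩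
    · intro hw0
      obtain ⟨s₀, hs₀⟩ := List.exists_mem_of_ne_nil L hLne
      have hcnt : 0 < L.countP (fun s => decide (s.1 = s₀.1)) :=
        List.countP_pos_iff.mpr ⟨s₀, hs₀, by simp⟩
      have h := congrFun hw0 s₀.1
      simp only [Pi.zero_apply] at h
      rcases mul_eq_zero.mp h with h2 | h2
      · exact hsgn_ne s₀.1 h2
      · have : L.countP (fun s => decide (s.1 = s₀.1)) = 0 := by exact_mod_cast h2
        omega
    · intro j
      have hmapeq : L.map (fun s => val s j)
          = L.map (fun s => (fun i => (sgn i : ℝ) * (A j i : ℝ)) s.1) := by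
        apply List.map_congr_left
        intro s hs
        rw [hvaldef]
        exact if_pos (hLint s hs)
      have h1 := list_sum_sigma_count (fun i => (sgn i : ℝ) * (A j i : ℝ)) L
      rw [← hmapeq, hLsum j] at h1
      calc ∑ i, ((sgn i * (L.countP (fun s => decide (s.1 = i))) : ℤ) : ℝ) * (A j i : ℝ)
          = ∑ i, ((L.countP (fun s => decide (s.1 = i)) : ℕ) : ℝ)
              * ((sgn i : ℝ) * (A j i : ℝ)) :=
            Finset.sum_congr rfl (fun i _ => by push_cast; ring)
      _ = 0 := h1.symm
    · intro i hyi
      have hs1 : sgn i = 1 := by rw [hsgndef]; simp [hyi]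
      have h2 := hcnt_le i
      have h3 : ((L.countP (fun s => decide (s.1 = i)) : ℕ) : ℝ) ≤ ((g i).natAbs : ℝ) := by
        exact_mod_cast h2
      have h4 : ((g i).natAbs : ℝ) = (g i : ℝ) := by
        rw [Nat.cast_natAbs]
        have h5 : (0:ℝ) ≤ (g i : ℝ) := (hg_pos i hyi).1
        exact_mod_cast abs_of_nonneg (show (0:ℤ) ≤ g i by exact_mod_cast h5)
      simp only [hs1, one_mul]
      push_cast
      push_cast at h3
      rw [h4] at h3
      constructor
      · positivity
      · linarith [(hg_pos i hyi).2.1]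
    · intro i hyi
      have hs1 : sgn i = -1 := by rw [hsgndef]; simp [not_le.mpr hyi]
      have h2 := hcnt_le i
      have h3 : ((L.countP (fun s => decide (s.1 = i)) : ℕ) : ℝ) ≤ ((g i).natAbs : ℝ) := by
        exact_mod_cast h2
      have h4 : ((g i).natAbs : ℝ) = -(g i : ℝ) := by
        rw [Nat.cast_natAbs]
        have h5 : (g i : ℝ) ≤ 0 := (hg_neg i hyi).2.1
        exact_mod_cast abs_of_nonpos (show g i ≤ (0:ℤ) by exact_mod_cast h5)
      simp only [hs1, neg_mul, one_mul]
      push_cast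
      push_cast at h3
      rw [h4] at h3
      have h6 : (0:ℝ) ≤ (L.countP (fun s => decide (s.1 = i)) : ℝ) := by positivity
      constructor
      · linarith [(hg_neg i hyi).1]
      · linarith
  -- ============ pigeonhole construction of L ============
  have hfmono : ∀ {a b : ℕ}, a ≤ b → fcnt a ≤ fcnt b := by
    intro a b hab
    show (l.take a).countP fp ≤ (l.take b).countP fp
    have h1 : l.take a = (l.take b).take a := by rw [List.take_take, min_eq_left hab]
    rw [h1]
    exact (List.take_sublist a (l.take b)).countP_le (p := fp)
  have hFc_eq : Fc = l.countP fp := by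
    show (l.take t).countP fp = _
    rw [htdef, List.take_length]
  have hfle : ∀ a, fcnt a ≤ Fc := by
    intro a
    rw [hFc_eq]
    exact (List.take_sublist a l).countP_le (p := fp)
  have hseg : ∀ {a b : ℕ}, a ≤ b → l.take a ++ ((l.take b).drop a) = l.take b := by
    intro a b hab
    conv_rhs => rw [← List.take_append_drop a (l.take b)]
    rw [List.take_take, min_eq_left hab]
  have hprefsplit : ∀ {a b : ℕ}, a ≤ b → ∀ j, pref b j
      = pref a j + (((l.take b).drop a).map (fun s => val s j)).sum := by
    intro a b hab j
    show ((l.take b).map _).sum = ((l.take a).map _).sum + _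
    conv_lhs => rw [← hseg hab]
    rw [List.map_append, List.sum_append]
  have hcntsplit : ∀ {a b : ℕ}, a ≤ b → fcnt b = fcnt a + ((l.take b).drop a).countP fp := by
    intro a b hab
    show (l.take b).countP fp = (l.take a).countP fp + _
    conv_lhs => rw [← hseg hab]
    rw [List.countP_append]
  have hpref_t : ∀ j, pref t j = 0 := by
    intro j
    show ((l.take t).map (fun s => val s j)).sum = 0
    rw [htdef, List.take_length, ← List.sum_toFinset _ hnd, htf]
    exact htot j
  have hintsum : ∀ (L : List ((i : Fin n) × Fin (mult i))) (j : Fin m),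
      (∀ s ∈ L, (s.2:ℕ) < (g s.1).natAbs) →
      ∃ z : ℤ, ((L.map (fun s => val s j)).sum) = (z : ℝ) := by
    intro L j
    induction L with
    | nil => intro _; exact ⟨0, by simp⟩
    | cons s L2 ih =>
      intro hL
      obtain ⟨z2, hz2⟩ := ih (fun x hx => hL x (List.mem_cons_of_mem _ hx))
      have hint : (s.2:ℕ) < (g s.1).natAbs := hL s (List.mem_cons_self)
      refine ⟨sgn s.1 * A j s.1 + z2, ?_⟩
      have hv : val s j = (sgn s.1 : ℝ) * (A j s.1 : ℝ) := by
        show (if (s.2:ℕ) < (g s.1).natAbs then (sgn s.1 : ℝ) * (A j s.1 : ℝ)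
          else (y s.1 - g s.1) * (A j s.1 : ℝ)) = (sgn s.1 : ℝ) * (A j s.1 : ℝ)
        exact if_pos hint
      rw [List.map_cons, List.sum_cons, hz2, hv]
      push_cast
      ring
  have hnofp : ∀ (L : List ((i : Fin n) × Fin (mult i))), L.countP fp = 0 →
      ∀ s ∈ L, (s.2:ℕ) < (g s.1).natAbs := by
    intro L hL s hs
    have h2 := List.countP_eq_zero.mp hL s hs
    rw [hfpdef] at h2
    simpa using h2
  set key : ℕ → ℕ := fun a => if fcnt a = 0 ∨ fcnt a = Fc then 0 else fcnt a with hkeydef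
  set base : ℕ → Fin m → ℝ := fun c =>
    if h : c ≠ 0 ∧ ∃ x, fcnt x = c then pref (Nat.find h.2) else 0 with hbasedef
  have hkey_0 : ∀ x, (fcnt x = 0 ∨ fcnt x = Fc) → key x = 0 := by
    intro x hx
    show (if fcnt x = 0 ∨ fcnt x = Fc then 0 else fcnt x) = 0
    rw [if_pos hx]
  have hkey_mid : ∀ x, ¬(fcnt x = 0 ∨ fcnt x = Fc) → key x = fcnt x := by
    intro x hx
    show (if fcnt x = 0 ∨ fcnt x = Fc then 0 else fcnt x) = fcnt x
    rw [if_neg hx]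
  have hbase_zero : ∀ j, base 0 j = 0 := by
    intro j
    show (if h : (0:ℕ) ≠ 0 ∧ ∃ x, fcnt x = 0 then pref (Nat.find h.2) else 0) j = 0
    rw [dif_neg (by simp)]
    rfl
  have hbase_mid : ∀ (c : ℕ) (h : c ≠ 0 ∧ ∃ x, fcnt x = c) (j : Fin m),
      base c j = pref (Nat.find h.2) j := by
    intro c h j
    show (if h : c ≠ 0 ∧ ∃ x, fcnt x = c then pref (Nat.find h.2) else 0) j = _
    rw [dif_pos h]
  have hintdiff : ∀ a : ℕ, a ≤ t →
      ∃ z : Fin m → ℤ, ∀ j, pref a j - base (key a) j = (z j : ℝ) := by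
    intro a hat
    by_cases h0 : fcnt a = 0 ∨ fcnt a = Fc
    · have hkey0 : key a = 0 := hkey_0 a h0
      have hbase0 : ∀ j, base (key a) j = 0 := by
        intro j
        rw [hkey0]
        exact hbase_zero j
      rcases h0 with h0 | h0
    -- case fcnt a = 0
      · have hall : ∀ s ∈ l.take a, (s.2:ℕ) < (g s.1).natAbs := hnofp _ h0
        have h := fun j => hintsum (l.take a) j hall
        choose zf hzf using h
        exact ⟨zf, fun j => by rw [hbase0 j, sub_zero]; exact hzf j⟩
    -- case fcnt a = Fc
      · have hcnt0 : (l.drop a).countP fp = 0 := by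
          have h1 : l.countP fp = (l.take a).countP fp + (l.drop a).countP fp := by
            conv_lhs => rw [← List.take_append_drop a l]
            rw [List.countP_append]
          have h2 : (l.take a).countP fp = Fc := h0
          omega
        have hall : ∀ s ∈ l.drop a, (s.2:ℕ) < (g s.1).natAbs := hnofp _ hcnt0
        have h := fun j => hintsum (l.drop a) j hall
        choose zf hzf using h
        refine ⟨fun j => - zf j, fun j => ?_⟩
        have hsp := hprefsplit hat j
        rw [htdef, List.take_length] at hsp
        have h3 := hpref_t j
        rw [hsp, hzf j] at h3
        rw [hbase0 j, sub_zero]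
        push_cast
        linarith
    · have hkeyc : key a = fcnt a := hkey_mid a h0
      push_neg at h0
      have hex2 : ∃ x, fcnt x = fcnt a := ⟨a, rfl⟩
      have hex : fcnt a ≠ 0 ∧ ∃ x, fcnt x = fcnt a := ⟨h0.1, hex2⟩
      have hbasec : ∀ j, base (fcnt a) j = pref (Nat.find hex.2) j :=
        fun j => hbase_mid (fcnt a) hex j
      set b0 := Nat.find hex.2 with hb0def
      have hb0 : fcnt b0 = fcnt a := Nat.find_spec hex.2
      have hb0le : b0 ≤ a := Nat.find_min' hex.2 rfl
      have hcnt0 : ((l.take a).drop b0).countP fp = 0 := by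
        have := hcntsplit hb0le (b := a)
        omega
      have hall := hnofp _ hcnt0
      have h := fun j => hintsum ((l.take a).drop b0) j hall
      choose zf hzf using h
      refine ⟨zf, fun j => ?_⟩
      rw [hkeyc, hbasec j]
      have := hprefsplit hb0le j
      rw [this, hzf j]
      ring
  have hbase_bound : ∀ c j, |base c j| ≤ (m:ℝ)*(Δ:ℝ) := by
    intro c j
    by_cases h : c ≠ 0 ∧ ∃ x, fcnt x = c
    · rw [hbase_mid c h j]; exact hpre' _ j
    · have : base c j = 0 := by
        show (if h : c ≠ 0 ∧ ∃ x, fcnt x = c then pref (Nat.find h.2) else 0) j = 0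
        rw [dif_neg h]
        rfl
      rw [this]
      simp only [abs_zero]
      positivity
  have hKmax : ∀ a, a < t → key a < max 1 Fc := by
    intro a ha
    by_cases h0 : fcnt a = 0 ∨ fcnt a = Fc
    · rw [hkey_0 a h0]
      omega
    · rw [hkey_mid a h0]
      push_neg at h0
      have := hfle a
      have h1 : fcnt a < Fc := lt_of_le_of_ne this h0.2
      omega
  -- the pigeonhole map
  have hmaps : ∀ a ∈ Finset.range t, ((key a, fun j => ⌊pref a j - base (key a) j⌋
      - ⌈-((m:ℝ)*(Δ:ℝ)) - base (key a) j⌉) : ℕ × (Fin m → ℤ))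
      ∈ (Finset.range (max 1 Fc)) ×ˢ
        (Fintype.piFinset (fun _ : Fin m => Finset.Icc (0:ℤ) (2*(m:ℤ)*Δ))) := by
    intro a ha
    rw [Finset.mem_product]
    have hat : a ≤ t := le_of_lt (Finset.mem_range.mp ha)
    constructor
    · rw [Finset.mem_range]
      exact hKmax a (Finset.mem_range.mp ha)
    · rw [Fintype.mem_piFinset]
      intro j
      simp only [Finset.mem_Icc]
      obtain ⟨z, hz⟩ := hintdiff a hat
      have hfl : ⌊pref a j - base (key a) j⌋ = z j := by rw [hz j, Int.floor_intCast]
      have hp1 := abs_le.mp (hpre' a j)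
      have hb1 := abs_le.mp (hbase_bound (key a) j)
      constructor
      · rw [sub_nonneg, hfl]
        rw [Int.ceil_le]
        rw [← hz j]
        push_cast
        linarith [hp1.1]
      · have h2 : -((m:ℝ)*(Δ:ℝ)) - base (key a) j ≤ (⌈-((m:ℝ)*(Δ:ℝ)) - base (key a) j⌉ : ℝ) :=
          Int.le_ceil _
      -- z j ≤ ceil + 2mΔ
        have h3 : (z j : ℝ) ≤ ((⌈-((m:ℝ)*(Δ:ℝ)) - base (key a) j⌉ + 2*(m:ℤ)*Δ : ℤ) : ℝ) := by
          rw [← hz j]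
          push_cast
          linarith [hp1.2]
        have h4 : z j ≤ ⌈-((m:ℝ)*(Δ:ℝ)) - base (key a) j⌉ + 2*(m:ℤ)*Δ := by exact_mod_cast h3
        rw [hfl]
        omega
  have hcardlt : ((Finset.range (max 1 Fc)) ×ˢ
      (Fintype.piFinset (fun _ : Fin m => Finset.Icc (0:ℤ) (2*(m:ℤ)*Δ)))).card
      < (Finset.range t).card := by
    rw [Finset.card_product, Finset.card_range, Finset.card_range, Fintype.card_piFinset]
    have hIcc : (Finset.Icc (0:ℤ) (2*(m:ℤ)*Δ)).card = (2*(m:ℤ)*Δ+1).toNat := by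
      rw [Int.card_Icc]
      congr 1
      ring
    rw [Finset.prod_congr rfl (fun j _ => hIcc), Finset.prod_const, Finset.card_univ,
      Fintype.card_fin]
    exact hbig2
  obtain ⟨a0, ha0, b0, hb0, hne, heq⟩ :=
    Finset.exists_ne_map_eq_of_card_lt_of_maps_to hcardlt hmaps
  -- order them
  obtain ⟨a, b, hab, hbt, hkab, heab⟩ : ∃ a b, a < b ∧ b < t ∧ key a = key b ∧
      (∀ j, (⌊pref a j - base (key a) j⌋ - ⌈-((m:ℝ)*(Δ:ℝ)) - base (key a) j⌉)
        = (⌊pref b j - base (key b) j⌋ - ⌈-((m:ℝ)*(Δ:ℝ)) - base (key b) j⌉)) := by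
    have hk := congrArg Prod.fst heq
    have he := congrArg Prod.snd heq
    simp only at hk he
    rcases lt_or_gt_of_ne hne with h | h
    · exact ⟨a0, b0, h, Finset.mem_range.mp hb0, hk, fun j => congrFun he j⟩
    · exact ⟨b0, a0, h, Finset.mem_range.mp ha0, hk.symm, fun j => (congrFun he j).symm⟩
  have hat : a ≤ t := le_of_lt (lt_trans hab hbt)
  have hbt' : b ≤ t := le_of_lt hbt
  have hprefeq : ∀ j, pref a j = pref b j := by
    intro j
    obtain ⟨za, hza⟩ := hintdiff a hat
    obtain ⟨zb, hzb⟩ := hintdiff b hbt'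
    have hfa : ⌊pref a j - base (key a) j⌋ = za j := by rw [hza j, Int.floor_intCast]
    have hfb : ⌊pref b j - base (key b) j⌋ = zb j := by rw [hzb j, Int.floor_intCast]
    have h1 := heab j
    rw [hfa, hfb, hkab] at h1
    have h2 : za j = zb j := by omega
    have h3 := hza j
    rw [hkab] at h3
    have h4 := hzb j
    rw [h2] at h3
    linarith [h3, h4]
  by_cases hcase : fcnt a = fcnt b
  · -- chunk between a and b
    refine ⟨(l.take b).drop a, ?_, ?_, ?_, ?_⟩
    · have hlen1 : (l.take b).length = b := by
        rw [List.length_take, min_eq_left hbt']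
      have : ((l.take b).drop a).length = b - a := by
        rw [List.length_drop, hlen1]
      intro hnil
      rw [hnil] at this
      simp at this
      omega
    · exact (List.drop_sublist a (l.take b)).trans (List.take_sublist b l)
    · apply hnofp
      have := hcntsplit (le_of_lt hab) (b := b)
      omega
    · intro j
      have := hprefsplit (le_of_lt hab) (b := b) j
      rw [← hprefeq j] at this
      linarith [this]
  · -- complement: fcnt a = 0 and fcnt b = Fc
    have h1 : fcnt a ≤ fcnt b := hfmono (le_of_lt hab)
    have hka : fcnt a = 0 ∨ fcnt a = Fc := by
      by_contra hno
      have h2 := hkey_mid a hno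
      by_cases hno2 : fcnt b = 0 ∨ fcnt b = Fc
      · have h3 := hkey_0 b hno2
        rw [h2, h3] at hkab
        push_neg at hno
        exact hno.1 hkab
      · have h3 := hkey_mid b hno2
        rw [h2, h3] at hkab
        exact hcase hkab
    have hkb : fcnt b = 0 ∨ fcnt b = Fc := by
      by_contra hno
      have h2 := hkey_mid b hno
      by_cases hno2 : fcnt a = 0 ∨ fcnt a = Fc
      · have h3 := hkey_0 a hno2
        rw [h2, h3] at hkab
        push_neg at hno
        exact hno.1 hkab.symm
      · have h3 := hkey_mid a hno2
        rw [h2, h3] at hkab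
        exact hcase hkab
    have ha0' : fcnt a = 0 := by
      rcases hka with h | h
      · exact h
      · rcases hkb with h2 | h2 <;> omega
    have hbF : fcnt b = Fc := by
      rcases hkb with h2 | h2
      · omega
      · exact h2
    refine ⟨l.take a ++ l.drop b, ?_, ?_, ?_, ?_⟩
    · intro hnil
      have h2 : (l.drop b).length = t - b := by rw [List.length_drop]
      have h3 := congrArg List.length hnil
      rw [List.length_append, h2] at h3
      simp at h3
      omega
    · have hsub1 : l.take a = (l.take b).take a := by
        rw [List.take_take, min_eq_left (le_of_lt hab)]
      have hsub2 : (l.take a).Sublist (l.take b) := by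
        rw [hsub1]; exact List.take_sublist a (l.take b)
      have := hsub2.append (List.Sublist.refl (l.drop b))
      rwa [List.take_append_drop b l] at this
    · intro s hs
      rcases List.mem_append.mp hs with h | h
      · exact hnofp _ ha0' s h
      · have hcnt0 : (l.drop b).countP fp = 0 := by
          have hsp : l.countP fp = (l.take b).countP fp + (l.drop b).countP fp := by
            conv_lhs => rw [← List.take_append_drop b l]
            rw [List.countP_append]
          have h2 : (l.take b).countP fp = Fc := hbF
          omega
        exact hnofp _ hcnt0 s h
    · intro j
      rw [List.map_append, List.sum_append]
      have hd : ((l.drop b).map (fun s => val s j)).sum = - pref b j := by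
        have hsp := hprefsplit hbt' j
        rw [htdef, List.take_length] at hsp
        have h3 := hpref_t j
        linarith [hsp]
      have hta : ((l.take a).map (fun s => val s j)).sum = pref a j := rfl
      rw [hta, hd, hprefeq j]
      ring

end Kernel

section ExtremeFrac

lemma extreme_frac_le (m n : ℕ) (A : Matrix (Fin m) (Fin n) ℤ) (b : Fin m → ℤ) (u : Fin n → ℤ)
    (P : Set (Fin n → ℝ))
    (hP : P = {x : Fin n → ℝ |
      (Matrix.mulVec (fun i j => (A i j : ℝ)) x = fun i => (b i : ℝ)) ∧
      ∀ i, 0 ≤ x i ∧ x i ≤ (u i : ℝ)})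
    (xstar : Fin n → ℝ) (hx : xstar ∈ Set.extremePoints ℝ P)
    (s : Finset (Fin n)) (hs : ∀ i ∈ s, ¬ ∃ k : ℤ, (k:ℝ) = xstar i) :
    s.card ≤ m := by
  classical
  by_contra hcard
  push_neg at hcard
  have hxP := hx.1
  rw [hP] at hxP
  obtain ⟨hAx, hbox⟩ := hxP
  have hrank : Module.finrank ℝ (Fin m → ℝ) < Fintype.card s := by
    rw [Module.finrank_pi, Fintype.card_coe, Fintype.card_fin]
    omega
  have hnli : ¬ LinearIndependent ℝ (fun i : s => (fun j => (A j i : ℝ) : Fin m → ℝ)) := by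
    intro h
    exact absurd h.fintype_card_le_finrank (not_le.mpr hrank)
  obtain ⟨gc, hgc, i₀, hgi₀⟩ := Fintype.not_linearIndependent_iff.mp hnli
  set d : Fin n → ℝ := fun i => if h : i ∈ s then gc ⟨i, h⟩ else 0 with hddef
  have hd0 : ∀ i, i ∉ s → d i = 0 := by intro i hi; simp [hddef, hi]
  have hdF : ∀ (i : Fin n) (h : i ∈ s), d i = gc ⟨i, h⟩ := by intro i h; simp [hddef, h]
  have hd_col : ∀ j : Fin m, ∑ i, d i * (A j i : ℝ) = 0 := by
    intro j
    have h1 : ∑ i, d i * (A j i : ℝ) = ∑ i ∈ s, d i * (A j i : ℝ) := by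
      rw [← Finset.sum_subset (Finset.subset_univ s)
        (fun i _ hi => by rw [hd0 i hi, zero_mul])]
    have h2 : ∑ i ∈ s, d i * (A j i : ℝ) = ∑ i : s, gc i * (A j i : ℝ) := by
      rw [← Finset.sum_attach s (fun i => d i * (A j i : ℝ)), Finset.attach_eq_univ]
      exact Finset.sum_congr rfl fun i _ => by rw [hdF i i.2]
    have h3 := congrFun hgc j
    simp only [Finset.sum_apply, Pi.smul_apply, smul_eq_mul, Pi.zero_apply] at h3
    rw [h1, h2]
    exact h3
  have hstrict : ∀ i ∈ s, 0 < xstar i ∧ xstar i < (u i : ℝ) := by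
    intro i hi
    have h1 := hbox i
    constructor
    · rcases eq_or_lt_of_le h1.1 with h | h
      · exact absurd ⟨0, by exact_mod_cast h⟩ (hs i hi)
      · exact h
    · rcases eq_or_lt_of_le h1.2 with h | h
      · exact absurd ⟨u i, h.symm⟩ (hs i hi)
      · exact h
  have hsne : s.Nonempty := Finset.card_pos.mp (by omega)
  set ε : ℝ := s.inf' hsne (fun i => min (xstar i) ((u i : ℝ) - xstar i) / (|d i| + 1)) with hεdef
  have hε : 0 < ε := by
    rw [hεdef, Finset.lt_inf'_iff]
    intro i hi
    have h := hstrict i hi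
    apply div_pos (lt_min h.1 (by linarith [h.2])) (by positivity)
  have hkey : ∀ i ∈ s, ε * |d i| ≤ min (xstar i) ((u i : ℝ) - xstar i) := by
    intro i hi
    have h1 : ε ≤ min (xstar i) ((u i : ℝ) - xstar i) / (|d i| + 1) := Finset.inf'_le _ hi
    have h3 : 0 ≤ min (xstar i) ((u i : ℝ) - xstar i) := by
      have h := hstrict i hi
      exact le_min h.1.le (by linarith [h.2])
    calc ε * |d i| ≤ (min (xstar i) ((u i : ℝ) - xstar i) / (|d i| + 1)) * |d i| :=
          mul_le_mul_of_nonneg_right h1 (abs_nonneg _)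
    _ ≤ (min (xstar i) ((u i : ℝ) - xstar i) / (|d i| + 1)) * (|d i| + 1) := by
          apply mul_le_mul_of_nonneg_left (by linarith) (by positivity)
    _ = min (xstar i) ((u i : ℝ) - xstar i) := by field_simp
  have hmem : ∀ (σ : ℝ), |σ| = 1 → xstar + σ • (ε • d) ∈ P := by
    intro σ hσ
    rw [hP]
    constructor
    · erw [Matrix.mulVec_add, Matrix.mulVec_smul, Matrix.mulVec_smul]
      have hd2 : Matrix.mulVec (fun i j => (A i j : ℝ)) d = 0 := by
        funext j
        show ∑ i, (A j i : ℝ) * d i = 0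
        rw [← hd_col j]
        exact Finset.sum_congr rfl fun i _ => mul_comm _ _
      rw [hd2, hAx]
      funext j
      simp
    · intro i
      by_cases hi : i ∈ s
      · have hb := hkey i hi
        have habs : |σ * (ε * d i)| ≤ min (xstar i) ((u i : ℝ) - xstar i) := by
          rw [abs_mul, hσ, one_mul, abs_mul, abs_of_pos hε]
          exact hb
        have h1 := abs_le.mp habs
        have hmin1 := min_le_left (xstar i) ((u i : ℝ) - xstar i)
        have hmin2 := min_le_right (xstar i) ((u i : ℝ) - xstar i)
        simp only [Pi.add_apply, Pi.smul_apply, smul_eq_mul]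
        constructor
        · nlinarith [h1.1]
        · nlinarith [h1.2]
      · have : d i = 0 := hd0 i hi
        simp only [Pi.add_apply, Pi.smul_apply, smul_eq_mul, this, mul_zero, add_zero]
        exact hbox i
  have h1 : xstar + ε • d ∈ P := by
    have := hmem 1 (by norm_num)
    simpa using this
  have h2 : xstar - ε • d ∈ P := by
    have := hmem (-1) (by norm_num)
    simpa [sub_eq_add_neg] using this
  have hz : ε • d = 0 := extreme_perturb hx h1 h2
  have : d = 0 := by
    rcases smul_eq_zero.mp hz with h | h
    · exact absurd h (ne_of_gt hε)
    · exact h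
  apply hgi₀
  have := congrFun this i₀
  rwa [hdF i₀ i₀.2] at this

end ExtremeFrac


open Matrix

/-- **Proximity bound.**  For `P = {x : Ax = b, 0 ≤ x ≤ u}` containing an integer point and an
optimal extreme point `x*` of the LP relaxation, there exists an optimal integer solution `z*`
with `‖z* − x*‖₁ ≤ m·(2mΔ + 1)^m`, where `Δ` bounds the absolute values of the entries of `A`. -/
theorem proximity_l1_bound
    (m n : ℕ) (Δ : ℤ) (hΔ : 1 ≤ Δ)
    (A : Matrix (Fin m) (Fin n) ℤ)
    (hA : ∀ i j, |A i j| ≤ Δ)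
    (b : Fin m → ℤ) (c : Fin n → ℤ) (u : Fin n → ℤ) (hu : ∀ i, 0 ≤ u i)
    (P : Set (Fin n → ℝ))
    (hP : P = {x : Fin n → ℝ |
      (Matrix.mulVec (fun i j => (A i j : ℝ)) x = fun i => (b i : ℝ)) ∧
      ∀ i, 0 ≤ x i ∧ x i ≤ (u i : ℝ)})
    (hint : ∃ z : Fin n → ℤ, (fun i => (z i : ℝ)) ∈ P)
    (xstar : Fin n → ℝ)
    (hx_ext : xstar ∈ Set.extremePoints ℝ P)
    (hx_opt : ∀ x ∈ P, ∑ i, (c i : ℝ) * x i ≤ ∑ i, (c i : ℝ) * xstar i) :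
    ∃ zstar : Fin n → ℤ,
      (fun i => (zstar i : ℝ)) ∈ P ∧
      (∀ z : Fin n → ℤ, (fun i => (z i : ℝ)) ∈ P → c ⬝ᵥ z ≤ c ⬝ᵥ zstar) ∧
      ∑ i, |(zstar i : ℝ) - xstar i| ≤ (m : ℝ) * (2 * (m : ℝ) * (Δ : ℝ) + 1) ^ m := by
  classical
  set T : Finset (Fin n → ℤ) := (Fintype.piFinset (fun i => Finset.Icc 0 (u i))).filter
    (fun z => (fun i => (z i : ℝ)) ∈ P) with hTdef
  have hmemT : ∀ z : Fin n → ℤ, (fun i => (z i : ℝ)) ∈ P → z ∈ T := by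
    intro z hz
    rw [hTdef, Finset.mem_filter]
    refine ⟨?_, hz⟩
    rw [Fintype.mem_piFinset]
    intro i
    rw [Finset.mem_Icc]
    have hz2 := hz
    rw [hP] at hz2
    have h := hz2.2 i
    have h1 : (0:ℝ) ≤ (z i : ℝ) := h.1
    have h2 : (z i : ℝ) ≤ (u i : ℝ) := h.2
    constructor
    · exact_mod_cast h1
    · exact_mod_cast h2
  obtain ⟨z1, hz1⟩ := hint
  obtain ⟨z₀, hz₀T, hz₀max⟩ := T.exists_max_image (fun z => c ⬝ᵥ z) ⟨z1, hmemT z1 hz1⟩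
  set O : Finset (Fin n → ℤ) := T.filter (fun z => c ⬝ᵥ z₀ ≤ c ⬝ᵥ z) with hOdef
  obtain ⟨zs, hzsO, hzsmin⟩ := O.exists_min_image (fun z => ∑ i, |(z i:ℝ) - xstar i|)
    ⟨z₀, by rw [hOdef, Finset.mem_filter]; exact ⟨hz₀T, le_refl _⟩⟩
  have hzsO' := hzsO
  rw [hOdef, Finset.mem_filter] at hzsO'
  have hzsT : zs ∈ T := hzsO'.1
  have h2opt : c ⬝ᵥ z₀ ≤ c ⬝ᵥ zs := hzsO'.2
  have hzsT' := hzsT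
  rw [hTdef, Finset.mem_filter] at hzsT'
  have hzsP : (fun i => (zs i : ℝ)) ∈ P := hzsT'.2
  have hzsopt : ∀ z : Fin n → ℤ, (fun i => (z i : ℝ)) ∈ P → c ⬝ᵥ z ≤ c ⬝ᵥ zs := by
    intro z hz
    have h1 := hz₀max z (hmemT z hz)
    exact le_trans h1 h2opt
  have hzO : ∀ z : Fin n → ℤ, (fun i => (z i : ℝ)) ∈ P → c ⬝ᵥ z₀ ≤ c ⬝ᵥ z → z ∈ O := by
    intro z hz hc
    rw [hOdef, Finset.mem_filter]
    exact ⟨hmemT z hz, hc⟩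
  refine ⟨zs, hzsP, hzsopt, ?_⟩
  by_contra hgt
  push_neg at hgt
  have hfrx : ∀ s : Finset (Fin n), (∀ i ∈ s, ¬ ∃ k : ℤ, (k:ℝ) = xstar i) → s.card ≤ m :=
    fun s hs => extreme_frac_le m n A b u P hP xstar hx_ext s hs
  -- dot products as real sums
  have hdotcast : ∀ z : Fin n → ℤ, ((c ⬝ᵥ z : ℤ) : ℝ) = ∑ i, (c i : ℝ) * (z i : ℝ) := by
    intro z
    rw [dotProduct]
    push_cast
    rfl
  rcases Nat.eq_zero_or_pos m with hm0 | hmpos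
  · -- m = 0 : xstar is integral, distance 0
    have hallint : ∀ i, ∃ k : ℤ, (k:ℝ) = xstar i := by
      intro i
      by_contra hno
      have h := hfrx {i} (by
        intro j hj
        rw [Finset.mem_singleton] at hj
        subst hj
        exact hno)
      rw [hm0, Finset.card_singleton] at h
      omega
    choose xz hxz using hallint
    have hxzP : (fun i => (xz i : ℝ)) ∈ P := by
      have h : (fun i => (xz i : ℝ)) = xstar := funext hxz
      rw [h]; exact hx_ext.1
    have hcz : c ⬝ᵥ z₀ ≤ c ⬝ᵥ xz := by
      have hz₀P : (fun i => (z₀ i : ℝ)) ∈ P := by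
        have h := hz₀T
        rw [hTdef, Finset.mem_filter] at h
        exact h.2
      have h1 := hx_opt _ hz₀P
      have h2 : ∑ i, (c i : ℝ) * xstar i = ∑ i, (c i : ℝ) * (xz i : ℝ) := by
        exact Finset.sum_congr rfl fun i _ => by rw [hxz i]
      rw [h2] at h1
      have h3 : ((c ⬝ᵥ z₀ : ℤ) : ℝ) ≤ ((c ⬝ᵥ xz : ℤ) : ℝ) := by
        rw [hdotcast, hdotcast]
        exact h1
      exact_mod_cast h3
    have hmin := hzsmin xz (hzO xz hxzP hcz)
    have hzero : ∑ i, |(xz i:ℝ) - xstar i| = 0 := by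
      apply Finset.sum_eq_zero
      intro i _
      rw [hxz i]
      simp
    rw [hzero] at hmin
    have hge : (0:ℝ) ≤ (m : ℝ) * (2 * (m : ℝ) * (Δ : ℝ) + 1) ^ m := by positivity
    linarith
  · -- main case m ≥ 1
    set y : Fin n → ℝ := fun i => (zs i : ℝ) - xstar i with hydef
    have hxP := hx_ext.1
    rw [hP] at hxP
    obtain ⟨hAx, hbox⟩ := hxP
    have hzsP' := hzsP
    rw [hP] at hzsP'
    obtain ⟨hAz, hbz⟩ := hzsP'
    have hker : ∀ j, ∑ i, y i * (A j i : ℝ) = 0 := by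
      intro j
      have h1 : ∑ i, (A j i : ℝ) * xstar i = (b j : ℝ) := congrFun hAx j
      have h2 : ∑ i, (A j i : ℝ) * (zs i : ℝ) = (b j : ℝ) := congrFun hAz j
      have h3 : ∑ i, y i * (A j i : ℝ)
          = ∑ i, (A j i : ℝ) * (zs i : ℝ) - ∑ i, (A j i : ℝ) * xstar i := by
        rw [← Finset.sum_sub_distrib]
        exact Finset.sum_congr rfl fun i _ => by rw [hydef]; ring
      rw [h3, h1, h2, sub_self]
    have hfr2 : ∀ s : Finset (Fin n), (∀ i ∈ s, ¬ ∃ k : ℤ, (k:ℝ) = y i) → s.card ≤ m := by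
      intro s hs
      apply hfrx s
      intro i hi hex
      obtain ⟨k, hk⟩ := hex
      apply hs i hi
      refine ⟨zs i - k, ?_⟩
      rw [hydef]
      push_cast
      rw [hk]
    have hbig : (m:ℝ) * (2*(m:ℝ)*(Δ:ℝ)+1)^m < ∑ i, |y i| := hgt
    obtain ⟨w, hwne, hwA, hwpos, hwneg⟩ :=
      exists_signcomp_kernel m n hmpos Δ hΔ A (fun j i => hA j i) y hker hfr2 hbig
    -- bounds for x* + w and zs - w
    have hbounds : ∀ i, (0 ≤ xstar i + (w i:ℝ) ∧ xstar i + (w i:ℝ) ≤ (u i:ℝ))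
        ∧ (0 ≤ (zs i:ℝ) - (w i:ℝ) ∧ (zs i:ℝ) - (w i:ℝ) ≤ (u i:ℝ)) := by
      intro i
      have hb1 := hbox i
      have hb2 := hbz i
      rcases le_or_gt 0 (y i) with h | h
      · have hw := hwpos i h
        have hyi : (zs i : ℝ) = xstar i + y i := by rw [hydef]; ring
        constructor
        · constructor
          · linarith [hw.1]
          · linarith [hw.2]
        · constructor
          · linarith [hw.2]
          · linarith [hw.1]
      · have hw := hwneg i h
        have hyi : (zs i : ℝ) = xstar i + y i := by rw [hydef]; ring
        constructor
        · constructor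
          · linarith [hw.1]
          · linarith [hw.2]
        · constructor
          · linarith [hw.2]
          · linarith [hw.1]
    have hAweq : ∀ j, ∑ i, (A j i : ℝ) * (w i : ℝ) = 0 := by
      intro j
      rw [← hwA j]
      exact Finset.sum_congr rfl fun i _ => mul_comm _ _
    have hxwP : (fun i => xstar i + (w i:ℝ)) ∈ P := by
      rw [hP]
      constructor
      · funext j
        show ∑ i, (A j i : ℝ) * (xstar i + (w i:ℝ)) = (b j : ℝ)
        have h1 : ∑ i, (A j i : ℝ) * xstar i = (b j : ℝ) := congrFun hAx j
        calc ∑ i, (A j i : ℝ) * (xstar i + (w i:ℝ))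
            = ∑ i, ((A j i : ℝ) * xstar i + (A j i:ℝ) * (w i:ℝ)) :=
              Finset.sum_congr rfl (fun i _ => mul_add _ _ _)
        _ = (b j:ℝ) + 0 := by rw [Finset.sum_add_distrib, h1, hAweq j]
        _ = (b j:ℝ) := add_zero _
      · intro i
        exact (hbounds i).1
    have hcw : ∑ i, (c i:ℝ) * (w i:ℝ) ≤ 0 := by
      have h := hx_opt _ hxwP
      have h2 : ∑ i, (c i : ℝ) * (xstar i + (w i:ℝ))
          = ∑ i, (c i : ℝ) * xstar i + ∑ i, (c i:ℝ) * (w i:ℝ) := by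
        rw [← Finset.sum_add_distrib]
        exact Finset.sum_congr rfl fun i _ => mul_add _ _ _
      rw [h2] at h
      linarith
    have hcwz : c ⬝ᵥ w ≤ 0 := by
      have h : ((c ⬝ᵥ w : ℤ) : ℝ) ≤ 0 := by rw [hdotcast]; exact hcw
      exact_mod_cast h
    have hzswP : (fun i => ((zs i - w i : ℤ) : ℝ)) ∈ P := by
      rw [hP]
      constructor
      · funext j
        show ∑ i, (A j i : ℝ) * ((zs i - w i : ℤ) : ℝ) = (b j : ℝ)
        have h2 : ∑ i, (A j i : ℝ) * (zs i : ℝ) = (b j : ℝ) := congrFun hAz j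
        have h3 : ∑ i, (A j i : ℝ) * ((zs i - w i : ℤ) : ℝ)
            = ∑ i, (A j i : ℝ) * (zs i:ℝ) - ∑ i, (A j i:ℝ) * (w i:ℝ) := by
          rw [← Finset.sum_sub_distrib]
          refine Finset.sum_congr rfl fun i _ => ?_
          push_cast
          ring
        rw [h3, h2, hAweq j, sub_zero]
      · intro i
        have := (hbounds i).2
        constructor
        · push_cast
          linarith [this.1]
        · push_cast
          linarith [this.2]
    have hzswO : (fun i => zs i - w i) ∈ O := by
      apply hzO _ hzswP
      have h1 : c ⬝ᵥ (fun i => zs i - w i) = c ⬝ᵥ zs - c ⬝ᵥ w := by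
        rw [dotProduct, dotProduct, dotProduct, ← Finset.sum_sub_distrib]
        exact Finset.sum_congr rfl fun i _ => by ring
      rw [h1]
      omega
    have hmin := hzsmin _ hzswO
    have hdist : ∑ i, |((zs i - w i : ℤ):ℝ) - xstar i| = ∑ i, |y i| - ∑ i, |(w i:ℝ)| := by
      rw [← Finset.sum_sub_distrib]
      refine Finset.sum_congr rfl fun i _ => ?_
      rcases le_or_gt 0 (y i) with h | h
      · have hw := hwpos i h
        have hyi : ((zs i - w i : ℤ):ℝ) - xstar i = y i - (w i:ℝ) := by
          rw [hydef]; push_cast; ring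
        rw [hyi, abs_of_nonneg h, abs_of_nonneg hw.1, abs_of_nonneg (by linarith [hw.2])]
      · have hw := hwneg i h
        have hyi : ((zs i - w i : ℤ):ℝ) - xstar i = y i - (w i:ℝ) := by
          rw [hydef]; push_cast; ring
        rw [hyi, abs_of_neg h, abs_of_nonpos hw.2, abs_of_nonpos (by linarith [hw.1])]
        ring
    have hwposum : 0 < ∑ i, |(w i:ℝ)| := by
      have hne : ∃ i, w i ≠ 0 := by
        by_contra hno
        push_neg at hno
        exact hwne (funext hno)
      obtain ⟨i₀, hi₀⟩ := hne
      have h1 : 0 < |(w i₀ : ℝ)| := by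
        rw [abs_pos]
        exact_mod_cast hi₀
      have h2 : ∀ i ∈ Finset.univ, 0 ≤ |(w i : ℝ)| := fun i _ => abs_nonneg _
      exact Finset.sum_pos' h2 ⟨i₀, Finset.mem_univ i₀, h1⟩
    have hfin : ∑ i, |(zs i:ℝ) - xstar i| ≤ ∑ i, |y i| - ∑ i, |(w i:ℝ)| := by
      rw [← hdist]
      exact hmin
    have hyeq : ∑ i, |y i| = ∑ i, |(zs i:ℝ) - xstar i| := by
      exact Finset.sum_congr rfl fun i _ => by rw [hydef]
    rw [hyeq] at hfin
    linarith
end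

section
/- Let A ∈ ℤ^{m×n}, b ∈ ℤ^m, u ∈ ℤ^n_{≥0}, let x ∈ ℝ^n satisfy Ax = b and 0 ≤ x ≤ u, let z ∈ ℤ^n satisfy Az = b and 0 ≤ z ≤ u, and let y ∈ ℤ^n be a cycle of z − x. Then there exists ε > 0 such that x + εy satisfies A(x + εy) = b and 0 ≤ x + εy ≤ u. -/
open Matrix

/-! Already `ε = 1` works: coordinatewise, `x + y` lies between `x` and `z`, both of which lie in
the box `[0, u]`, and `A (x + y) = A x = b`. -/

theorem add_mem_uIcc_of_abs_le_of_mul_nonneg {α : Type*} [Ring α] [LinearOrder α]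
    [IsStrictOrderedRing α] {x d y : α} (habs : |y| ≤ |d|) (hsign : 0 ≤ y * d) :
    x + y ∈ Set.uIcc x (x + d) := by
  rcases lt_trichotomy y 0 with hy | rfl | hy
  · have hd : d ≤ 0 := nonpos_of_mul_nonneg_right hsign hy
    rw [abs_of_neg hy, abs_of_nonpos hd, neg_le_neg_iff] at habs
    exact Set.mem_uIcc.mpr (Or.inr ⟨by gcongr, add_le_of_nonpos_right hy.le⟩)
  · simp
  · have hd : 0 ≤ d := nonneg_of_mul_nonneg_right hsign hy
    rw [abs_of_pos hy, abs_of_nonneg hd] at habs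
    exact Set.mem_uIcc.mpr (Or.inl ⟨le_add_of_nonneg_right hy.le, by gcongr⟩)

theorem mulVec_intCast_eq_zero {m n : Type*} [Fintype n] {R : Type*} [Ring R]
    {A : Matrix m n ℤ} {y : n → ℤ} (hAy : A *ᵥ y = 0) :
    (A.map (Int.cast : ℤ → R)) *ᵥ (fun i => (y i : R)) = 0 := by
  funext i
  simpa [hAy, Function.comp_def] using ((Int.castRingHom R).map_mulVec A y i).symm

theorem cycle_gives_feasible_lp_direction_general
    (m n : ℕ)
    (A : Matrix (Fin m) (Fin n) ℤ) (b : Fin m → ℤ) (u : Fin n → ℤ)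
    (x : Fin n → ℝ)
    (hAx : Matrix.mulVec (fun i j => (A i j : ℝ)) x = fun i => (b i : ℝ))
    (hx : ∀ i, 0 ≤ x i ∧ x i ≤ (u i : ℝ))
    (z : Fin n → ℤ)
    (hz : ∀ i, 0 ≤ z i ∧ z i ≤ u i)
    (y : Fin n → ℤ)
    (hAy : A.mulVec y = 0)
    (hy1 : ∀ i, |(y i : ℝ)| ≤ |(z i : ℝ) - x i|)
    (hy2 : ∀ i, 0 ≤ (y i : ℝ) * ((z i : ℝ) - x i)) :
    ∃ ε : ℝ, 0 < ε ∧
      (Matrix.mulVec (fun i j => (A i j : ℝ)) (x + ε • fun i => (y i : ℝ)) =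
        fun i => (b i : ℝ)) ∧
      ∀ i, 0 ≤ (x + ε • fun i => (y i : ℝ)) i ∧
        (x + ε • fun i => (y i : ℝ)) i ≤ (u i : ℝ) := by
  refine ⟨1, one_pos, ?_, fun i => ?_⟩
  · change A.map (Int.cast : ℤ → ℝ) *ᵥ _ = _ at hAx ⊢
    rw [one_smul, mulVec_add, hAx, mulVec_intCast_eq_zero hAy, add_zero]
  · have hz_mem : (z i : ℝ) ∈ Set.Icc 0 (u i : ℝ) :=
      ⟨by exact_mod_cast (hz i).1, by exact_mod_cast (hz i).2⟩
    have hbetween := add_mem_uIcc_of_abs_le_of_mul_nonneg (x := x i) (hy1 i) (hy2 i)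
    rw [add_sub_cancel] at hbetween
    simpa using Set.uIcc_subset_Icc (hx i) hz_mem hbetween

/-- If `x` is LP-feasible, `z` is integer feasible and `y` is a cycle of `z − x`
(i.e. `Ay = 0`, `|y_i| ≤ |(z − x)_i|` and `y_i·(z − x)_i ≥ 0` for all `i`),
then `x + εy` is LP-feasible for some `ε > 0`. -/
theorem cycle_gives_feasible_lp_direction
    (m n : ℕ)
    (A : Matrix (Fin m) (Fin n) ℤ) (b : Fin m → ℤ) (u : Fin n → ℤ) (hu : ∀ i, 0 ≤ u i)
    (x : Fin n → ℝ)
    (hAx : Matrix.mulVec (fun i j => (A i j : ℝ)) x = fun i => (b i : ℝ))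
    (hx : ∀ i, 0 ≤ x i ∧ x i ≤ (u i : ℝ))
    (z : Fin n → ℤ)
    (hAz : A.mulVec z = b)
    (hz : ∀ i, 0 ≤ z i ∧ z i ≤ u i)
    (y : Fin n → ℤ)
    (hAy : A.mulVec y = 0)
    (hy1 : ∀ i, |(y i : ℝ)| ≤ |(z i : ℝ) - x i|)
    (hy2 : ∀ i, 0 ≤ (y i : ℝ) * ((z i : ℝ) - x i)) :
    ∃ ε : ℝ, 0 < ε ∧
      (Matrix.mulVec (fun i j => (A i j : ℝ)) (x + ε • fun i => (y i : ℝ)) =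
        fun i => (b i : ℝ)) ∧
      ∀ i, 0 ≤ (x + ε • fun i => (y i : ℝ)) i ∧
        (x + ε • fun i => (y i : ℝ)) i ≤ (u i : ℝ) :=
  cycle_gives_feasible_lp_direction_general m n A b u x hAx hx z hz y hAy hy1 hy2
end
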